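/- arXiv:1405.4693 — 9 statements merged into one kernel-verified Lean document; each statement's English description precedes it below -/
import Mathlib

section
/- For every x ∈ [0,1] and every n ∈ ℕ the following estimates hold: p_{2n+1}(x) ≤ q_2(x)^n / n!, q_{2n+1}(x) ≤ p_2(x)^n / n!, p_{2n}(x) ≤ p_2(x)^n / n!, and q_{2n}(x) ≤ q_2(x)^n / n!. -/
/-!
Write `F(t) = μ[0, t]`, so that `p₂(x) = ∫₀ˣ F` and `q₂(x) = ∫_{[0,x]} t dμ(t)`. Both are of the
form `G(x) = ∫_{[0,x]} α[0,t] dβ(t)` for a pair of measures `(α, β)` with `β` atomless, and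
such a `G` obeys the chain-rule inequality `(n+1) ∫_{[0,x]} α[0,t] G(t)ⁿ dβ(t) ≤ G(x)ⁿ⁺¹`:
for `ν = α[0,·] dβ` it reads `(n+1) ∫_{[0,x]} ν[0,t]ⁿ dν(t) ≤ ν[0,x]ⁿ⁺¹`, which follows by
induction on `n` and Fubini over the triangle `s ≤ t`, atomlessness making the diagonal null.
Two consecutive integrations in the recursions integrate first against `α` and then against `β`,
so a bound `Gⁿ/n!` on `[0,x]` gives `α[0,t] G(t)ⁿ/n!` after the first and `Gⁿ⁺¹/(n+1)!` after
the second.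
-/

open MeasureTheory Set
open scoped ENNReal Nat

theorem measure_Iic_add_measure_Ioc (ν : Measure ℝ) {a t : ℝ} (hat : a ≤ t) :
    ν (Iic a) + ν (Ioc a t) = ν (Iic t) := by
  rw [← measure_union (Iic_disjoint_Ioc le_rfl) measurableSet_Ioc, Iic_union_Ioc_eq_Iic hat]

theorem lintegral_Ioc_mul_measure_Ioc (ν : Measure ℝ) [SFinite ν]
    {g : ℝ → ℝ≥0∞} (hg : Measurable g) (a x : ℝ) :
    ∫⁻ t in Ioc a x, g t * ν (Ioc a t) ∂ν = ∫⁻ s in Ioc a x, ∫⁻ t in Icc s x, g t ∂ν ∂ν := by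
  have hmeas : Measurable (Function.uncurry fun t s : ℝ => (Iic t).indicator (fun _ => g t) s) := by
    have : (Function.uncurry fun t s : ℝ => (Iic t).indicator (fun _ => g t) s)
        = {p : ℝ × ℝ | p.2 ≤ p.1}.indicator (fun p => g p.1) := by
      ext ⟨t, s⟩; simp [indicator_apply]
    rw [this]
    exact (hg.comp measurable_fst).indicator (measurableSet_le measurable_snd measurable_fst)
  calc ∫⁻ t in Ioc a x, g t * ν (Ioc a t) ∂ν
      = ∫⁻ t in Ioc a x, ∫⁻ s in Ioc a x, (Iic t).indicator (fun _ => g t) s ∂ν ∂ν := by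
        refine setLIntegral_congr_fun measurableSet_Ioc fun t ht => ?_
        rw [lintegral_indicator measurableSet_Iic, setLIntegral_const,
          Measure.restrict_apply measurableSet_Iic, Iic_inter_Ioc_of_le ht.2]
    _ = ∫⁻ s in Ioc a x, ∫⁻ t in Ioc a x, (Iic t).indicator (fun _ => g t) s ∂ν ∂ν :=
        lintegral_lintegral_swap hmeas.aemeasurable
    _ = ∫⁻ s in Ioc a x, ∫⁻ t in Icc s x, g t ∂ν ∂ν := by
        refine setLIntegral_congr_fun measurableSet_Ioc fun s hs => ?_
        have hind : (fun t => (Iic t).indicator (fun _ => g t) s) = (Ici s).indicator g := by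
          ext t; simp [indicator_apply]
        rw [hind, lintegral_indicator measurableSet_Ici,
          Measure.restrict_restrict measurableSet_Ici]
        congr 2
        ext t
        simp only [mem_inter_iff, mem_Ici, mem_Ioc, mem_Icc]
        exact ⟨fun h => ⟨h.1, h.2.2⟩, fun h => ⟨h.1, hs.1.trans_le h.1, h.2⟩⟩

theorem mul_lintegral_Ioc_measure_Iic_pow_add_le (ν : Measure ℝ) [SFinite ν]
    [NullSingletonClass ν] (n : ℕ) {a x : ℝ} (hax : a ≤ x) :
    (n + 1) * ∫⁻ t in Ioc a x, ν (Iic t) ^ n ∂ν + ν (Iic a) ^ (n + 1) ≤ ν (Iic x) ^ (n + 1) := by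
  have hmeas : Measurable fun t => ν (Iic t) :=
    Monotone.measurable fun s t hst => measure_mono (Iic_subset_Iic.2 hst)
  induction n generalizing a with
  | zero => simp [add_comm, measure_Iic_add_measure_Ioc ν hax]
  | succ n ih =>
    set K := ∫⁻ t in Ioc a x, ν (Iic t) ^ n ∂ν
    set I := ∫⁻ t in Ioc a x, ν (Iic t) ^ (n + 1) ∂ν
    set J := ∫⁻ s in Ioc a x, ∫⁻ t in Ioc s x, ν (Iic t) ^ n ∂ν ∂ν
    have hI : I = ν (Iic a) * K + J := by
      calc I = ∫⁻ t in Ioc a x, ν (Iic t) ^ n * ν (Iic a) + ν (Iic t) ^ n * ν (Ioc a t) ∂ν := by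
            refine setLIntegral_congr_fun measurableSet_Ioc fun t ht => ?_
            rw [← mul_add, measure_Iic_add_measure_Ioc ν ht.1.le, pow_succ]
        _ = ν (Iic a) * K + J := by
            rw [lintegral_add_left ((hmeas.pow_const n).mul_const _),
              lintegral_mul_const _ (hmeas.pow_const n), mul_comm,
              lintegral_Ioc_mul_measure_Ioc ν (hmeas.pow_const n)]
            congr 1
            refine setLIntegral_congr_fun measurableSet_Ioc fun s _ => ?_
            exact setLIntegral_congr Ioc_ae_eq_Icc.symm
    have hJ : (n + 1) * J + I ≤ ν (Ioc a x) * ν (Iic x) ^ (n + 1) := by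
      calc (n + 1) * J + I
          = ∫⁻ s in Ioc a x,
              (n + 1) * ∫⁻ t in Ioc s x, ν (Iic t) ^ n ∂ν + ν (Iic s) ^ (n + 1) ∂ν := by
            rw [lintegral_add_right _ (hmeas.pow_const (n + 1)),
              lintegral_const_mul' _ _ (by simp)]
        _ ≤ ∫⁻ _ in Ioc a x, ν (Iic x) ^ (n + 1) ∂ν :=
            setLIntegral_mono' measurableSet_Ioc fun s hs => ih hs.2
        _ = ν (Ioc a x) * ν (Iic x) ^ (n + 1) := by rw [setLIntegral_const, mul_comm]
    calc ((n + 1 : ℕ) + 1) * I + ν (Iic a) ^ (n + 1 + 1)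
        = ν (Iic a) * ((n + 1) * K + ν (Iic a) ^ (n + 1)) + ((n + 1) * J + I) := by
          rw [hI]; push_cast; ring
      _ ≤ ν (Iic a) * ν (Iic x) ^ (n + 1) + ν (Ioc a x) * ν (Iic x) ^ (n + 1) := by
          gcongr
          exact ih hax
      _ = ν (Iic x) ^ (n + 1 + 1) := by
          rw [← add_mul, measure_Iic_add_measure_Ioc ν hax]; ring

noncomputable def cdfIntegral (α β : Measure ℝ) (x : ℝ) : ℝ :=
  ∫ t in Icc 0 x, α.real (Icc 0 t) ∂β

theorem cdfIntegral_nonneg (α β : Measure ℝ) (x : ℝ) : 0 ≤ cdfIntegral α β x :=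
  setIntegral_nonneg measurableSet_Icc fun _ _ => measureReal_nonneg

section

variable (α β : Measure ℝ) [IsFiniteMeasureOnCompacts α] [IsFiniteMeasureOnCompacts β]

theorem monotone_measureReal_Icc : Monotone fun t => α.real (Icc 0 t) :=
  fun _ _ hst => measureReal_mono (Icc_subset_Icc_right hst) measure_Icc_lt_top.ne

theorem monotone_cdfIntegral : Monotone (cdfIntegral α β) := fun _ _ hst =>
  setIntegral_mono_set ((monotone_measureReal_Icc α).locallyIntegrable.integrableOn_isCompact
    isCompact_Icc) (ae_of_all _ fun _ => measureReal_nonneg)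
    (Icc_subset_Icc_right hst).eventuallyLE

variable [NullSingletonClass β]

theorem mul_setIntegral_mul_cdfIntegral_pow_le (n : ℕ) {x : ℝ} (hx : 0 ≤ x) :
    (n + 1) * ∫ t in Icc 0 x, α.real (Icc 0 t) * cdfIntegral α β t ^ n ∂β
      ≤ cdfIntegral α β x ^ (n + 1) := by
  set w : ℝ → ℝ≥0∞ := fun t => α (Icc 0 t)
  have hw : Measurable w :=
    Monotone.measurable fun s t hst => measure_mono (Icc_subset_Icc_right hst)
  have hw_lt_top (t : ℝ) : w t < ∞ := measure_Icc_lt_top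
  set ν := (β.restrict (Ici 0)).withDensity w
  have hν_Iic (t : ℝ) : ν (Iic t) = ∫⁻ s in Icc 0 t, w s ∂β := by
    rw [withDensity_apply _ measurableSet_Iic, Measure.restrict_restrict measurableSet_Iic,
      Iic_inter_Ici]
  have hν_lt_top (t : ℝ) : ν (Iic t) < ∞ := by
    rw [hν_Iic]
    calc ∫⁻ s in Icc 0 t, w s ∂β ≤ ∫⁻ _ in Icc 0 t, w t ∂β :=
          setLIntegral_mono' measurableSet_Icc fun s hs => measure_mono (Icc_subset_Icc_right hs.2)
      _ < ∞ := by
          rw [setLIntegral_const]; exact ENNReal.mul_lt_top (hw_lt_top t) measure_Icc_lt_top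
  have hcdf (t : ℝ) : cdfIntegral α β t = (ν (Iic t)).toReal := by
    rw [hν_Iic, ← integral_toReal hw.aemeasurable (ae_of_all _ hw_lt_top)]
    rfl
  have hνmeas : Measurable fun t => ν (Iic t) :=
    Monotone.measurable fun s t hst => measure_mono (Iic_subset_Iic.2 hst)
  have hlhs : ∫ t in Icc 0 x, α.real (Icc 0 t) * cdfIntegral α β t ^ n ∂β
      = (∫⁻ t in Ioc 0 x, ν (Iic t) ^ n ∂ν).toReal := by
    rw [setLIntegral_congr Ioc_ae_eq_Icc, setLIntegral_withDensity_eq_setLIntegral_mul _ hw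
      (hνmeas.pow_const n) measurableSet_Icc, Measure.restrict_restrict measurableSet_Icc,
      inter_eq_left.2 Icc_subset_Ici_self, ← integral_toReal]
    · simp only [hcdf, Pi.mul_apply, ENNReal.toReal_mul, ENNReal.toReal_pow]
      rfl
    · exact (hw.mul (hνmeas.pow_const n)).aemeasurable
    · exact ae_of_all _ fun t => ENNReal.mul_lt_top (hw_lt_top t) (ENNReal.pow_lt_top (hν_lt_top t))
  have hchain := le_of_add_le_left (mul_lintegral_Ioc_measure_Iic_pow_add_le ν n hx)
  rw [hlhs, hcdf, ← ENNReal.toReal_pow]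
  calc ((n : ℝ) + 1) * (∫⁻ t in Ioc 0 x, ν (Iic t) ^ n ∂ν).toReal
      = ((n + 1) * ∫⁻ t in Ioc 0 x, ν (Iic t) ^ n ∂ν).toReal := by
        rw [ENNReal.toReal_mul]; norm_cast
    _ ≤ (ν (Iic x) ^ (n + 1)).toReal :=
        ENNReal.toReal_mono (ENNReal.pow_ne_top (hν_lt_top x).ne) hchain

theorem setIntegral_setIntegral_mem_Icc {f : ℝ → ℝ} {n : ℕ} {x : ℝ} (hx : 0 ≤ x)
    (hf : ∀ s ∈ Icc 0 x, f s ∈ Icc 0 (cdfIntegral α β s ^ n / n !)) :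
    ∫ t in Icc 0 x, ∫ s in Icc 0 t, f s ∂α ∂β
      ∈ Icc 0 (cdfIntegral α β x ^ (n + 1) / (n + 1)!) := by
  set G := cdfIntegral α β
  have hGpow_mono : Monotone fun t => G t ^ n := fun s t hst =>
    pow_le_pow_left₀ (cdfIntegral_nonneg α β s) (monotone_cdfIntegral α β hst) n
  have hinner (t : ℝ) (ht : t ∈ Icc 0 x) :
      ∫ s in Icc 0 t, f s ∂α ∈ Icc 0 (α.real (Icc 0 t) * G t ^ n / n !) := by
    have hft (s : ℝ) (hs : s ∈ Icc 0 t) := hf s ⟨hs.1, hs.2.trans ht.2⟩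
    refine ⟨setIntegral_nonneg measurableSet_Icc fun s hs => (hft s hs).1, ?_⟩
    calc ∫ s in Icc 0 t, f s ∂α ≤ ∫ _ in Icc 0 t, G t ^ n / n ! ∂α :=
          integral_mono_of_nonneg
            (ae_restrict_of_forall_mem measurableSet_Icc fun s hs => (hft s hs).1)
            (integrableOn_const measure_Icc_lt_top.ne)
            (ae_restrict_of_forall_mem measurableSet_Icc fun s hs => (hft s hs).2.trans
              (div_le_div_of_nonneg_right (hGpow_mono hs.2) n.factorial.cast_nonneg))
      _ = α.real (Icc 0 t) * G t ^ n / n ! := by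
          rw [setIntegral_const, smul_eq_mul, mul_div_assoc]
  have hbound : Monotone fun t => α.real (Icc 0 t) * G t ^ n :=
    (monotone_measureReal_Icc α).mul hGpow_mono (fun _ => measureReal_nonneg)
      (fun t => pow_nonneg (cdfIntegral_nonneg α β t) n)
  refine ⟨setIntegral_nonneg measurableSet_Icc fun t ht => (hinner t ht).1, ?_⟩
  calc ∫ t in Icc 0 x, ∫ s in Icc 0 t, f s ∂α ∂β
      ≤ ∫ t in Icc 0 x, α.real (Icc 0 t) * G t ^ n / n ! ∂β :=
        integral_mono_of_nonneg
          (ae_restrict_of_forall_mem measurableSet_Icc fun t ht => (hinner t ht).1)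
          ((hbound.locallyIntegrable.integrableOn_isCompact isCompact_Icc).div_const _)
          (ae_restrict_of_forall_mem measurableSet_Icc fun t ht => (hinner t ht).2)
    _ = (∫ t in Icc 0 x, α.real (Icc 0 t) * G t ^ n ∂β) / n ! := integral_div _ _
    _ ≤ G x ^ (n + 1) / (n + 1) / n ! := by
        gcongr
        rw [le_div_iff₀ (by positivity), mul_comm]
        exact mul_setIntegral_mul_cdfIntegral_pow_le α β n hx
    _ = G x ^ (n + 1) / (n + 1)! := by
        rw [div_div, Nat.factorial_succ]; push_cast; ring

theorem mem_Icc_cdfIntegral_pow_div_factorial {f : ℕ → ℝ → ℝ} {b : ℝ}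
    (h0 : ∀ x ∈ Icc 0 b, f 0 x ∈ Icc 0 1)
    (hsucc : ∀ n, ∀ x ∈ Icc 0 b, f (n + 1) x = ∫ t in Icc 0 x, ∫ s in Icc 0 t, f n s ∂α ∂β)
    (n : ℕ) : ∀ x ∈ Icc 0 b, f n x ∈ Icc 0 (cdfIntegral α β x ^ n / n !) := by
  induction n with
  | zero => simpa using h0
  | succ n ih =>
    intro x hx
    rw [hsucc n x hx]
    exact setIntegral_setIntegral_mem_Icc α β hx.1 fun s hs => ih s ⟨hs.1, hs.2.trans hx.2⟩

end

theorem intervalIntegral_eq_setIntegral_Icc {f : ℝ → ℝ} {a b : ℝ} (hab : a ≤ b) :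
    ∫ t in a..b, f t = ∫ t in Icc a b, f t := by
  rw [intervalIntegral.integral_of_le hab, integral_Icc_eq_integral_Ioc]

theorem stmt_0_general
    (μ : Measure ℝ) [IsProbabilityMeasure μ] [NullSingletonClass μ]
    (p q : ℕ → ℝ → ℝ)
    (hp0 : ∀ x : ℝ, p 0 x = 1) (hq0 : ∀ x : ℝ, q 0 x = 1)
    (hpodd : ∀ (n : ℕ) (x : ℝ), p (2*n+1) x = ∫ t in Set.Icc (0:ℝ) x, p (2*n) t ∂μ)
    (hpeven : ∀ (n : ℕ) (x : ℝ), p (2*n+2) x = ∫ t in (0:ℝ)..x, p (2*n+1) t)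
    (hqodd : ∀ (n : ℕ) (x : ℝ), q (2*n+1) x = ∫ t in (0:ℝ)..x, q (2*n) t)
    (hqeven : ∀ (n : ℕ) (x : ℝ), q (2*n+2) x = ∫ t in Set.Icc (0:ℝ) x, q (2*n+1) t ∂μ) :
    ∀ x ∈ Set.Icc (0:ℝ) 1, ∀ n : ℕ,
      p (2*n+1) x ≤ q 2 x ^ n / (n.factorial : ℝ) ∧
      q (2*n+1) x ≤ p 2 x ^ n / (n.factorial : ℝ) ∧
      p (2*n) x ≤ p 2 x ^ n / (n.factorial : ℝ) ∧
      q (2*n) x ≤ q 2 x ^ n / (n.factorial : ℝ) := by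
  have hp1 (x : ℝ) : p 1 x = μ.real (Icc 0 x) := by simp [hpodd 0 x, hp0]
  have hq1 (x : ℝ) : q 1 x = x := by simp [hqodd 0 x, hq0]
  have hpeven' (n : ℕ) {x : ℝ} (hx : 0 ≤ x) :
      p (2 * (n + 1)) x = ∫ t in Icc 0 x, p (2 * n + 1) t :=
    (hpeven n x).trans (intervalIntegral_eq_setIntegral_Icc hx)
  have hqeven' (n : ℕ) (x : ℝ) : q (2 * (n + 1)) x = ∫ t in Icc 0 x, q (2 * n + 1) t ∂μ :=
    hqeven n x
  have hqodd' (n : ℕ) {x : ℝ} (hx : 0 ≤ x) : q (2 * n + 1) x = ∫ t in Icc 0 x, q (2 * n) t :=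
    (hqodd n x).trans (intervalIntegral_eq_setIntegral_Icc hx)
  have hp2 {x : ℝ} (hx : 0 ≤ x) : p 2 x = cdfIntegral μ volume x := by
    simp only [cdfIntegral, hpeven' 0 hx, hp1]
  have hq2 (x : ℝ) : q 2 x = cdfIntegral volume μ x :=
    (hqeven 0 x).trans (setIntegral_congr_fun measurableSet_Icc fun t ht => by
      simp [hq1, Real.volume_real_Icc_of_le ht.1])
  have hpodd_bound := mem_Icc_cdfIntegral_pow_div_factorial volume μ (f := fun n => p (2 * n + 1))
    (b := 1) (fun x _ => by simp [hp1, measureReal_le_one]) fun n x hx => by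
      simp only [hpodd (n + 1), setIntegral_congr_fun measurableSet_Icc fun t ht => hpeven' n ht.1]
  have hqodd_bound := mem_Icc_cdfIntegral_pow_div_factorial μ volume (f := fun n => q (2 * n + 1))
    (b := 1) (fun x hx => by simpa [hq1] using hx) fun n x hx => by
      simp only [hqodd' (n + 1) hx.1, setIntegral_congr_fun measurableSet_Icc fun t _ => hqeven' n t]
  have hpeven_bound := mem_Icc_cdfIntegral_pow_div_factorial μ volume (f := fun n => p (2 * n))
    (b := 1) (fun x _ => by simp [hp0]) fun n x hx => by
      simp only [hpeven' n hx.1, setIntegral_congr_fun measurableSet_Icc fun t _ => hpodd n t]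
  have hqeven_bound := mem_Icc_cdfIntegral_pow_div_factorial volume μ (f := fun n => q (2 * n))
    (b := 1) (fun x _ => by simp [hq0]) fun n x hx => by
      simp only [hqeven' n x, setIntegral_congr_fun measurableSet_Icc fun t ht => hqodd' n ht.1]
  intro x hx n
  rw [hp2 hx.1, hq2]
  exact ⟨(hpodd_bound n x hx).2, (hqodd_bound n x hx).2, (hpeven_bound n x hx).2,
    (hqeven_bound n x hx).2⟩

theorem stmt_0
    (μ : Measure ℝ) [IsProbabilityMeasure μ] [NullSingletonClass μ]
    (hsupp : μ (Set.Icc (0:ℝ) 1)ᶜ = 0)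
    (p q : ℕ → ℝ → ℝ)
    (hp0 : ∀ x : ℝ, p 0 x = 1) (hq0 : ∀ x : ℝ, q 0 x = 1)
    (hpodd : ∀ (n : ℕ) (x : ℝ), p (2*n+1) x = ∫ t in Set.Icc (0:ℝ) x, p (2*n) t ∂μ)
    (hpeven : ∀ (n : ℕ) (x : ℝ), p (2*n+2) x = ∫ t in (0:ℝ)..x, p (2*n+1) t)
    (hqodd : ∀ (n : ℕ) (x : ℝ), q (2*n+1) x = ∫ t in (0:ℝ)..x, q (2*n) t)
    (hqeven : ∀ (n : ℕ) (x : ℝ), q (2*n+2) x = ∫ t in Set.Icc (0:ℝ) x, q (2*n+1) t ∂μ) :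
    ∀ x ∈ Set.Icc (0:ℝ) 1, ∀ n : ℕ,
      p (2*n+1) x ≤ q 2 x ^ n / (n.factorial : ℝ) ∧
      q (2*n+1) x ≤ p 2 x ^ n / (n.factorial : ℝ) ∧
      p (2*n) x ≤ p 2 x ^ n / (n.factorial : ℝ) ∧
      q (2*n) x ≤ q 2 x ^ n / (n.factorial : ℝ) :=
  stmt_0_general μ p q hp0 hq0 hpodd hpeven hqodd hqeven
end

section
/- For every z ∈ ℝ the series Σ_{n≥0} |z|^{2n+1} p_{2n+1}(x), Σ_{n≥0} |z|^{2n+1} q_{2n+1}(x), Σ_{n≥0} |z|^{2n} p_{2n}(x) and Σ_{n≥0} |z|^{2n} q_{2n}(x) converge uniformly in x ∈ [0,1], and for all z ∈ ℝ and x ∈ [0,1] the following integral identities (encoding the differentiation rules d/dμ s_{μ,λ} = z c_{λ,μ}, s_{λ,μ}' = z c_{μ,λ}, c_{λ,μ}' = −z s_{μ,λ}, d/dμ c_{μ,λ} = −z s_{λ,μ}) hold: s_{μ,λ}(z,x) = z ∫_{[0,x]} c_{λ,μ}(z,t) dμ(t); s_{λ,μ}(z,x) = z ∫_0^x c_{μ,λ}(z,t)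 dt; c_{λ,μ}(z,x) = 1 − z ∫_0^x s_{μ,λ}(z,t) dt; c_{μ,λ}(z,x) = 1 − z ∫_{[0,x]} s_{λ,μ}(z,t) dμ(t). -/
/-!
Integrating against the sub-probability measure `μ` preserves a bound `0 ≤ f x ≤ x ^ k / k !`
on `[0, ∞)` (together with monotonicity), while integrating against Lebesgue measure improves it
to `x ^ (k + 1) / (k + 1)!`. Since the recursions alternate the two, `p (2n)`, `p (2n+1)`,
`q (2n)` and `q (2n+1)` are all bounded by `1 / n !` on `[0, 1]`, so the `n`-th terms of the four
series are dominated by `|z| ^ (2n+k) / n !`. This gives uniform convergence (Weierstrass M-test)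
and termwise integration (dominated convergence); the identities are then an index shift in the
recursion.
-/

open MeasureTheory Set Filter
open scoped Nat

theorem integral_pow_div_factorial (n : ℕ) (x : ℝ) :
    ∫ t in (0 : ℝ)..x, t ^ n / n ! = x ^ (n + 1) / (n + 1)! := by
  rw [intervalIntegral.integral_div, integral_pow, Nat.factorial_succ]
  push_cast
  field_simp
  ring

/-- Monotonicity is carried along only to make the iterated integrals measurable. -/
def MonotoneBoundedByPow (n : ℕ) (f : ℝ → ℝ) : Prop :=
  MonotoneOn f (Ici 0) ∧ ∀ x, 0 ≤ x → 0 ≤ f x ∧ f x ≤ x ^ n / n !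

namespace MonotoneBoundedByPow

variable {n : ℕ} {f : ℝ → ℝ}

theorem const_one : MonotoneBoundedByPow 0 fun _ => 1 :=
  ⟨monotoneOn_const, fun _ _ => by simp⟩

theorem integrableOn_Icc (hf : MonotoneBoundedByPow n f) (μ : Measure ℝ)
    [IsFiniteMeasureOnCompacts μ] {x : ℝ} : IntegrableOn f (Icc 0 x) μ :=
  (hf.1.mono Icc_subset_Ici_self).integrableOn_isCompact isCompact_Icc

theorem setIntegral_Icc (hf : MonotoneBoundedByPow n f) (μ : Measure ℝ)
    [IsZeroOrProbabilityMeasure μ] :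
    MonotoneBoundedByPow n fun x => ∫ t in Icc 0 x, f t ∂μ := by
  have hf0 : ∀ x, ∀ t ∈ Icc (0 : ℝ) x, 0 ≤ f t := fun x t ht => (hf.2 t ht.1).1
  refine ⟨fun a _ b _ hab => ?_, fun x hx => ⟨setIntegral_nonneg measurableSet_Icc (hf0 x), ?_⟩⟩
  · exact setIntegral_mono_set (hf.integrableOn_Icc μ)
      (ae_restrict_of_forall_mem measurableSet_Icc (hf0 b))
      (Icc_subset_Icc_right hab).eventuallyLE
  · calc ∫ t in Icc 0 x, f t ∂μ ≤ ∫ _ in Icc 0 x, x ^ n / n ! ∂μ :=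
          setIntegral_mono_on (hf.integrableOn_Icc μ) (integrableOn_const (measure_ne_top _ _))
            measurableSet_Icc fun t ht =>
              (hf.2 t ht.1).2.trans (by gcongr; exacts [ht.1, ht.2])
      _ = μ.real (Icc 0 x) * (x ^ n / n !) := setIntegral_const _
      _ ≤ x ^ n / n ! := mul_le_of_le_one_left (by positivity) measureReal_le_one

theorem intervalIntegral_succ (hf : MonotoneBoundedByPow n f) :
    MonotoneBoundedByPow (n + 1) fun x => ∫ t in (0 : ℝ)..x, f t := by
  have hint : ∀ {a b : ℝ}, 0 ≤ a → a ≤ b → IntervalIntegrable f volume a b := fun ha hab =>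
    (hf.1.mono fun t ht => by rw [uIcc_of_le hab] at ht; exact ha.trans ht.1).intervalIntegrable
  refine ⟨fun a ha b _ hab => ?_, fun x hx => ⟨?_, ?_⟩⟩
  · beta_reduce
    rw [← intervalIntegral.integral_add_adjacent_intervals (hint le_rfl ha) (hint ha hab)]
    exact le_add_of_nonneg_right
      (intervalIntegral.integral_nonneg hab fun t ht => (hf.2 t (le_trans ha ht.1)).1)
  · exact intervalIntegral.integral_nonneg hx fun t ht => (hf.2 t ht.1).1
  · rw [← integral_pow_div_factorial]
    exact intervalIntegral.integral_mono_on hx (hint le_rfl hx)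
      ((by fun_prop : Continuous _).intervalIntegrable _ _) fun t ht => (hf.2 t ht.1).2

theorem aestronglyMeasurable_restrict_Icc (hf : MonotoneBoundedByPow n f) (μ : Measure ℝ)
    [IsFiniteMeasureOnCompacts μ] {x : ℝ} : AEStronglyMeasurable f (μ.restrict (Icc 0 x)) :=
  (hf.integrableOn_Icc μ).aestronglyMeasurable

theorem abs_le_inv_factorial (hf : MonotoneBoundedByPow n f) {m : ℕ} (hmn : m ≤ n) {x : ℝ}
    (hx : x ∈ Icc (0 : ℝ) 1) : |f x| ≤ (m ! : ℝ)⁻¹ := by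
  obtain ⟨h0, hle⟩ := hf.2 x hx.1
  calc |f x| = f x := abs_of_nonneg h0
    _ ≤ x ^ n / n ! := hle
    _ ≤ 1 / n ! := by gcongr; exact pow_le_one₀ hx.1 hx.2
    _ ≤ (m ! : ℝ)⁻¹ := by rw [one_div]; gcongr

theorem ae_restrict_abs_le_inv_factorial (hf : MonotoneBoundedByPow n f) {m : ℕ} (hmn : m ≤ n)
    (μ : Measure ℝ) {x : ℝ} (hx : x ≤ 1) : ∀ᵐ t ∂μ.restrict (Icc 0 x), |f t| ≤ (m ! : ℝ)⁻¹ :=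
  ae_restrict_of_forall_mem measurableSet_Icc fun _ ht =>
    hf.abs_le_inv_factorial hmn ⟨ht.1, ht.2.trans hx⟩

end MonotoneBoundedByPow

theorem monotoneBoundedByPow_of_setIntegral_intervalIntegral (μ : Measure ℝ)
    [IsZeroOrProbabilityMeasure μ] {p : ℕ → ℝ → ℝ} (hp0 : ∀ x, p 0 x = 1)
    (hpodd : ∀ n x, p (2 * n + 1) x = ∫ t in Icc 0 x, p (2 * n) t ∂μ)
    (hpeven : ∀ n x, p (2 * n + 2) x = ∫ t in (0 : ℝ)..x, p (2 * n + 1) t) (n : ℕ) :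
    MonotoneBoundedByPow n (p (2 * n)) ∧ MonotoneBoundedByPow n (p (2 * n + 1)) := by
  have hodd : ∀ n, MonotoneBoundedByPow n (p (2 * n)) → MonotoneBoundedByPow n (p (2 * n + 1)) :=
    fun n h => funext (hpodd n) ▸ h.setIntegral_Icc μ
  induction n with
  | zero => exact ⟨funext hp0 ▸ .const_one, hodd 0 (funext hp0 ▸ .const_one)⟩
  | succ n ih =>
    have heven : MonotoneBoundedByPow (n + 1) (p (2 * (n + 1))) :=
      funext (hpeven n) ▸ ih.2.intervalIntegral_succ
    exact ⟨heven, hodd _ heven⟩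

theorem monotoneBoundedByPow_of_intervalIntegral_setIntegral (μ : Measure ℝ)
    [IsZeroOrProbabilityMeasure μ] {q : ℕ → ℝ → ℝ} (hq0 : ∀ x, q 0 x = 1)
    (hqodd : ∀ n x, q (2 * n + 1) x = ∫ t in (0 : ℝ)..x, q (2 * n) t)
    (hqeven : ∀ n x, q (2 * n + 2) x = ∫ t in Icc 0 x, q (2 * n + 1) t ∂μ) (n : ℕ) :
    MonotoneBoundedByPow n (q (2 * n)) ∧ MonotoneBoundedByPow (n + 1) (q (2 * n + 1)) := by
  have hodd : ∀ n, MonotoneBoundedByPow n (q (2 * n)) →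
      MonotoneBoundedByPow (n + 1) (q (2 * n + 1)) :=
    fun n h => funext (hqodd n) ▸ h.intervalIntegral_succ
  induction n with
  | zero => exact ⟨funext hq0 ▸ .const_one, hodd 0 (funext hq0 ▸ .const_one)⟩
  | succ n ih =>
    have heven : MonotoneBoundedByPow (n + 1) (q (2 * (n + 1))) :=
      funext (hqeven n) ▸ ih.2.setIntegral_Icc μ
    exact ⟨heven, hodd _ heven⟩

section Series

variable {C R : ℝ}

theorem norm_mul_le_pow_div_factorial {n : ℕ} {b a : ℝ} (hb : |b| ≤ C * R ^ n)
    (ha : |a| ≤ (n ! : ℝ)⁻¹) : ‖b * a‖ ≤ C * (R ^ n / n !) := by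
  rw [Real.norm_eq_abs, abs_mul, mul_div_assoc', div_eq_mul_inv]
  exact mul_le_mul hb ha (abs_nonneg a) ((abs_nonneg _).trans hb)

theorem summable_pow_div_factorial_mul (C R : ℝ) : Summable fun n : ℕ => C * (R ^ n / n !) :=
  (Real.summable_pow_div_factorial R).mul_left C

variable {c : ℕ → ℝ}

theorem summable_mul_of_abs_le_inv_factorial {a : ℕ → ℝ} (hc : ∀ n, |c n| ≤ C * R ^ n)
    (ha : ∀ n, |a n| ≤ (n ! : ℝ)⁻¹) : Summable fun n => c n * a n :=
  .of_norm_bounded (summable_pow_div_factorial_mul C R) fun n =>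
    norm_mul_le_pow_div_factorial (hc n) (ha n)

theorem tendstoUniformlyOn_tsum_mul {β : Type*} {s : Set β} {f : ℕ → β → ℝ}
    (hc : ∀ n, |c n| ≤ C * R ^ n) (hf : ∀ n, ∀ x ∈ s, |f n x| ≤ (n ! : ℝ)⁻¹) :
    TendstoUniformlyOn (fun N x => ∑ n ∈ Finset.range N, c n * f n x)
      (fun x => ∑' n, c n * f n x) atTop s :=
  tendstoUniformlyOn_tsum_nat (summable_pow_div_factorial_mul C R) fun n x hx =>
    norm_mul_le_pow_div_factorial (hc n) (hf n x hx)

variable {α : Type*} [MeasurableSpace α] {ν : Measure α} [IsFiniteMeasure ν]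

theorem integral_tsum_mul {f : ℕ → α → ℝ} (hc : ∀ n, |c n| ≤ C * R ^ n)
    (hf_meas : ∀ n, AEStronglyMeasurable (f n) ν) (hf : ∀ n, ∀ᵐ t ∂ν, |f n t| ≤ (n ! : ℝ)⁻¹) :
    ∫ t, ∑' n, c n * f n t ∂ν = ∑' n, c n * ∫ t, f n t ∂ν := by
  have hsum := hasSum_integral_of_dominated_convergence (fun n _ => C * (R ^ n / n !))
    (fun n => (hf_meas n).const_mul (c n))
    (fun n => (hf n).mono fun _ ht => norm_mul_le_pow_div_factorial (hc n) ht)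
    (ae_of_all _ fun _ => summable_pow_div_factorial_mul C R) (integrable_const _)
    ((ae_all_iff.2 hf).mono fun _ ht => (summable_mul_of_abs_le_inv_factorial hc ht).hasSum)
  simpa only [integral_const_mul] using hsum.tsum_eq.symm

theorem abs_neg_one_pow_mul_pow_eq (z : ℝ) (k n : ℕ) :
    |(-1) ^ n * z ^ (2 * n + k)| = |z| ^ k * (z ^ 2) ^ n := by
  rw [abs_mul, abs_pow, abs_neg, abs_one, one_pow, one_mul, abs_pow, pow_add, pow_mul, sq_abs,
    mul_comm]

theorem abs_abs_pow_eq (z : ℝ) (k n : ℕ) : |(|z| ^ (2 * n + k))| = |z| ^ k * (z ^ 2) ^ n := by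
  rw [abs_pow, abs_abs, pow_add, pow_mul, sq_abs, mul_comm]

theorem tsum_odd_eq_mul_integral_tsum_even (z : ℝ) {a : ℕ → α → ℝ} {b : ℕ → ℝ}
    (hb : ∀ n, b n = ∫ t, a n t ∂ν) (ha_meas : ∀ n, AEStronglyMeasurable (a n) ν)
    (ha : ∀ n, ∀ᵐ t ∂ν, |a n t| ≤ (n ! : ℝ)⁻¹) :
    ∑' n, (-1) ^ n * z ^ (2 * n + 1) * b n = z * ∫ t, ∑' n, (-1) ^ n * z ^ (2 * n) * a n t ∂ν := by
  rw [integral_tsum_mul (c := fun n => (-1) ^ n * z ^ (2 * n))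
      (fun n => (abs_neg_one_pow_mul_pow_eq z 0 n).le) ha_meas ha,
    ← tsum_mul_left]
  congr 1 with n
  rw [hb, pow_succ]
  ring

theorem tsum_even_eq_one_sub_mul_integral_tsum_odd (z : ℝ) {a : ℕ → ℝ} {b : ℕ → α → ℝ}
    (ha0 : a 0 = 1) (ha : ∀ n, |a n| ≤ (n ! : ℝ)⁻¹) (hab : ∀ n, a (n + 1) = ∫ t, b n t ∂ν)
    (hb_meas : ∀ n, AEStronglyMeasurable (b n) ν) (hb : ∀ n, ∀ᵐ t ∂ν, |b n t| ≤ (n ! : ℝ)⁻¹) :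
    ∑' n, (-1) ^ n * z ^ (2 * n) * a n =
      1 - z * ∫ t, ∑' n, (-1) ^ n * z ^ (2 * n + 1) * b n t ∂ν := by
  rw [(summable_mul_of_abs_le_inv_factorial (c := fun n => (-1) ^ n * z ^ (2 * n))
      (fun n => (abs_neg_one_pow_mul_pow_eq z 0 n).le) ha).tsum_eq_zero_add,
    integral_tsum_mul (fun n => (abs_neg_one_pow_mul_pow_eq z 1 n).le) hb_meas hb,
    ← tsum_mul_left, sub_eq_add_neg, ← tsum_neg, ha0]
  congr 1
  · simp
  · congr 1 with n
    rw [hab, mul_add, pow_succ, pow_add]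
    ring

end Series

theorem stmt_1_general
    (μ : Measure ℝ) [IsProbabilityMeasure μ]
    (p q : ℕ → ℝ → ℝ)
    (hp0 : ∀ x : ℝ, p 0 x = 1) (hq0 : ∀ x : ℝ, q 0 x = 1)
    (hpodd : ∀ (n : ℕ) (x : ℝ), p (2*n+1) x = ∫ t in Set.Icc (0:ℝ) x, p (2*n) t ∂μ)
    (hpeven : ∀ (n : ℕ) (x : ℝ), p (2*n+2) x = ∫ t in (0:ℝ)..x, p (2*n+1) t)
    (hqodd : ∀ (n : ℕ) (x : ℝ), q (2*n+1) x = ∫ t in (0:ℝ)..x, q (2*n) t)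
    (hqeven : ∀ (n : ℕ) (x : ℝ), q (2*n+2) x = ∫ t in Set.Icc (0:ℝ) x, q (2*n+1) t ∂μ)
    (Sp Sq Cp Cq : ℝ → ℝ → ℝ)
    (hSp : ∀ (z x : ℝ), Sp z x = ∑' n : ℕ, (-1:ℝ)^n * z^(2*n+1) * p (2*n+1) x)
    (hSq : ∀ (z x : ℝ), Sq z x = ∑' n : ℕ, (-1:ℝ)^n * z^(2*n+1) * q (2*n+1) x)
    (hCp : ∀ (z x : ℝ), Cp z x = ∑' n : ℕ, (-1:ℝ)^n * z^(2*n) * p (2*n) x)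
    (hCq : ∀ (z x : ℝ), Cq z x = ∑' n : ℕ, (-1:ℝ)^n * z^(2*n) * q (2*n) x) :
    (∀ z : ℝ,
      TendstoUniformlyOn
        (fun (N : ℕ) (x : ℝ) => ∑ n ∈ Finset.range N, |z|^(2*n+1) * p (2*n+1) x)
        (fun x : ℝ => ∑' n : ℕ, |z|^(2*n+1) * p (2*n+1) x) Filter.atTop (Set.Icc (0:ℝ) 1) ∧
      TendstoUniformlyOn
        (fun (N : ℕ) (x : ℝ) => ∑ n ∈ Finset.range N, |z|^(2*n+1) * q (2*n+1) x)
        (fun x : ℝ => ∑' n : ℕ, |z|^(2*n+1) * q (2*n+1) x) Filter.atTop (Set.Icc (0:ℝ) 1) ∧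
      TendstoUniformlyOn
        (fun (N : ℕ) (x : ℝ) => ∑ n ∈ Finset.range N, |z|^(2*n) * p (2*n) x)
        (fun x : ℝ => ∑' n : ℕ, |z|^(2*n) * p (2*n) x) Filter.atTop (Set.Icc (0:ℝ) 1) ∧
      TendstoUniformlyOn
        (fun (N : ℕ) (x : ℝ) => ∑ n ∈ Finset.range N, |z|^(2*n) * q (2*n) x)
        (fun x : ℝ => ∑' n : ℕ, |z|^(2*n) * q (2*n) x) Filter.atTop (Set.Icc (0:ℝ) 1)) ∧
    (∀ z : ℝ, ∀ x ∈ Set.Icc (0:ℝ) 1,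
      Sp z x = z * ∫ t in Set.Icc (0:ℝ) x, Cp z t ∂μ ∧
      Sq z x = z * ∫ t in (0:ℝ)..x, Cq z t ∧
      Cp z x = 1 - z * ∫ t in (0:ℝ)..x, Sp z t ∧
      Cq z x = 1 - z * ∫ t in Set.Icc (0:ℝ) x, Sq z t ∂μ) := by
  have hp := monotoneBoundedByPow_of_setIntegral_intervalIntegral μ hp0 hpodd hpeven
  have hq := monotoneBoundedByPow_of_intervalIntegral_setIntegral μ hq0 hqodd hqeven
  refine ⟨fun z => ⟨?_, ?_, ?_, ?_⟩, fun z x hx => ?_⟩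
  · exact tendstoUniformlyOn_tsum_mul (fun n => (abs_abs_pow_eq z 1 n).le) fun n _ hx =>
      (hp n).2.abs_le_inv_factorial le_rfl hx
  · exact tendstoUniformlyOn_tsum_mul (fun n => (abs_abs_pow_eq z 1 n).le) fun n _ hx =>
      (hq n).2.abs_le_inv_factorial n.le_succ hx
  · exact tendstoUniformlyOn_tsum_mul (fun n => (abs_abs_pow_eq z 0 n).le) fun n _ hx =>
      (hp n).1.abs_le_inv_factorial le_rfl hx
  · exact tendstoUniformlyOn_tsum_mul (fun n => (abs_abs_pow_eq z 0 n).le) fun n _ hx =>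
      (hq n).1.abs_le_inv_factorial le_rfl hx
  have hvol : ∀ f : ℝ → ℝ, ∫ t in (0 : ℝ)..x, f t = ∫ t in Icc 0 x, f t := fun f => by
    rw [intervalIntegral.integral_of_le hx.1, integral_Icc_eq_integral_Ioc]
  refine ⟨?_, ?_, ?_, ?_⟩
  · simp only [hSp, hCp]
    exact tsum_odd_eq_mul_integral_tsum_even z (hpodd · x)
      (fun n => (hp n).1.aestronglyMeasurable_restrict_Icc μ)
      (fun n => (hp n).1.ae_restrict_abs_le_inv_factorial le_rfl μ hx.2)
  · simp only [hSq, hCq, hvol]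
    exact tsum_odd_eq_mul_integral_tsum_even z (fun n => (hqodd n x).trans (hvol _))
      (fun n => (hq n).1.aestronglyMeasurable_restrict_Icc volume)
      (fun n => (hq n).1.ae_restrict_abs_le_inv_factorial le_rfl volume hx.2)
  · simp only [hSp, hCp, hvol]
    exact tsum_even_eq_one_sub_mul_integral_tsum_odd z (hp0 x)
      (fun n => (hp n).1.abs_le_inv_factorial le_rfl hx) (fun n => (hpeven n x).trans (hvol _))
      (fun n => (hp n).2.aestronglyMeasurable_restrict_Icc volume)
      (fun n => (hp n).2.ae_restrict_abs_le_inv_factorial le_rfl volume hx.2)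
  · simp only [hSq, hCq]
    exact tsum_even_eq_one_sub_mul_integral_tsum_odd z (hq0 x)
      (fun n => (hq n).1.abs_le_inv_factorial le_rfl hx) (hqeven · x)
      (fun n => (hq n).2.aestronglyMeasurable_restrict_Icc μ)
      (fun n => (hq n).2.ae_restrict_abs_le_inv_factorial n.le_succ μ hx.2)

theorem stmt_1
    (μ : Measure ℝ) [IsProbabilityMeasure μ] [NullSingletonClass μ]
    (hsupp : μ (Set.Icc (0:ℝ) 1)ᶜ = 0)
    (p q : ℕ → ℝ → ℝ)
    (hp0 : ∀ x : ℝ, p 0 x = 1) (hq0 : ∀ x : ℝ, q 0 x = 1)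
    (hpodd : ∀ (n : ℕ) (x : ℝ), p (2*n+1) x = ∫ t in Set.Icc (0:ℝ) x, p (2*n) t ∂μ)
    (hpeven : ∀ (n : ℕ) (x : ℝ), p (2*n+2) x = ∫ t in (0:ℝ)..x, p (2*n+1) t)
    (hqodd : ∀ (n : ℕ) (x : ℝ), q (2*n+1) x = ∫ t in (0:ℝ)..x, q (2*n) t)
    (hqeven : ∀ (n : ℕ) (x : ℝ), q (2*n+2) x = ∫ t in Set.Icc (0:ℝ) x, q (2*n+1) t ∂μ)
    (Sp Sq Cp Cq : ℝ → ℝ → ℝ)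
    (hSp : ∀ (z x : ℝ), Sp z x = ∑' n : ℕ, (-1:ℝ)^n * z^(2*n+1) * p (2*n+1) x)
    (hSq : ∀ (z x : ℝ), Sq z x = ∑' n : ℕ, (-1:ℝ)^n * z^(2*n+1) * q (2*n+1) x)
    (hCp : ∀ (z x : ℝ), Cp z x = ∑' n : ℕ, (-1:ℝ)^n * z^(2*n) * p (2*n) x)
    (hCq : ∀ (z x : ℝ), Cq z x = ∑' n : ℕ, (-1:ℝ)^n * z^(2*n) * q (2*n) x) :
    (∀ z : ℝ,
      TendstoUniformlyOn
        (fun (N : ℕ) (x : ℝ) => ∑ n ∈ Finset.range N, |z|^(2*n+1) * p (2*n+1) x)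
        (fun x : ℝ => ∑' n : ℕ, |z|^(2*n+1) * p (2*n+1) x) Filter.atTop (Set.Icc (0:ℝ) 1) ∧
      TendstoUniformlyOn
        (fun (N : ℕ) (x : ℝ) => ∑ n ∈ Finset.range N, |z|^(2*n+1) * q (2*n+1) x)
        (fun x : ℝ => ∑' n : ℕ, |z|^(2*n+1) * q (2*n+1) x) Filter.atTop (Set.Icc (0:ℝ) 1) ∧
      TendstoUniformlyOn
        (fun (N : ℕ) (x : ℝ) => ∑ n ∈ Finset.range N, |z|^(2*n) * p (2*n) x)
        (fun x : ℝ => ∑' n : ℕ, |z|^(2*n) * p (2*n) x) Filter.atTop (Set.Icc (0:ℝ) 1) ∧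
      TendstoUniformlyOn
        (fun (N : ℕ) (x : ℝ) => ∑ n ∈ Finset.range N, |z|^(2*n) * q (2*n) x)
        (fun x : ℝ => ∑' n : ℕ, |z|^(2*n) * q (2*n) x) Filter.atTop (Set.Icc (0:ℝ) 1)) ∧
    (∀ z : ℝ, ∀ x ∈ Set.Icc (0:ℝ) 1,
      Sp z x = z * ∫ t in Set.Icc (0:ℝ) x, Cp z t ∂μ ∧
      Sq z x = z * ∫ t in (0:ℝ)..x, Cq z t ∧
      Cp z x = 1 - z * ∫ t in (0:ℝ)..x, Sp z t ∧
      Cq z x = 1 - z * ∫ t in Set.Icc (0:ℝ) x, Sq z t ∂μ) :=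
  stmt_1_general μ p q hp0 hq0 hpodd hpeven hqodd hqeven Sp Sq Cp Cq hSp hSq hCp hCq
end

section
/- For all k, n ∈ ℕ with k ≤ n and all x ∈ [0,1]: ∫_{[0,x]} p_{2k}(t) p_{2n−2k}(t) dμ(t) = Σ_{j=0}^{2k} (−1)^j p_j(x) p_{2n+1−j}(x), and ∫_{[0,x]} q_{2k+1}(t) q_{2n+1−2k}(t) dμ(t) = Σ_{j=0}^{2k+1} (−1)^{j+1} q_j(x) q_{2n+3−j}(x). -/
/-!
For a μ-primitive `F(x) = ∫_{[0,x]} f dμ` and a Lebesgue primitive `G(x) = ∫_0^x g`, Fubini on the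
triangle `0 < s ≤ t ≤ x` gives the integration by parts formula
`∫_{[0,x]} f G dμ = F(x) G(x) - ∫_0^x g F`; atomlessness of μ is what makes `∫_{[s,x]} f dμ`
equal to `F(x) - F(s)`. For a sequence `u` alternating between the two kinds of primitives,
applying it twice shows that `∫_{[0,x]} u_{2k+2} u_{2m} dμ` and `∫_{[0,x]} u_{2k} u_{2m+2} dμ`
differ by two boundary terms, and telescoping in `k` produces the alternating sums. For `q` this is
applied to the shifted sequence `q_{j+1}`, whose first term costs one more integration by parts.
All iterated primitives are monotone on `[0, ∞)`, which gives the integrability.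
-/

open MeasureTheory Set

variable {μ ν : Measure ℝ}

section Monotonicity

variable [IsLocallyFiniteMeasure μ] {f : ℝ → ℝ}

theorem monotoneOn_setIntegral_Icc (hf : MonotoneOn f (Ici 0)) (hf₀ : ∀ t ∈ Ici 0, 0 ≤ f t) :
    MonotoneOn (fun x => ∫ t in Icc 0 x, f t ∂μ) (Ici 0) := fun _ _ _ _ hab =>
  setIntegral_mono_set ((hf.mono Icc_subset_Ici_self).integrableOn_isCompact isCompact_Icc)
    ((ae_restrict_iff' measurableSet_Icc).2 (ae_of_all _ fun t ht => hf₀ t ht.1))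
    (Icc_subset_Icc_right hab).eventuallyLE

theorem monotoneOn_intervalIntegral (hf : MonotoneOn f (Ici 0)) (hf₀ : ∀ t ∈ Ici 0, 0 ≤ f t) :
    MonotoneOn (fun x => ∫ t in 0..x, f t ∂μ) (Ici 0) := by
  intro a ha b hb hab
  have hint : ∀ c ∈ Ici (0 : ℝ), IntervalIntegrable f μ 0 c := fun c hc =>
    (hf.mono (by rw [uIcc_of_le hc]; exact Icc_subset_Ici_self)).intervalIntegrable
  have hdiff := intervalIntegral.integral_interval_sub_left (hint b hb) (hint a ha)
  have hnonneg : 0 ≤ ∫ t in a..b, f t ∂μ :=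
    intervalIntegral.integral_nonneg hab fun t ht => hf₀ t (le_trans ha ht.1)
  simp only
  linarith

theorem integrableOn_Icc_of_monotoneOn_Ici (hf : MonotoneOn f (Ici 0)) (x : ℝ) :
    IntegrableOn f (Icc 0 x) μ :=
  (hf.mono Icc_subset_Ici_self).integrableOn_isCompact isCompact_Icc

theorem monotoneOn_and_nonneg_of_primitive_succ (u : ℕ → ℝ → ℝ) [IsLocallyFiniteMeasure ν]
    (h₀ : MonotoneOn (u 0) (Ici 0)) (h₀' : ∀ t ∈ Ici 0, 0 ≤ u 0 t)
    (hsucc : ∀ m, (∀ y, u (m + 1) y = ∫ t in Icc 0 y, u m t ∂μ) ∨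
      (∀ y, u (m + 1) y = ∫ t in 0..y, u m t ∂ν)) (m : ℕ) :
    MonotoneOn (u m) (Ici 0) ∧ ∀ t ∈ Ici 0, 0 ≤ u m t := by
  induction m with
  | zero => exact ⟨h₀, h₀'⟩
  | succ m ih =>
    rcases hsucc m with h | h <;> rw [funext h]
    · exact ⟨monotoneOn_setIntegral_Icc ih.1 ih.2,
        fun t _ => setIntegral_nonneg measurableSet_Icc fun s hs => ih.2 s hs.1⟩
    · exact ⟨monotoneOn_intervalIntegral ih.1 ih.2,
        fun t ht => intervalIntegral.integral_nonneg ht fun s hs => ih.2 s hs.1⟩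

end Monotonicity

theorem setIntegral_Icc_eq_add [NullSingletonClass μ] {f : ℝ → ℝ} {s x : ℝ} (hs : 0 ≤ s)
    (hsx : s ≤ x) (hf : IntegrableOn f (Icc 0 x) μ) :
    ∫ t in Icc 0 x, f t ∂μ = (∫ t in Icc 0 s, f t ∂μ) + ∫ t in Icc s x, f t ∂μ := by
  rw [← setIntegral_congr_set (Ioc_ae_eq_Icc (μ := μ) (a := s) (b := x)),
    ← setIntegral_union (disjoint_left.mpr fun _ hu hu' => hu'.1.not_ge hu.2) measurableSet_Ioc
      (hf.mono_set (Icc_subset_Icc_right hsx)) (hf.mono_set (Ioc_subset_Icc_self.trans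
        (Icc_subset_Icc_left hs))),
    Icc_union_Ioc_eq_Icc hs hsx]

theorem setIntegral_Icc_mul_primitive [SFinite μ] [SFinite ν] [NullSingletonClass μ]
    {f g : ℝ → ℝ} {x : ℝ} (hx : 0 ≤ x) (hf : IntegrableOn f (Icc 0 x) μ)
    (hg : IntegrableOn g (Ioc 0 x) ν) :
    ∫ t in Icc 0 x, f t * (∫ s in 0..t, g s ∂ν) ∂μ =
      (∫ t in Icc 0 x, f t ∂μ) * (∫ s in 0..x, g s ∂ν) -
        ∫ s in 0..x, g s * (∫ t in Icc 0 s, f t ∂μ) ∂ν := by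
  set F := fun s => ∫ t in Icc 0 s, f t ∂μ
  set K := {z : ℝ × ℝ | z.2 ≤ z.1}.indicator fun z => f z.1 * g z.2
  have hK : Integrable K ((μ.restrict (Icc 0 x)).prod (ν.restrict (Ioc 0 x))) :=
    (hf.mul_prod hg).indicator (measurableSet_le measurable_snd measurable_fst)
  have hK_left : ∀ t ∈ Icc 0 x, ∫ s in Ioc 0 x, K (t, s) ∂ν = f t * ∫ s in 0..t, g s ∂ν := by
    intro t ht
    have : ∀ s, K (t, s) = (Iic t).indicator (fun s => f t * g s) s := fun s => rfl
    simp only [this, setIntegral_indicator measurableSet_Iic, Ioc_inter_Iic, inf_eq_right.2 ht.2,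
      integral_const_mul, intervalIntegral.integral_of_le ht.1]
  have hK_right : ∀ s ∈ Ioc 0 x, ∫ t in Icc 0 x, K (t, s) ∂μ = g s * (F x - F s) := by
    intro s hs
    have : ∀ t, K (t, s) = (Ici s).indicator (fun t => f t * g s) t := fun t => rfl
    have hinter : Icc 0 x ∩ Ici s = Icc s x := by
      ext t
      simp only [mem_inter_iff, mem_Icc, mem_Ici]
      exact ⟨fun h => ⟨h.2, h.1.2⟩, fun h => ⟨⟨hs.1.le.trans h.1, h.2⟩, h.1⟩⟩
    simp only [this, setIntegral_indicator measurableSet_Ici, hinter, integral_mul_const,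
      F, setIntegral_Icc_eq_add hs.1.le hs.2 hf]
    ring
  have hgF : IntegrableOn (fun s => g s * (F x - F s)) (Ioc 0 x) ν :=
    hK.integral_prod_right.congr ((ae_restrict_iff' measurableSet_Ioc).2 (ae_of_all _ hK_right))
  calc ∫ t in Icc 0 x, f t * (∫ s in 0..t, g s ∂ν) ∂μ
      = ∫ t in Icc 0 x, ∫ s in Ioc 0 x, K (t, s) ∂ν ∂μ :=
        setIntegral_congr_fun measurableSet_Icc fun t ht => (hK_left t ht).symm
    _ = ∫ s in Ioc 0 x, ∫ t in Icc 0 x, K (t, s) ∂μ ∂ν := integral_integral_swap hK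
    _ = ∫ s in Ioc 0 x, g s * (F x - F s) ∂ν := setIntegral_congr_fun measurableSet_Ioc hK_right
    _ = _ := by
        have hsplit : ∫ s in Ioc 0 x, g s * F s ∂ν =
            ∫ s in Ioc 0 x, (g s * F x - g s * (F x - F s)) ∂ν := by
          congr 1; ext s; ring
        rw [intervalIntegral.integral_of_le hx, intervalIntegral.integral_of_le hx, hsplit,
          integral_sub (hg.mul_const _) hgF, integral_mul_const]
        ring

theorem setIntegral_Icc_mul_primitive_step [SFinite μ] [SFinite ν] [NullSingletonClass μ]
    {f₀ f₁ f₂ g₀ g₁ g₂ : ℝ → ℝ} {x : ℝ} (hx : 0 ≤ x)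
    (hf₁ : ∀ y, f₁ y = ∫ t in Icc 0 y, f₀ t ∂μ) (hf₂ : ∀ y, f₂ y = ∫ s in 0..y, f₁ s ∂ν)
    (hg₁ : ∀ y, g₁ y = ∫ t in Icc 0 y, g₀ t ∂μ) (hg₂ : ∀ y, g₂ y = ∫ s in 0..y, g₁ s ∂ν)
    (hf₀_int : IntegrableOn f₀ (Icc 0 x) μ) (hg₀_int : IntegrableOn g₀ (Icc 0 x) μ)
    (hf₁_int : IntegrableOn f₁ (Ioc 0 x) ν) (hg₁_int : IntegrableOn g₁ (Ioc 0 x) ν) :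
    ∫ t in Icc 0 x, f₀ t * g₂ t ∂μ =
      f₁ x * g₂ x - g₁ x * f₂ x + ∫ t in Icc 0 x, g₀ t * f₂ t ∂μ := by
  have hfg := setIntegral_Icc_mul_primitive hx hf₀_int hg₁_int
  have hgf := setIntegral_Icc_mul_primitive hx hg₀_int hf₁_int
  simp only [← hf₁, ← hf₂, ← hg₁, ← hg₂] at hfg hgf
  have hcomm : ∫ s in 0..x, g₁ s * f₁ s ∂ν = ∫ s in 0..x, f₁ s * g₁ s ∂ν := by
    simp only [mul_comm]
  linarith

theorem setIntegral_Icc_mul_eq_alternating_sum_add [SFinite μ] [SFinite ν] [NullSingletonClass μ]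
    (u : ℕ → ℝ → ℝ) {x : ℝ} (hx : 0 ≤ x)
    (hodd : ∀ i y, u (2 * i + 1) y = ∫ t in Icc 0 y, u (2 * i) t ∂μ)
    (heven : ∀ i y, u (2 * i + 2) y = ∫ s in 0..y, u (2 * i + 1) s ∂ν)
    (hμ : ∀ i, IntegrableOn (u (2 * i)) (Icc 0 x) μ)
    (hν : ∀ i, IntegrableOn (u (2 * i + 1)) (Ioc 0 x) ν) (k m : ℕ) :
    ∫ t in Icc 0 x, u (2 * k) t * u (2 * m) t ∂μ =
      ∑ j ∈ Finset.range (2 * k + 1), (-1) ^ j * u j x * u (2 * (k + m) + 1 - j) x +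
        ((∫ t in Icc 0 x, u 0 t * u (2 * (k + m)) t ∂μ) - u 0 x * u (2 * (k + m) + 1) x) := by
  induction k generalizing m with
  | zero => simp
  | succ k ih =>
    have hstep := setIntegral_Icc_mul_primitive_step hx (hodd m) (heven m) (hodd k) (heven k)
      (hμ m) (hμ k) (hν m) (hν k)
    have hcomm : ∫ t in Icc 0 x, u (2 * k + 2) t * u (2 * m) t ∂μ =
        ∫ t in Icc 0 x, u (2 * m) t * u (2 * k + 2) t ∂μ := by
      simp only [mul_comm]
    rw [show 2 * (k + 1) + 1 = 2 * k + 1 + 1 + 1 by ring, Finset.sum_range_succ,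
      Finset.sum_range_succ, show 2 * k + 1 + 1 = 2 * k + 2 by ring,
      show 2 * (k + 1 + m) + 1 - (2 * k + 1) = 2 * m + 2 by omega,
      show 2 * (k + 1 + m) + 1 - (2 * k + 2) = 2 * m + 1 by omega,
      show k + 1 + m = k + (m + 1) by ring, show 2 * (k + 1) = 2 * k + 2 by ring, hcomm, hstep,
      show 2 * m + 2 = 2 * (m + 1) by ring, ih]
    simp only [pow_succ, (even_two_mul k).neg_one_pow]
    ring

section Families

variable [IsLocallyFiniteMeasure μ] [IsLocallyFiniteMeasure ν] [NullSingletonClass μ]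

theorem setIntegral_Icc_even_mul_even (u : ℕ → ℝ → ℝ) (h₀ : ∀ y, u 0 y = 1) {x : ℝ} (hx : 0 ≤ x)
    (hodd : ∀ i y, u (2 * i + 1) y = ∫ t in Icc 0 y, u (2 * i) t ∂μ)
    (heven : ∀ i y, u (2 * i + 2) y = ∫ s in 0..y, u (2 * i + 1) s ∂ν) (k m : ℕ) :
    ∫ t in Icc 0 x, u (2 * k) t * u (2 * m) t ∂μ =
      ∑ j ∈ Finset.range (2 * k + 1), (-1) ^ j * u j x * u (2 * (k + m) + 1 - j) x := by
  have hmono := monotoneOn_and_nonneg_of_primitive_succ u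
    (by simp only [funext h₀]; exact monotoneOn_const) (fun t _ => by rw [h₀]; exact zero_le_one)
    fun i => by
      obtain ⟨i, rfl | rfl⟩ := Nat.even_or_odd' i
      exacts [Or.inl (hodd i), Or.inr (heven i)]
  rw [setIntegral_Icc_mul_eq_alternating_sum_add u hx hodd heven
    (fun i => integrableOn_Icc_of_monotoneOn_Ici (hmono _).1 x)
    (fun i => (integrableOn_Icc_of_monotoneOn_Ici (hmono _).1 x).mono_set Ioc_subset_Icc_self)]
  simp only [h₀, one_mul, ← hodd, sub_self, add_zero]

theorem setIntegral_Icc_odd_mul_odd (u : ℕ → ℝ → ℝ) (h₀ : ∀ y, u 0 y = 1) {x : ℝ} (hx : 0 ≤ x)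
    (hodd : ∀ i y, u (2 * i + 1) y = ∫ s in 0..y, u (2 * i) s ∂ν)
    (heven : ∀ i y, u (2 * i + 2) y = ∫ t in Icc 0 y, u (2 * i + 1) t ∂μ) (k m : ℕ) :
    ∫ t in Icc 0 x, u (2 * k + 1) t * u (2 * m + 1) t ∂μ =
      ∑ j ∈ Finset.range (2 * k + 2), (-1) ^ (j + 1) * u j x * u (2 * (k + m) + 3 - j) x := by
  have hmono := monotoneOn_and_nonneg_of_primitive_succ u
    (by simp only [funext h₀]; exact monotoneOn_const) (fun t _ => by rw [h₀]; exact zero_le_one)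
    fun i => by
      obtain ⟨i, rfl | rfl⟩ := Nat.even_or_odd' i
      exacts [Or.inr (hodd i), Or.inl (heven i)]
  have hint i := integrableOn_Icc_of_monotoneOn_Ici (μ := μ) (hmono i).1 x
  have hint' i := (integrableOn_Icc_of_monotoneOn_Ici (μ := ν) (hmono i).1 x).mono_set
    Ioc_subset_Icc_self
  set n := k + m
  have hbase : (∫ t in Icc 0 x, u 1 t * u (2 * n + 1) t ∂μ) - u 1 x * u (2 * n + 2) x =
      -u (2 * n + 3) x := by
    have hu₁ : ∀ y, u 1 y = ∫ s in 0..y, u 0 s ∂ν := hodd 0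
    have hu₃ : ∀ y, u (2 * n + 3) y = ∫ s in 0..y, u (2 * n + 2) s ∂ν := hodd (n + 1)
    have hibp := setIntegral_Icc_mul_primitive hx (hint (2 * n + 1)) (hint' 0)
    simp only [← hu₁, ← heven] at hibp
    simp only [h₀, one_mul, ← hu₃] at hibp
    simp only [mul_comm (u 1 _), hibp]
    ring
  have hsum : ∀ j ∈ Finset.range (2 * k + 1),
      (-1) ^ j * u (j + 1) x * u (2 * n + 1 - j + 1) x =
        (-1) ^ (j + 1 + 1) * u (j + 1) x * u (2 * n + 3 - (j + 1)) x := by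
    intro j hj
    rw [Finset.mem_range] at hj
    rw [show 2 * n + 3 - (j + 1) = 2 * n + 1 - j + 1 by omega]
    ring
  rw [setIntegral_Icc_mul_eq_alternating_sum_add (fun i => u (i + 1)) hx heven
      (fun i => hodd (i + 1)) (fun i => hint _) (fun i => hint' _) k m, hbase,
    Finset.sum_range_succ' _ (2 * k + 1), Finset.sum_congr rfl hsum, h₀, Nat.sub_zero]
  ring

end Families

theorem stmt_2_general
    (μ : Measure ℝ) [IsProbabilityMeasure μ] [NullSingletonClass μ]
    (p q : ℕ → ℝ → ℝ)
    (hp0 : ∀ x : ℝ, p 0 x = 1) (hq0 : ∀ x : ℝ, q 0 x = 1)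
    (hpodd : ∀ (n : ℕ) (x : ℝ), p (2*n+1) x = ∫ t in Set.Icc (0:ℝ) x, p (2*n) t ∂μ)
    (hpeven : ∀ (n : ℕ) (x : ℝ), p (2*n+2) x = ∫ t in (0:ℝ)..x, p (2*n+1) t)
    (hqodd : ∀ (n : ℕ) (x : ℝ), q (2*n+1) x = ∫ t in (0:ℝ)..x, q (2*n) t)
    (hqeven : ∀ (n : ℕ) (x : ℝ), q (2*n+2) x = ∫ t in Set.Icc (0:ℝ) x, q (2*n+1) t ∂μ) :
    ∀ (k n : ℕ), k ≤ n → ∀ x ∈ Set.Icc (0:ℝ) 1,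
      (∫ t in Set.Icc (0:ℝ) x, p (2*k) t * p (2*n-2*k) t ∂μ) =
        ∑ j ∈ Finset.range (2*k+1), (-1:ℝ)^j * p j x * p (2*n+1-j) x ∧
      (∫ t in Set.Icc (0:ℝ) x, q (2*k+1) t * q (2*n+1-2*k) t ∂μ) =
        ∑ j ∈ Finset.range (2*k+2), (-1:ℝ)^(j+1) * q j x * q (2*n+3-j) x := by
  intro k n hkn x hx
  obtain ⟨m, rfl⟩ := Nat.exists_eq_add_of_le hkn
  rw [show 2 * (k + m) - 2 * k = 2 * m by omega, show 2 * (k + m) + 1 - 2 * k = 2 * m + 1 by omega]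
  exact ⟨setIntegral_Icc_even_mul_even p hp0 hx.1 hpodd hpeven k m,
    setIntegral_Icc_odd_mul_odd q hq0 hx.1 hqodd hqeven k m⟩

theorem stmt_2
    (μ : Measure ℝ) [IsProbabilityMeasure μ] [NullSingletonClass μ]
    (hsupp : μ (Set.Icc (0:ℝ) 1)ᶜ = 0)
    (p q : ℕ → ℝ → ℝ)
    (hp0 : ∀ x : ℝ, p 0 x = 1) (hq0 : ∀ x : ℝ, q 0 x = 1)
    (hpodd : ∀ (n : ℕ) (x : ℝ), p (2*n+1) x = ∫ t in Set.Icc (0:ℝ) x, p (2*n) t ∂μ)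
    (hpeven : ∀ (n : ℕ) (x : ℝ), p (2*n+2) x = ∫ t in (0:ℝ)..x, p (2*n+1) t)
    (hqodd : ∀ (n : ℕ) (x : ℝ), q (2*n+1) x = ∫ t in (0:ℝ)..x, q (2*n) t)
    (hqeven : ∀ (n : ℕ) (x : ℝ), q (2*n+2) x = ∫ t in Set.Icc (0:ℝ) x, q (2*n+1) t ∂μ) :
    ∀ (k n : ℕ), k ≤ n → ∀ x ∈ Set.Icc (0:ℝ) 1,
      (∫ t in Set.Icc (0:ℝ) x, p (2*k) t * p (2*n-2*k) t ∂μ) =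
        ∑ j ∈ Finset.range (2*k+1), (-1:ℝ)^j * p j x * p (2*n+1-j) x ∧
      (∫ t in Set.Icc (0:ℝ) x, q (2*k+1) t * q (2*n+1-2*k) t ∂μ) =
        ∑ j ∈ Finset.range (2*k+2), (-1:ℝ)^(j+1) * q j x * q (2*n+3-j) x :=
  stmt_2_general μ p q hp0 hq0 hpodd hpeven hqodd hqeven
end

section
/- For all k, n ∈ ℕ with 1 ≤ k ≤ n and all x ∈ [0,1]: ∫_{[0,x]} q_{2k−1}(t) p_{2n−2k}(t) dμ(t) = Σ_{j=0}^{2k−1} (−1)^{j+1} q_j(x) p_{2n−j}(x). -/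
/-!
Write `I_j(x) = ∫_{[0,x]} q_j p_{2n-1-j}`, integrated against `dt` for even `j` and against `μ`
for odd `j`. Fubini on `[0,x]²`, split along the diagonal, gives the integration by parts formula
`∫_{[0,x]} H f dμ + ∫_0^x h F dt = H(x) F(x)` for `H' = h` and `dF = f dμ`; the diagonal is
invisible because `μ` has no atoms. With the defining recursions this reads
`I_{j+1} + I_j = q_{j+1}(x) p_{2n-j-1}(x)`, and since `I_0 = p_{2n}(x)` the alternating sum
telescopes to `I_{2k-1}`.
-/

open MeasureTheory Set

theorem stronglyMeasurable_setIntegral_of_measurableSet_prod {α β E : Type*} [MeasurableSpace α]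
    [MeasurableSpace β] [NormedAddCommGroup E] [NormedSpace ℝ E] {μ : Measure β} [SFinite μ]
    {g : β → E} (hg : StronglyMeasurable g) {s : α → Set β}
    (hs : MeasurableSet {z : α × β | z.2 ∈ s z.1}) :
    StronglyMeasurable fun x => ∫ t in s x, g t ∂μ := by
  have hsx (x : α) : MeasurableSet (s x) := hs.preimage measurable_prodMk_left
  simp_rw [← integral_indicator (hsx _)]
  exact ((hg.comp_measurable measurable_snd).indicator hs).integral_prod_right'

theorem measurable_setIntegral_Icc {μ : Measure ℝ} [SFinite μ] {g : ℝ → ℝ} (hg : Measurable g)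
    (a : ℝ) : Measurable fun x => ∫ t in Icc a x, g t ∂μ := by
  have hs : MeasurableSet {z : ℝ × ℝ | z.2 ∈ Icc a z.1} :=
    (measurableSet_le measurable_const measurable_snd).inter
      (measurableSet_le measurable_snd measurable_fst)
  exact (stronglyMeasurable_setIntegral_of_measurableSet_prod hg.stronglyMeasurable hs).measurable

theorem measurable_intervalIntegral_primitive {g : ℝ → ℝ} (hg : Measurable g) (a : ℝ) :
    Measurable fun x => ∫ t in a..x, g t := by
  have hs₁ : MeasurableSet {z : ℝ × ℝ | z.2 ∈ Ioc a z.1} :=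
    (measurableSet_lt measurable_const measurable_snd).inter
      (measurableSet_le measurable_snd measurable_fst)
  have hs₂ : MeasurableSet {z : ℝ × ℝ | z.2 ∈ Ioc z.1 a} :=
    (measurableSet_lt measurable_fst measurable_snd).inter
      (measurableSet_le measurable_snd measurable_const)
  exact (stronglyMeasurable_setIntegral_of_measurableSet_prod hg.stronglyMeasurable hs₁).measurable.sub
    (stronglyMeasurable_setIntegral_of_measurableSet_prod hg.stronglyMeasurable hs₂).measurable

theorem measurable_and_abs_le_one_of_integration_steps (μ : Measure ℝ) [IsProbabilityMeasure μ]
    {r : ℕ → ℝ → ℝ} (h0 : ∀ x, r 0 x = 1)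
    (hstep : ∀ j, (∀ x, r (j + 1) x = ∫ t in Icc 0 x, r j t ∂μ) ∨
      ∀ x, r (j + 1) x = ∫ t in 0..x, r j t) (j : ℕ) :
    Measurable (r j) ∧ ∀ x ∈ Icc (0 : ℝ) 1, |r j x| ≤ 1 := by
  induction j with
  | zero => simp [show r 0 = fun _ => 1 from funext h0]
  | succ j ih =>
    obtain ⟨hm, hb⟩ := ih
    have hb' (x : ℝ) (hx : x ∈ Icc (0 : ℝ) 1) (t : ℝ) (ht : t ∈ Icc 0 x) : ‖r j t‖ ≤ 1 :=
      hb t ⟨ht.1, ht.2.trans hx.2⟩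
    rcases hstep j with hr | hr <;> rw [funext hr] <;> refine ⟨?_, fun x hx => ?_⟩
    · exact measurable_setIntegral_Icc hm 0
    · calc |∫ t in Icc 0 x, r j t ∂μ| ≤ 1 * μ.real (Icc 0 x) :=
            norm_setIntegral_le_of_norm_le_const (measure_lt_top _ _) (hb' x hx)
        _ ≤ 1 := by simp
    · exact measurable_intervalIntegral_primitive hm 0
    · have hsub : uIoc 0 x ⊆ Icc 0 x := by
        rw [uIoc_of_le hx.1]; exact Ioc_subset_Icc_self
      calc |∫ t in 0..x, r j t| ≤ 1 * |x - 0| :=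
            intervalIntegral.norm_integral_le_of_norm_le_const fun t ht => hb' x hx t (hsub ht)
        _ ≤ 1 := by simpa [abs_of_nonneg hx.1] using hx.2

theorem integrableOn_Icc_of_abs_le_one {ν : Measure ℝ} [IsFiniteMeasureOnCompacts ν] {g : ℝ → ℝ}
    (hg : Measurable g) (hb : ∀ x ∈ Icc (0 : ℝ) 1, |g x| ≤ 1) {x : ℝ} (hx : x ≤ 1) :
    IntegrableOn g (Icc 0 x) ν :=
  Measure.integrableOn_of_bounded (M := 1) measure_Icc_lt_top.ne hg.aestronglyMeasurable <|
    ae_restrict_of_forall_mem measurableSet_Icc fun t ht => hb t ⟨ht.1, ht.2.trans hx⟩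

theorem setIntegral_primitive_mul_add_integral_mul_cumulative (μ : Measure ℝ) [SFinite μ]
    [NullSingletonClass μ] {f h : ℝ → ℝ} {x : ℝ} (hx : 0 ≤ x) (hf : IntegrableOn f (Icc 0 x) μ)
    (hh : IntervalIntegrable h volume 0 x) :
    ∫ t in Icc 0 x, (∫ s in 0..t, h s) * f t ∂μ + ∫ s in 0..x, h s * ∫ t in Icc 0 s, f t ∂μ =
      (∫ s in 0..x, h s) * ∫ t in Icc 0 x, f t ∂μ := by
  set ν := μ.restrict (Icc 0 x)
  set ℓ := volume.restrict (Ioc 0 x)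
  have hG : Integrable (fun z : ℝ × ℝ => f z.1 * h z.2) (ν.prod ℓ) := hf.mul_prod hh.1
  set S := {z : ℝ × ℝ | z.2 ≤ z.1}
  have hS : MeasurableSet S := measurableSet_le measurable_snd measurable_fst
  have hlow : ∫ z in S, f z.1 * h z.2 ∂(ν.prod ℓ) =
      ∫ t in Icc 0 x, (∫ s in 0..t, h s) * f t ∂μ := by
    rw [← integral_indicator hS, integral_prod _ (hG.indicator hS)]
    refine setIntegral_congr_fun measurableSet_Icc fun t ht => ?_
    have hind : (fun s => S.indicator (fun z : ℝ × ℝ => f z.1 * h z.2) (t, s)) =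
        (Iic t).indicator fun s => f t * h s := by
      ext s; simp [S, indicator]
    rw [hind, setIntegral_indicator measurableSet_Iic, Ioc_inter_Iic, min_eq_right ht.2,
      integral_const_mul, intervalIntegral.integral_of_le ht.1, mul_comm]
  have hup : ∫ z in Sᶜ, f z.1 * h z.2 ∂(ν.prod ℓ) =
      ∫ s in 0..x, h s * ∫ t in Icc 0 s, f t ∂μ := by
    rw [← integral_indicator hS.compl, integral_prod_symm _ (hG.indicator hS.compl),
      intervalIntegral.integral_of_le hx]
    refine setIntegral_congr_fun measurableSet_Ioc fun s hs => ?_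
    have hind : (fun t => Sᶜ.indicator (fun z : ℝ × ℝ => f z.1 * h z.2) (t, s)) =
        (Iio s).indicator fun t => f t * h s := by
      ext t; simp [S, indicator]
    have hcap : Icc 0 x ∩ Iio s = Ico 0 s := by
      ext t; simp only [mem_inter_iff, mem_Icc, mem_Iio, mem_Ico]
      constructor
      · rintro ⟨⟨h0, -⟩, hts⟩; exact ⟨h0, hts⟩
      · rintro ⟨h0, hts⟩; exact ⟨⟨h0, hts.le.trans hs.2⟩, hts⟩
    rw [hind, setIntegral_indicator measurableSet_Iio, hcap, setIntegral_congr_set Ico_ae_eq_Icc,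
      integral_mul_const, mul_comm]
  rw [← hlow, ← hup, integral_add_compl hS hG, integral_prod_mul,
    intervalIntegral.integral_of_le hx, mul_comm]

theorem neg_one_pow_mul_eq_sum_of_add_eq {R : Type*} [CommRing R] {J a : ℕ → R} {M : ℕ}
    (h0 : J 0 = a 0) (hstep : ∀ j, j + 1 ≤ M → J (j + 1) + J j = a (j + 1)) :
    ∀ j ≤ M, (-1) ^ j * J j = ∑ i ∈ Finset.range (j + 1), (-1) ^ i * a i := by
  intro j
  induction j with
  | zero => simp [h0]
  | succ j ih =>
    intro hj
    rw [Finset.sum_range_succ, ← ih (by omega), ← hstep j hj, pow_succ]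
    ring

noncomputable def mixedIntegral (μ : Measure ℝ) (p q : ℕ → ℝ → ℝ) (n j : ℕ) (x : ℝ) : ℝ :=
  if Even j then ∫ t in 0..x, q j t * p (2 * n - 1 - j) t
  else ∫ t in Icc 0 x, q j t * p (2 * n - 1 - j) t ∂μ

theorem mixedIntegral_zero (μ : Measure ℝ) {p q : ℕ → ℝ → ℝ} (hq0 : ∀ x, q 0 x = 1)
    (hpeven : ∀ (n : ℕ) (x : ℝ), p (2 * n + 2) x = ∫ t in 0..x, p (2 * n + 1) t)
    {n : ℕ} (hn : 1 ≤ n) (x : ℝ) : mixedIntegral μ p q n 0 x = q 0 x * p (2 * n) x := by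
  obtain ⟨m, rfl⟩ : ∃ m, n = m + 1 := ⟨n - 1, by omega⟩
  simp only [mixedIntegral, Even.zero, if_true, hq0, one_mul, hpeven,
    show 2 * (m + 1) = 2 * m + 2 by omega, show 2 * m + 2 - 1 - 0 = 2 * m + 1 by omega]

theorem mixedIntegral_succ_add (μ : Measure ℝ) [IsProbabilityMeasure μ] [NullSingletonClass μ]
    {p q : ℕ → ℝ → ℝ}
    (hpodd : ∀ (n : ℕ) (x : ℝ), p (2 * n + 1) x = ∫ t in Icc 0 x, p (2 * n) t ∂μ)
    (hpeven : ∀ (n : ℕ) (x : ℝ), p (2 * n + 2) x = ∫ t in 0..x, p (2 * n + 1) t)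
    (hqodd : ∀ (n : ℕ) (x : ℝ), q (2 * n + 1) x = ∫ t in 0..x, q (2 * n) t)
    (hqeven : ∀ (n : ℕ) (x : ℝ), q (2 * n + 2) x = ∫ t in Icc 0 x, q (2 * n + 1) t ∂μ)
    (hp : ∀ j, Measurable (p j) ∧ ∀ x ∈ Icc (0 : ℝ) 1, |p j x| ≤ 1)
    (hq : ∀ j, Measurable (q j) ∧ ∀ x ∈ Icc (0 : ℝ) 1, |q j x| ≤ 1)
    {n j : ℕ} (hj : j + 1 < 2 * n) {x : ℝ} (hx : x ∈ Icc (0 : ℝ) 1) :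
    mixedIntegral μ p q n (j + 1) x + mixedIntegral μ p q n j x =
      q (j + 1) x * p (2 * n - (j + 1)) x := by
  have hint {ν : Measure ℝ} [IsFiniteMeasureOnCompacts ν] {g : ℝ → ℝ}
      (hg : Measurable g ∧ ∀ x ∈ Icc (0 : ℝ) 1, |g x| ≤ 1) : IntegrableOn g (Icc 0 x) ν :=
    integrableOn_Icc_of_abs_le_one hg.1 hg.2 hx.2
  have hii {g : ℝ → ℝ} (hg : Measurable g ∧ ∀ x ∈ Icc (0 : ℝ) 1, |g x| ≤ 1) :
      IntervalIntegrable g volume 0 x :=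
    (intervalIntegrable_iff_integrableOn_Icc_of_le hx.1).2 (hint hg)
  rcases Nat.even_or_odd' j with ⟨a, rfl | rfl⟩
  · obtain ⟨b, hb⟩ : ∃ b, 2 * n - 1 - 2 * a = 2 * b + 1 := ⟨n - 1 - a, by omega⟩
    have hb₁ : 2 * n - 1 - (2 * a + 1) = 2 * b := by omega
    have hb₂ : 2 * n - (2 * a + 1) = 2 * b + 1 := by omega
    simp only [mixedIntegral, even_two_mul, Nat.not_even_two_mul_add_one, if_true, if_false,
      hb, hb₁, hb₂, hqodd, hpodd]
    exact setIntegral_primitive_mul_add_integral_mul_cumulative μ hx.1 (hint (hp _)) (hii (hq _))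
  · obtain ⟨b, hb⟩ : ∃ b, 2 * n - 1 - (2 * a + 1) = 2 * b + 2 := ⟨n - 2 - a, by omega⟩
    have hb₁ : 2 * n - 1 - (2 * a + 2) = 2 * b + 1 := by omega
    have hb₂ : 2 * n - (2 * a + 2) = 2 * b + 2 := by omega
    have he : Even (2 * a + 2) := ⟨a + 1, by ring⟩
    rw [show 2 * a + 1 + 1 = 2 * a + 2 by ring]
    simp only [mixedIntegral, he, Nat.not_even_two_mul_add_one, if_true, if_false,
      hb, hb₁, hb₂, hqeven, hpeven]
    have := setIntegral_primitive_mul_add_integral_mul_cumulative μ hx.1 (hint (hq (2 * a + 1)))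
      (hii (hp (2 * b + 1)))
    simpa only [mul_comm, add_comm] using this

theorem stmt_4_general
    (μ : Measure ℝ) [IsProbabilityMeasure μ] [NullSingletonClass μ]
    (p q : ℕ → ℝ → ℝ)
    (hp0 : ∀ x : ℝ, p 0 x = 1) (hq0 : ∀ x : ℝ, q 0 x = 1)
    (hpodd : ∀ (n : ℕ) (x : ℝ), p (2*n+1) x = ∫ t in Set.Icc (0:ℝ) x, p (2*n) t ∂μ)
    (hpeven : ∀ (n : ℕ) (x : ℝ), p (2*n+2) x = ∫ t in (0:ℝ)..x, p (2*n+1) t)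
    (hqodd : ∀ (n : ℕ) (x : ℝ), q (2*n+1) x = ∫ t in (0:ℝ)..x, q (2*n) t)
    (hqeven : ∀ (n : ℕ) (x : ℝ), q (2*n+2) x = ∫ t in Set.Icc (0:ℝ) x, q (2*n+1) t ∂μ) :
    ∀ (k n : ℕ), 1 ≤ k → k ≤ n → ∀ x ∈ Set.Icc (0:ℝ) 1,
      (∫ t in Set.Icc (0:ℝ) x, q (2*k-1) t * p (2*n-2*k) t ∂μ) =
        ∑ j ∈ Finset.range (2*k), (-1:ℝ)^(j+1) * q j x * p (2*n-j) x := by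
  intro k n hk hkn x hx
  have hp := measurable_and_abs_le_one_of_integration_steps μ hp0 fun j => by
    rcases Nat.even_or_odd' j with ⟨m, rfl | rfl⟩
    exacts [Or.inl (hpodd m), Or.inr (hpeven m)]
  have hq := measurable_and_abs_le_one_of_integration_steps μ hq0 fun j => by
    rcases Nat.even_or_odd' j with ⟨m, rfl | rfl⟩
    exacts [Or.inr (hqodd m), Or.inl (hqeven m)]
  have hsum := neg_one_pow_mul_eq_sum_of_add_eq (J := fun j => mixedIntegral μ p q n j x)
    (a := fun i => q i x * p (2 * n - i) x) (mixedIntegral_zero μ hq0 hpeven (by omega) x)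
    (fun j hj => mixedIntegral_succ_add μ hpodd hpeven hqodd hqeven hp hq (by omega) hx)
    (2 * k - 1) le_rfl
  have hodd : Odd (2 * k - 1) := ⟨k - 1, by omega⟩
  simp only [mixedIntegral, Nat.not_even_iff_odd.2 hodd, if_false, hodd.neg_one_pow,
    show 2 * n - 1 - (2 * k - 1) = 2 * n - 2 * k by omega,
    show 2 * k - 1 + 1 = 2 * k by omega] at hsum
  simp only [pow_succ, mul_neg_one, neg_mul, Finset.sum_neg_distrib, mul_assoc]
  linarith

theorem stmt_4
    (μ : Measure ℝ) [IsProbabilityMeasure μ] [NullSingletonClass μ]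
    (hsupp : μ (Set.Icc (0:ℝ) 1)ᶜ = 0)
    (p q : ℕ → ℝ → ℝ)
    (hp0 : ∀ x : ℝ, p 0 x = 1) (hq0 : ∀ x : ℝ, q 0 x = 1)
    (hpodd : ∀ (n : ℕ) (x : ℝ), p (2*n+1) x = ∫ t in Set.Icc (0:ℝ) x, p (2*n) t ∂μ)
    (hpeven : ∀ (n : ℕ) (x : ℝ), p (2*n+2) x = ∫ t in (0:ℝ)..x, p (2*n+1) t)
    (hqodd : ∀ (n : ℕ) (x : ℝ), q (2*n+1) x = ∫ t in (0:ℝ)..x, q (2*n) t)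
    (hqeven : ∀ (n : ℕ) (x : ℝ), q (2*n+2) x = ∫ t in Set.Icc (0:ℝ) x, q (2*n+1) t ∂μ) :
    ∀ (k n : ℕ), 1 ≤ k → k ≤ n → ∀ x ∈ Set.Icc (0:ℝ) 1,
      (∫ t in Set.Icc (0:ℝ) x, q (2*k-1) t * p (2*n-2*k) t ∂μ) =
        ∑ j ∈ Finset.range (2*k), (-1:ℝ)^(j+1) * q j x * p (2*n-j) x :=
  stmt_4_general μ p q hp0 hq0 hpodd hpeven hqodd hqeven
end

section
/- For every n ∈ ℕ with n ≥ 1 and every x ∈ [0,1]: Σ_{j=0}^{2n} (−1)^j q_j(x) p_{2n−j}(x) = 0. -/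
/-!
Write `L f x = ∫₀ˣ f` and `M g x = ∫_{[0,x]} g dμ`. Fubini on the triangle `{s ≤ t} ⊆ [0,x]²`,
whose diagonal is null because `μ` has no atoms, gives the integration by parts formula
`L f · M g = M (L f · g) + L (M g · f)`. Applied to `q_{2i} p_{2k}` (`i + k = n`) and to
`q_{2i+1} p_{2k+1}` (`i + k = n - 1`), it expresses both the even-indexed and the odd-indexed
part of the alternating sum as the same total
`∑_{i+k=n-1} (∫ q_{2i+1} p_{2k} dμ + ∫ q_{2i} p_{2k+1} dt)`.
All `p_j`, `q_j` are monotone and nonnegative on `[0, ∞)`, which supplies the integrability.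
-/

open MeasureTheory

section

open Set

theorem intervalIntegral_mul_setIntegral_Icc {μ : Measure ℝ} [SFinite μ] [NullSingletonClass μ]
    {f g : ℝ → ℝ} {x : ℝ} (hx : 0 ≤ x) (hf : IntervalIntegrable f volume 0 x)
    (hg : IntegrableOn g (Icc 0 x) μ) :
    (∫ s in 0..x, f s) * ∫ t in Icc 0 x, g t ∂μ =
      (∫ t in Icc 0 x, (∫ s in 0..t, f s) * g t ∂μ) +
        ∫ s in 0..x, (∫ t in Icc 0 s, g t ∂μ) * f s := by
  set ν := (volume.restrict (Ioc 0 x)).prod (μ.restrict (Icc 0 x))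
  set D := {z : ℝ × ℝ | z.1 ≤ z.2}
  have hD : MeasurableSet D := measurableSet_le measurable_fst measurable_snd
  have hF : Integrable (fun z : ℝ × ℝ => f z.1 * g z.2) ν :=
    ((intervalIntegrable_iff_integrableOn_Ioc_of_le hx).1 hf).mul_prod hg
  have below :
      ∫ z in D, f z.1 * g z.2 ∂ν = ∫ t in Icc 0 x, (∫ s in 0..t, f s) * g t ∂μ := by
    rw [← integral_indicator hD,
      integral_prod_symm _ ((integrable_indicator_iff hD).2 hF.integrableOn)]
    refine setIntegral_congr_fun measurableSet_Icc fun t ht => ?_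
    have hslice : ∀ s, D.indicator (fun z => f z.1 * g z.2) (s, t) =
        (Iic t).indicator (f · * g t) s :=
      fun s => by by_cases hst : s ≤ t <;> simp [D, indicator, hst]
    simp only [hslice]
    rw [integral_indicator measurableSet_Iic, Measure.restrict_restrict measurableSet_Iic,
      Iic_inter_Ioc_of_le ht.2, ← intervalIntegral.integral_of_le ht.1,
      intervalIntegral.integral_mul_const]
  have above :
      ∫ z in Dᶜ, f z.1 * g z.2 ∂ν = ∫ s in 0..x, (∫ t in Icc 0 s, g t ∂μ) * f s := by
    rw [← integral_indicator hD.compl,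
      integral_prod _ ((integrable_indicator_iff hD.compl).2 hF.integrableOn),
      intervalIntegral.integral_of_le hx]
    refine setIntegral_congr_fun measurableSet_Ioc fun s hs => ?_
    have hslice : ∀ t, Dᶜ.indicator (fun z => f z.1 * g z.2) (s, t) =
        (Iio s).indicator (f s * g ·) t :=
      fun t => by by_cases hst : s ≤ t <;> simp [D, indicator, hst]
    have hcut : Iio s ∩ Icc 0 x = Ico 0 s := by
      ext t
      simp only [mem_inter_iff, mem_Iio, mem_Icc, mem_Ico]
      exact ⟨fun ⟨hts, h0t, _⟩ => ⟨h0t, hts⟩,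
        fun ⟨h0t, hts⟩ => ⟨hts, h0t, hts.le.trans hs.2⟩⟩
    simp only [hslice]
    -- no atoms: `[0, s)` and `[0, s]` have the same `μ`-integrals
    rw [integral_indicator measurableSet_Iio, Measure.restrict_restrict measurableSet_Iio,
      hcut, integral_const_mul, Measure.restrict_congr_set Ico_ae_eq_Icc, mul_comm]
  rw [← below, ← above, integral_add_compl hD hF, integral_prod_mul,
    intervalIntegral.integral_of_le hx]

theorem intervalIntegral_mul_setIntegral_Icc_of_monotoneOn (μ : Measure ℝ)
    [IsFiniteMeasureOnCompacts μ] [NullSingletonClass μ] {f g : ℝ → ℝ}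
    (hf : MonotoneOn f (Ici 0)) (hg : MonotoneOn g (Ici 0))
    {x : ℝ} (hx : 0 ≤ x) :
    (∫ s in 0..x, f s) * ∫ t in Icc 0 x, g t ∂μ =
      (∫ t in Icc 0 x, (∫ s in 0..t, f s) * g t ∂μ) +
        ∫ s in 0..x, (∫ t in Icc 0 s, g t ∂μ) * f s :=
  intervalIntegral_mul_setIntegral_Icc hx
    (hf.mono (uIcc_of_le hx ▸ Icc_subset_Ici_self)).intervalIntegrable
    ((hg.mono Icc_subset_Ici_self).integrableOn_isCompact isCompact_Icc)

theorem monotoneOn_intervalIntegral_zero {f : ℝ → ℝ} (hf : MonotoneOn f (Ici 0))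
    (hf0 : 0 ≤ f 0) :
    MonotoneOn (fun x => ∫ t in 0..x, f t) (Ici 0) := by
  intro a ha b _ hab
  refine intervalIntegral.integral_mono_interval le_rfl ha hab ?_
    ((hf.mono (uIcc_of_le (ha.trans hab) ▸ Icc_subset_Ici_self)).intervalIntegrable)
  filter_upwards [ae_restrict_mem measurableSet_Ioc] with t ht
  exact hf0.trans (hf self_mem_Ici ht.1.le ht.1.le)

theorem monotoneOn_setIntegral_Icc_zero (μ : Measure ℝ) [IsFiniteMeasureOnCompacts μ]
    {f : ℝ → ℝ} (hf : MonotoneOn f (Ici 0)) (hf0 : 0 ≤ f 0) :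
    MonotoneOn (fun x => ∫ t in Icc 0 x, f t ∂μ) (Ici 0) := by
  intro a _ b _ hab
  refine setIntegral_mono_set ((hf.mono Icc_subset_Ici_self).integrableOn_isCompact isCompact_Icc)
    ?_ (Icc_subset_Icc le_rfl hab).eventuallyLE
  filter_upwards [ae_restrict_mem measurableSet_Icc] with t ht
  exact hf0.trans (hf self_mem_Ici ht.1 ht.1)

theorem monotoneOn_Ici_of_primitive_steps (μ : Measure ℝ) [IsFiniteMeasureOnCompacts μ]
    {r : ℕ → ℝ → ℝ} (hr : MonotoneOn (r 0) (Ici 0)) (hr0 : 0 ≤ r 0 0)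
    (hstep : ∀ k, (∀ x, r (k + 1) x = ∫ t in 0..x, r k t) ∨
      ∀ x, r (k + 1) x = ∫ t in Icc 0 x, r k t ∂μ) (k : ℕ) :
    MonotoneOn (r k) (Ici 0) ∧ 0 ≤ r k 0 := by
  induction k with
  | zero => exact ⟨hr, hr0⟩
  | succ k ih =>
    rcases hstep k with h | h <;> rw [funext h]
    · exact ⟨monotoneOn_intervalIntegral_zero ih.1 ih.2, by simp⟩
    · refine ⟨monotoneOn_setIntegral_Icc_zero μ ih.1 ih.2,
        setIntegral_nonneg measurableSet_Icc ?_⟩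
      rintro t ⟨ht0, ht0'⟩
      exact le_antisymm ht0' ht0 ▸ ih.2

end

structure IsAlternatingPrimitive (μ : Measure ℝ) (p q : ℕ → ℝ → ℝ) : Prop where
  p_zero : ∀ x, p 0 x = 1
  q_zero : ∀ x, q 0 x = 1
  p_odd : ∀ n x, p (2 * n + 1) x = ∫ t in Set.Icc 0 x, p (2 * n) t ∂μ
  p_even : ∀ n x, p (2 * n + 2) x = ∫ t in 0..x, p (2 * n + 1) t
  q_odd : ∀ n x, q (2 * n + 1) x = ∫ t in 0..x, q (2 * n) t
  q_even : ∀ n x, q (2 * n + 2) x = ∫ t in Set.Icc 0 x, q (2 * n + 1) t ∂μ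

namespace IsAlternatingPrimitive

variable {μ : Measure ℝ} {p q : ℕ → ℝ → ℝ}

theorem monotoneOn_p [IsFiniteMeasureOnCompacts μ] (h : IsAlternatingPrimitive μ p q) (k : ℕ) :
    MonotoneOn (p k) (Set.Ici 0) := by
  refine (monotoneOn_Ici_of_primitive_steps μ (fun a _ b _ _ => by simp [h.p_zero])
    (by simp [h.p_zero]) (fun k => ?_) k).1
  obtain ⟨m, rfl | rfl⟩ := Nat.even_or_odd' k
  · exact .inr (h.p_odd m)
  · exact .inl (h.p_even m)

theorem monotoneOn_q [IsFiniteMeasureOnCompacts μ] (h : IsAlternatingPrimitive μ p q) (k : ℕ) :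
    MonotoneOn (q k) (Set.Ici 0) := by
  refine (monotoneOn_Ici_of_primitive_steps μ (fun a _ b _ _ => by simp [h.q_zero])
    (by simp [h.q_zero]) (fun k => ?_) k).1
  obtain ⟨m, rfl | rfl⟩ := Nat.even_or_odd' k
  · exact .inl (h.q_odd m)
  · exact .inr (h.q_even m)

variable [IsFiniteMeasureOnCompacts μ] [NullSingletonClass μ] {x : ℝ}

open Finset

theorem q_odd_mul_p_odd (h : IsAlternatingPrimitive μ p q) (hx : 0 ≤ x) (i k : ℕ) :
    q (2 * i + 1) x * p (2 * k + 1) x =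
      (∫ t in Set.Icc 0 x, q (2 * i + 1) t * p (2 * k) t ∂μ) +
        ∫ t in 0..x, q (2 * i) t * p (2 * k + 1) t := by
  have parts := intervalIntegral_mul_setIntegral_Icc_of_monotoneOn μ (h.monotoneOn_q (2 * i))
    (h.monotoneOn_p (2 * k)) hx
  simp only [← h.q_odd, ← h.p_odd] at parts
  simp only [parts, mul_comm (p _ _) (q _ _)]

theorem q_even_mul_p_even (h : IsAlternatingPrimitive μ p q) (hx : 0 ≤ x) (i k : ℕ) :
    q (2 * i + 2) x * p (2 * k + 2) x =
      (∫ t in Set.Icc 0 x, q (2 * i + 1) t * p (2 * k + 2) t ∂μ) +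
        ∫ t in 0..x, q (2 * i + 2) t * p (2 * k + 1) t := by
  have parts := intervalIntegral_mul_setIntegral_Icc_of_monotoneOn μ (h.monotoneOn_p (2 * k + 1))
    (h.monotoneOn_q (2 * i + 1)) hx
  simp only [← h.p_even, ← h.q_even] at parts
  simp only [mul_comm (q _ _) (p _ _), parts]

theorem sum_antidiagonal_even_eq_odd (h : IsAlternatingPrimitive μ p q) (hx : 0 ≤ x) (m : ℕ) :
    ∑ ik ∈ antidiagonal (m + 1), q (2 * ik.1) x * p (2 * ik.2) x =
      ∑ ik ∈ antidiagonal m, q (2 * ik.1 + 1) x * p (2 * ik.2 + 1) x := by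
  let A : ℕ → ℕ → ℝ := fun i k =>
    ∫ t in Set.Icc 0 x, q (2 * i + 1) t * p (2 * k) t ∂μ
  let B : ℕ → ℕ → ℝ := fun i k => ∫ t in 0..x, q (2 * i) t * p (2 * k + 1) t
  -- `α` and `β` vanish where the corresponding `q_{2i-1}` or `p_{2k-1}` would have index `-1`
  let α : ℕ × ℕ → ℝ := fun | (0, _) => 0 | (i + 1, k) => A i k
  let β : ℕ × ℕ → ℝ := fun | (_, 0) => 0 | (i, k + 1) => B i k
  have hsplit :
      ∀ ik ∈ antidiagonal (m + 1), q (2 * ik.1) x * p (2 * ik.2) x = α ik + β ik := by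
    rintro ⟨_ | i, _ | k⟩ hik
    · simp at hik
    · simp [α, β, B, h.q_zero, mul_add, h.p_even]
    · simp [α, β, A, h.p_zero, mul_add, h.q_even]
    · exact h.q_even_mul_p_even hx i k
  calc _ = ∑ ik ∈ antidiagonal (m + 1), α ik + ∑ ik ∈ antidiagonal (m + 1), β ik := by
        rw [← sum_add_distrib]; exact sum_congr rfl hsplit
    _ = ∑ ik ∈ antidiagonal m, (A ik.1 ik.2 + B ik.1 ik.2) := by
        rw [Nat.sum_antidiagonal_succ, Nat.sum_antidiagonal_succ' (f := β), sum_add_distrib]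
        simp [α, β]
    _ = _ := sum_congr rfl fun ik _ => (h.q_odd_mul_p_odd hx ik.1 ik.2).symm

end IsAlternatingPrimitive

namespace Finset

theorem sum_range_two_mul_add_one {M : Type*} [AddCommMonoid M] (c : ℕ → M) (n : ℕ) :
    ∑ j ∈ range (2 * n + 1), c j =
      ∑ j ∈ range (n + 1), c (2 * j) + ∑ j ∈ range n, c (2 * j + 1) := by
  induction n with
  | zero => simp
  | succ n ih =>
    rw [show 2 * (n + 1) + 1 = 2 * n + 1 + 1 + 1 by ring, sum_range_succ, sum_range_succ, ih,
      sum_range_succ (fun j => c (2 * j)) (n + 1), sum_range_succ (fun j => c (2 * j + 1)) n,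
      show 2 * (n + 1) = 2 * n + 1 + 1 by ring]
    abel

theorem sum_range_alternating_eq_sub {R : Type*} [CommRing R] (F : ℕ → ℕ → R) (n : ℕ) :
    ∑ j ∈ range (2 * (n + 1) + 1), (-1) ^ j * F j (2 * (n + 1) - j) =
      ∑ ik ∈ antidiagonal (n + 1), F (2 * ik.1) (2 * ik.2) -
        ∑ ik ∈ antidiagonal n, F (2 * ik.1 + 1) (2 * ik.2 + 1) := by
  rw [sum_range_two_mul_add_one,
    Nat.sum_antidiagonal_eq_sum_range_succ (fun i k => F (2 * i) (2 * k)),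
    Nat.sum_antidiagonal_eq_sum_range_succ (fun i k => F (2 * i + 1) (2 * k + 1)), sub_eq_add_neg,
    ← sum_neg_distrib]
  congr 1 <;> refine sum_congr rfl fun j hj => ?_ <;> rw [mem_range] at hj
  · rw [pow_mul, neg_one_sq, one_pow, one_mul,
      show 2 * (n + 1) - 2 * j = 2 * (n + 1 - j) by omega]
  · rw [pow_succ, pow_mul, neg_one_sq, one_pow, one_mul, neg_one_mul,
      show 2 * (n + 1) - (2 * j + 1) = 2 * (n - j) + 1 by omega]

end Finset

theorem stmt_5_general
    (μ : Measure ℝ) [IsProbabilityMeasure μ] [NullSingletonClass μ]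
    (p q : ℕ → ℝ → ℝ)
    (hp0 : ∀ x : ℝ, p 0 x = 1) (hq0 : ∀ x : ℝ, q 0 x = 1)
    (hpodd : ∀ (n : ℕ) (x : ℝ), p (2*n+1) x = ∫ t in Set.Icc (0:ℝ) x, p (2*n) t ∂μ)
    (hpeven : ∀ (n : ℕ) (x : ℝ), p (2*n+2) x = ∫ t in (0:ℝ)..x, p (2*n+1) t)
    (hqodd : ∀ (n : ℕ) (x : ℝ), q (2*n+1) x = ∫ t in (0:ℝ)..x, q (2*n) t)
    (hqeven : ∀ (n : ℕ) (x : ℝ), q (2*n+2) x = ∫ t in Set.Icc (0:ℝ) x, q (2*n+1) t ∂μ) :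
    ∀ n : ℕ, 1 ≤ n → ∀ x ∈ Set.Icc (0:ℝ) 1,
      ∑ j ∈ Finset.range (2*n+1), (-1:ℝ)^j * q j x * p (2*n-j) x = 0 := by
  intro n hn x hx
  obtain ⟨m, rfl⟩ := Nat.exists_eq_add_of_le' hn
  have h : IsAlternatingPrimitive μ p q := ⟨hp0, hq0, hpodd, hpeven, hqodd, hqeven⟩
  simp only [mul_assoc]
  rw [Finset.sum_range_alternating_eq_sub (fun j l => q j x * p l x),
    h.sum_antidiagonal_even_eq_odd hx.1, sub_self]

theorem stmt_5
    (μ : Measure ℝ) [IsProbabilityMeasure μ] [NullSingletonClass μ]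
    (hsupp : μ (Set.Icc (0:ℝ) 1)ᶜ = 0)
    (p q : ℕ → ℝ → ℝ)
    (hp0 : ∀ x : ℝ, p 0 x = 1) (hq0 : ∀ x : ℝ, q 0 x = 1)
    (hpodd : ∀ (n : ℕ) (x : ℝ), p (2*n+1) x = ∫ t in Set.Icc (0:ℝ) x, p (2*n) t ∂μ)
    (hpeven : ∀ (n : ℕ) (x : ℝ), p (2*n+2) x = ∫ t in (0:ℝ)..x, p (2*n+1) t)
    (hqodd : ∀ (n : ℕ) (x : ℝ), q (2*n+1) x = ∫ t in (0:ℝ)..x, q (2*n) t)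
    (hqeven : ∀ (n : ℕ) (x : ℝ), q (2*n+2) x = ∫ t in Set.Icc (0:ℝ) x, q (2*n+1) t ∂μ) :
    ∀ n : ℕ, 1 ≤ n → ∀ x ∈ Set.Icc (0:ℝ) 1,
      ∑ j ∈ Finset.range (2*n+1), (-1:ℝ)^j * q j x * p (2*n-j) x = 0 :=
  stmt_5_general μ p q hp0 hq0 hpodd hpeven hqodd hqeven
end

section
/- For all x ∈ [0,1] and z ∈ ℝ the generalized trigonometric identity c_{μ,λ}(z,x)·c_{λ,μ}(z,x) + s_{λ,μ}(z,x)·s_{μ,λ}(z,x) = 1 holds. -/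
/-!
Multiplying out the series (absolutely convergent, since on `[0, 1]` the functions `p (2n)`,
`p (2n+1)`, `q (2n)`, `q (2n+1)` are bounded by `1 / n!`), the coefficient of
`(-1)^(n+1) z^(2n+2)` in `Cq Cp + Sq Sp` is `∑ q_{2k} p_{2(n+1-k)} - ∑ q_{2k+1} p_{2(n-k)+1}`.
For a `ν₁`-primitive `F` of `f` and a `ν₂`-primitive `G` of `g` on `[0, x]`, Fubini gives
`F x * G x = ∫ f G dν₁ + ∫ F g dν₂` as soon as `ν₁` has no atoms. Applied to every product in
both sums, this splits them into the same integrals, so every coefficient but the constant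
term `1` vanishes.
-/

open MeasureTheory Set

theorem setIntegral_Icc_indicator_Iic {ν : Measure ℝ} {g : ℝ → ℝ} {x t : ℝ} (ht : t ∈ Icc 0 x) :
    ∫ s in Icc 0 x, (Iic t).indicator g s ∂ν = ∫ s in Icc 0 t, g s ∂ν := by
  have h : Icc 0 x ∩ Iic t = Icc 0 t := by
    ext s; simp only [mem_inter_iff, mem_Icc, mem_Iic]; constructor <;> intro h <;> grind
  rw [setIntegral_indicator measurableSet_Iic, h]

theorem setIntegral_Icc_indicator_Iio {ν : Measure ℝ} [NullSingletonClass ν] {f : ℝ → ℝ}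
    {x s : ℝ} (hs : s ∈ Icc 0 x) :
    ∫ t in Icc 0 x, (Iio s).indicator f t ∂ν = ∫ t in Icc 0 s, f t ∂ν := by
  have h : Icc 0 x ∩ Iio s = Ico 0 s := by
    ext t; simp only [mem_inter_iff, mem_Icc, mem_Iio, mem_Ico]; constructor <;> intro h <;> grind
  rw [setIntegral_indicator measurableSet_Iio, h, setIntegral_congr_set Ico_ae_eq_Icc]

theorem primitive_mul_primitive {ν₁ ν₂ : Measure ℝ} [SFinite ν₁] [SFinite ν₂]
    [NullSingletonClass ν₁] {f g F G : ℝ → ℝ} {x : ℝ} (hx : 0 ≤ x)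
    (hf : IntegrableOn f (Icc 0 x) ν₁) (hg : IntegrableOn g (Icc 0 x) ν₂)
    (hF : ∀ t ∈ Icc 0 x, F t = ∫ s in Icc 0 t, f s ∂ν₁)
    (hG : ∀ t ∈ Icc 0 x, G t = ∫ s in Icc 0 t, g s ∂ν₂) :
    F x * G x = ∫ t in Icc 0 x, f t * G t ∂ν₁ + ∫ s in Icc 0 x, F s * g s ∂ν₂ := by
  set P := (ν₁.restrict (Icc 0 x)).prod (ν₂.restrict (Icc 0 x))
  have hH : Integrable (fun z : ℝ × ℝ => f z.1 * g z.2) P := hf.mul_prod hg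
  -- The diagonal goes to the `ν₁`-side; on the other side `[0, s)` replaces `[0, s]`, which is
  -- harmless because `ν₁` has no atoms.
  have hS : MeasurableSet {z : ℝ × ℝ | z.2 ≤ z.1} := measurableSet_le measurable_snd measurable_fst
  have hlower : ∫ z in {z : ℝ × ℝ | z.2 ≤ z.1}, f z.1 * g z.2 ∂P
      = ∫ t in Icc 0 x, f t * G t ∂ν₁ := by
    rw [← integral_indicator hS, integral_prod _ (hH.indicator hS)]
    refine setIntegral_congr_fun measurableSet_Icc fun t ht => ?_
    have hind : ∀ s, {z : ℝ × ℝ | z.2 ≤ z.1}.indicator (fun z => f z.1 * g z.2) (t, s)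
        = f t * (Iic t).indicator g s := by
      intro s; by_cases h : s ≤ t <;> simp [indicator, h]
    simp only [hind, integral_const_mul, setIntegral_Icc_indicator_Iic ht, hG t ht]
  have hupper : ∫ z in {z : ℝ × ℝ | z.2 ≤ z.1}ᶜ, f z.1 * g z.2 ∂P
      = ∫ s in Icc 0 x, F s * g s ∂ν₂ := by
    rw [← integral_indicator hS.compl, integral_prod_symm _ (hH.indicator hS.compl)]
    refine setIntegral_congr_fun measurableSet_Icc fun s hs => ?_
    have hind : ∀ t, {z : ℝ × ℝ | z.2 ≤ z.1}ᶜ.indicator (fun z => f z.1 * g z.2) (t, s)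
        = (Iio s).indicator f t * g s := by
      intro t; by_cases h : t < s <;> simp [indicator, h]
    simp only [hind, integral_mul_const, setIntegral_Icc_indicator_Iio hs, hF s hs]
  rw [hF x ⟨hx, le_rfl⟩, hG x ⟨hx, le_rfl⟩, ← integral_prod_mul, ← integral_add_compl hS hH,
    hlower, hupper]

theorem monotoneOn_primitive {ν : Measure ℝ} [IsFiniteMeasureOnCompacts ν] {f F : ℝ → ℝ}
    (hf : MonotoneOn f (Ici 0)) (hf0 : 0 ≤ f 0)
    (hF : ∀ x, 0 ≤ x → F x = ∫ t in Icc 0 x, f t ∂ν) :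
    MonotoneOn F (Ici 0) ∧ 0 ≤ F 0 := by
  have hpos : ∀ t ∈ Ici (0 : ℝ), 0 ≤ f t := fun t ht => hf0.trans (hf self_mem_Ici ht ht)
  refine ⟨fun x hx y hy hxy => ?_, ?_⟩
  · rw [hF x hx, hF y hy]
    refine setIntegral_mono_set ((hf.mono Icc_subset_Ici_self).integrableOn_isCompact isCompact_Icc)
      ?_ (Icc_subset_Icc_right hxy).eventuallyLE
    filter_upwards [ae_restrict_mem measurableSet_Icc] with t ht using hpos t ht.1
  · rw [hF 0 le_rfl]
    exact setIntegral_nonneg measurableSet_Icc fun t ht => hpos t ht.1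

theorem setIntegral_Icc_le_of_monotoneOn {ν : Measure ℝ} [IsProbabilityMeasure ν] {f : ℝ → ℝ}
    (hf : MonotoneOn f (Ici 0)) (hf0 : 0 ≤ f 0) {y : ℝ} (hy : 0 ≤ y) :
    ∫ t in Icc 0 y, f t ∂ν ≤ f y :=
  calc ∫ t in Icc 0 y, f t ∂ν
      ≤ ∫ _ in Icc 0 y, f y ∂ν :=
        setIntegral_mono_on ((hf.mono Icc_subset_Ici_self).integrableOn_isCompact isCompact_Icc)
          (integrableOn_const (measure_ne_top _ _)) measurableSet_Icc
          fun t ht => hf ht.1 hy ht.2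
    _ = ν.real (Icc 0 y) * f y := by rw [setIntegral_const, smul_eq_mul]
    _ ≤ f y := mul_le_of_le_one_left (hf0.trans (hf self_mem_Ici hy hy)) measureReal_le_one

theorem setIntegral_Icc_le_pow_div_factorial {f : ℝ → ℝ} {n : ℕ} {y : ℝ} (hy : 0 ≤ y)
    (hf : IntegrableOn f (Icc 0 y)) (hle : ∀ t ∈ Icc 0 y, f t ≤ t ^ n / n.factorial) :
    ∫ t in Icc 0 y, f t ≤ y ^ (n + 1) / (n + 1).factorial :=
  calc ∫ t in Icc 0 y, f t
      ≤ ∫ t in Icc 0 y, t ^ n / n.factorial :=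
        setIntegral_mono_on hf ((continuous_pow n).div_const _).integrableOn_Icc
          measurableSet_Icc hle
    _ = y ^ (n + 1) / (n + 1).factorial := by
        rw [integral_Icc_eq_integral_Ioc, ← intervalIntegral.integral_of_le hy,
          intervalIntegral.integral_div, integral_pow, Nat.factorial_succ]
        push_cast
        field_simp
        ring

theorem Finset.sum_range_add_two_eq_of_telescope {M : Type*} [AddCommMonoid M] {c A B : ℕ → M}
    (n : ℕ) (h0 : c 0 = A 0) (hsucc : ∀ k < n, c (k + 1) = B k + A (k + 1))
    (hlast : c (n + 1) = B n) :
    ∑ k ∈ Finset.range (n + 2), c k = ∑ k ∈ Finset.range (n + 1), (A k + B k) := by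
  rw [Finset.sum_range_succ, Finset.sum_range_succ', Finset.sum_congr rfl fun k hk =>
    hsucc k (Finset.mem_range.mp hk), Finset.sum_add_distrib, Finset.sum_add_distrib,
    Finset.sum_range_succ' A, Finset.sum_range_succ B, h0, hlast]
  abel

structure IsAlternatingPrimitive_s6 (ν₁ ν₂ : Measure ℝ) (p : ℕ → ℝ → ℝ) : Prop where
  zero : ∀ x, p 0 x = 1
  odd : ∀ n x, 0 ≤ x → p (2 * n + 1) x = ∫ t in Icc 0 x, p (2 * n) t ∂ν₁
  even : ∀ n x, 0 ≤ x → p (2 * n + 2) x = ∫ t in Icc 0 x, p (2 * n + 1) t ∂ν₂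

namespace IsAlternatingPrimitive_s6

variable {ν₁ ν₂ ν μ : Measure ℝ} {p q : ℕ → ℝ → ℝ} {x : ℝ}

theorem monotoneOn [IsFiniteMeasureOnCompacts ν₁] [IsFiniteMeasureOnCompacts ν₂]
    (hp : IsAlternatingPrimitive_s6 ν₁ ν₂ p) (m : ℕ) : MonotoneOn (p m) (Ici 0) ∧ 0 ≤ p m 0 := by
  induction m with
  | zero => exact ⟨fun x _ y _ _ => by rw [hp.zero, hp.zero], by rw [hp.zero]; exact zero_le_one⟩
  | succ m ih =>
    rcases Nat.even_or_odd' m with ⟨n, rfl | rfl⟩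
    · exact monotoneOn_primitive ih.1 ih.2 (hp.odd n)
    · exact monotoneOn_primitive ih.1 ih.2 (hp.even n)

theorem nonneg [IsFiniteMeasureOnCompacts ν₁] [IsFiniteMeasureOnCompacts ν₂]
    (hp : IsAlternatingPrimitive_s6 ν₁ ν₂ p) (m : ℕ) (hx : 0 ≤ x) : 0 ≤ p m x :=
  (hp.monotoneOn m).2.trans ((hp.monotoneOn m).1 self_mem_Ici hx hx)

theorem integrableOn [IsFiniteMeasureOnCompacts ν₁] [IsFiniteMeasureOnCompacts ν₂]
    (hp : IsAlternatingPrimitive_s6 ν₁ ν₂ p) (m : ℕ) (ν : Measure ℝ) [IsFiniteMeasureOnCompacts ν]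
    (y : ℝ) : IntegrableOn (p m) (Icc 0 y) ν :=
  ((hp.monotoneOn m).1.mono Icc_subset_Ici_self).integrableOn_isCompact isCompact_Icc

theorem apply_two_mul_le [IsProbabilityMeasure ν] (hp : IsAlternatingPrimitive_s6 ν volume p)
    (n : ℕ) {y : ℝ} (hy : 0 ≤ y) : p (2 * n) y ≤ y ^ n / n.factorial := by
  induction n generalizing y with
  | zero => simp [hp.zero]
  | succ n ih =>
    rw [show 2 * (n + 1) = 2 * n + 2 by ring, hp.even n y hy]
    refine setIntegral_Icc_le_pow_div_factorial hy (hp.integrableOn _ _ _) fun t ht => ?_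
    rw [hp.odd n t ht.1]
    exact (setIntegral_Icc_le_of_monotoneOn (hp.monotoneOn _).1 (hp.monotoneOn _).2 ht.1).trans
      (ih ht.1)

theorem apply_two_mul_add_one_le [IsProbabilityMeasure ν]
    (hq : IsAlternatingPrimitive_s6 volume ν q) (n : ℕ) {y : ℝ} (hy : 0 ≤ y) :
    q (2 * n + 1) y ≤ y ^ (n + 1) / (n + 1).factorial := by
  induction n generalizing y with
  | zero =>
    rw [hq.odd 0 y hy]
    exact setIntegral_Icc_le_pow_div_factorial hy (hq.integrableOn _ _ _) fun t _ => by
      simp [hq.zero]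
  | succ n ih =>
    rw [hq.odd (n + 1) y hy]
    refine setIntegral_Icc_le_pow_div_factorial hy (hq.integrableOn _ _ _) fun t ht => ?_
    rw [show 2 * (n + 1) = 2 * n + 2 by ring, hq.even n t ht.1]
    exact (setIntegral_Icc_le_of_monotoneOn (hq.monotoneOn _).1 (hq.monotoneOn _).2 ht.1).trans
      (ih ht.1)

theorem abs_apply_le_inv_factorial [IsProbabilityMeasure ν]
    (hp : IsAlternatingPrimitive_s6 ν volume p) (hx : x ∈ Icc 0 1) (n : ℕ) :
    |p (2 * n) x| ≤ 1 / n.factorial ∧ |p (2 * n + 1) x| ≤ 1 / n.factorial := by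
  have heven : p (2 * n) x ≤ 1 / n.factorial :=
    (hp.apply_two_mul_le n hx.1).trans (by gcongr; exact pow_le_one₀ hx.1 hx.2)
  have hodd : p (2 * n + 1) x ≤ p (2 * n) x := by
    rw [hp.odd n x hx.1]
    exact setIntegral_Icc_le_of_monotoneOn (hp.monotoneOn _).1 (hp.monotoneOn _).2 hx.1
  rw [abs_of_nonneg (hp.nonneg _ hx.1), abs_of_nonneg (hp.nonneg _ hx.1)]
  exact ⟨heven, hodd.trans heven⟩

theorem abs_apply_le_inv_factorial' [IsProbabilityMeasure ν]
    (hq : IsAlternatingPrimitive_s6 volume ν q) (hx : x ∈ Icc 0 1) (n : ℕ) :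
    |q (2 * n) x| ≤ 1 / n.factorial ∧ |q (2 * n + 1) x| ≤ 1 / n.factorial := by
  have hodd : ∀ n, q (2 * n + 1) x ≤ 1 / (n + 1).factorial := fun n =>
    (hq.apply_two_mul_add_one_le n hx.1).trans (by gcongr; exact pow_le_one₀ hx.1 hx.2)
  rw [abs_of_nonneg (hq.nonneg _ hx.1), abs_of_nonneg (hq.nonneg _ hx.1)]
  refine ⟨?_, (hodd n).trans (one_div_le_one_div_of_le (by positivity)
    (by exact_mod_cast Nat.factorial_le n.le_succ))⟩
  cases n with
  | zero => simp [hq.zero]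
  | succ m =>
    rw [show 2 * (m + 1) = 2 * m + 2 by ring, hq.even m x hx.1]
    exact (setIntegral_Icc_le_of_monotoneOn (hq.monotoneOn _).1 (hq.monotoneOn _).2 hx.1).trans
      (hodd m)

theorem sum_mul_even_eq_sum_mul_odd [IsFiniteMeasure μ] [NullSingletonClass μ]
    (hp : IsAlternatingPrimitive_s6 μ volume p) (hq : IsAlternatingPrimitive_s6 volume μ q)
    (hx : 0 ≤ x) (n : ℕ) :
    ∑ k ∈ Finset.range (n + 2), q (2 * k) x * p (2 * (n + 1 - k)) x
      = ∑ k ∈ Finset.range (n + 1), q (2 * k + 1) x * p (2 * (n - k) + 1) x := by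
  let A k := ∫ t in Icc 0 x, q (2 * k) t * p (2 * (n - k) + 1) t
  let B k := ∫ t in Icc 0 x, q (2 * k + 1) t * p (2 * (n - k)) t ∂μ
  have hodd : ∀ k, q (2 * k + 1) x * p (2 * (n - k) + 1) x = A k + B k := fun k =>
    primitive_mul_primitive hx (hq.integrableOn _ _ _) (hp.integrableOn _ _ _)
      (fun t ht => hq.odd k t ht.1) (fun t ht => hp.odd (n - k) t ht.1)
  rw [Finset.sum_congr rfl fun k _ => hodd k]
  refine Finset.sum_range_add_two_eq_of_telescope n ?_ (fun k hk => ?_) ?_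
  · simp only [mul_zero, Nat.sub_zero, hq.zero, one_mul, A]
    exact hp.even n x hx
  · obtain ⟨l, rfl⟩ : ∃ l, n = k + 1 + l := ⟨n - (k + 1), by omega⟩
    have h₁ : k + 1 + l + 1 - (k + 1) = l + 1 := by omega
    have h₂ : k + 1 + l - k = l + 1 := by omega
    have h₃ : k + 1 + l - (k + 1) = l := by omega
    simp only [A, B, h₁, h₂, h₃]
    exact primitive_mul_primitive hx (hq.integrableOn _ _ _) (hp.integrableOn _ _ _)
      (fun t ht => hq.even k t ht.1) (fun t ht => hp.even l t ht.1)
  · show q (2 * (n + 1)) x * p (2 * (n + 1 - (n + 1))) x = B n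
    simp only [Nat.sub_self, mul_zero, hp.zero, mul_one, B]
    exact hq.even n x hx

end IsAlternatingPrimitive_s6

theorem summable_norm_neg_one_pow_mul_pow_mul (z : ℝ) (j : ℕ) {c : ℕ → ℝ}
    (hc : ∀ n, |c n| ≤ 1 / n.factorial) :
    Summable fun n => ‖(-1) ^ n * z ^ (2 * n + j) * c n‖ := by
  refine Summable.of_nonneg_of_le (fun n => norm_nonneg _) (fun n => ?_)
    ((Real.summable_pow_div_factorial (z ^ 2)).mul_left (|z| ^ j))
  calc ‖(-1) ^ n * z ^ (2 * n + j) * c n‖ = |z| ^ j * (z ^ 2) ^ n * |c n| := by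
        simp only [Real.norm_eq_abs, abs_mul, abs_pow, abs_neg, abs_one, one_pow, one_mul]
        rw [pow_add, pow_mul, sq_abs]
        ring
    _ ≤ |z| ^ j * (z ^ 2) ^ n * (1 / n.factorial) := by gcongr; exact hc n
    _ = |z| ^ j * ((z ^ 2) ^ n / n.factorial) := by ring

theorem hasSum_neg_one_pow_mul_pow_mul_sum_range (z : ℝ) (j : ℕ) {u v : ℕ → ℝ}
    (hu : ∀ n, |u n| ≤ 1 / n.factorial) (hv : ∀ n, |v n| ≤ 1 / n.factorial) :
    HasSum (fun n => (-1) ^ n * z ^ (2 * n + 2 * j) * ∑ k ∈ Finset.range (n + 1), u k * v (n - k))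
      ((∑' n, (-1) ^ n * z ^ (2 * n + j) * u n) * ∑' n, (-1) ^ n * z ^ (2 * n + j) * v n) := by
  have hU := summable_norm_neg_one_pow_mul_pow_mul z j hu
  have hV := summable_norm_neg_one_pow_mul_pow_mul z j hv
  rw [tsum_mul_tsum_eq_tsum_sum_antidiagonal_of_summable_norm hU hV]
  refine (summable_norm_sum_mul_antidiagonal_of_summable_norm hU hV).of_norm.hasSum.congr_fun
    fun n => ?_
  rw [Finset.Nat.sum_antidiagonal_eq_sum_range_succ_mk, Finset.mul_sum]
  refine Finset.sum_congr rfl fun k hk => ?_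
  obtain ⟨l, rfl⟩ := Nat.exists_eq_add_of_le (Nat.lt_succ_iff.mp (Finset.mem_range.mp hk))
  simp only [Nat.add_sub_cancel_left]
  ring

theorem add_eq_of_hasSum_of_succ {z a b : ℝ} {E O : ℕ → ℝ}
    (ha : HasSum (fun n => (-1) ^ n * z ^ (2 * n) * E n) a)
    (hb : HasSum (fun n => (-1) ^ n * z ^ (2 * n + 2) * O n) b) (h : ∀ n, E (n + 1) = O n) :
    a + b = E 0 := by
  have ha' := (hasSum_nat_add_iff' 1).mpr ha
  have hshift : ∀ n, (-1) ^ (n + 1) * z ^ (2 * (n + 1)) * E (n + 1)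
      = -((-1) ^ n * z ^ (2 * n + 2) * O n) := fun n => by rw [h]; ring
  simp only [hshift, Finset.sum_range_one, pow_zero, mul_zero, one_mul] at ha'
  linarith [(ha'.add hb).unique (by simpa only [neg_add_cancel] using hasSum_zero)]

theorem stmt_6_general
    (μ : Measure ℝ) [IsProbabilityMeasure μ] [NullSingletonClass μ]
    (p q : ℕ → ℝ → ℝ)
    (hp0 : ∀ x : ℝ, p 0 x = 1) (hq0 : ∀ x : ℝ, q 0 x = 1)
    (hpodd : ∀ (n : ℕ) (x : ℝ), p (2*n+1) x = ∫ t in Set.Icc (0:ℝ) x, p (2*n) t ∂μ)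
    (hpeven : ∀ (n : ℕ) (x : ℝ), p (2*n+2) x = ∫ t in (0:ℝ)..x, p (2*n+1) t)
    (hqodd : ∀ (n : ℕ) (x : ℝ), q (2*n+1) x = ∫ t in (0:ℝ)..x, q (2*n) t)
    (hqeven : ∀ (n : ℕ) (x : ℝ), q (2*n+2) x = ∫ t in Set.Icc (0:ℝ) x, q (2*n+1) t ∂μ)
    (Sp Sq Cp Cq : ℝ → ℝ → ℝ)
    (hSp : ∀ (z x : ℝ), Sp z x = ∑' n : ℕ, (-1:ℝ)^n * z^(2*n+1) * p (2*n+1) x)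
    (hSq : ∀ (z x : ℝ), Sq z x = ∑' n : ℕ, (-1:ℝ)^n * z^(2*n+1) * q (2*n+1) x)
    (hCp : ∀ (z x : ℝ), Cp z x = ∑' n : ℕ, (-1:ℝ)^n * z^(2*n) * p (2*n) x)
    (hCq : ∀ (z x : ℝ), Cq z x = ∑' n : ℕ, (-1:ℝ)^n * z^(2*n) * q (2*n) x) :
    ∀ x ∈ Set.Icc (0:ℝ) 1, ∀ z : ℝ,
      Cq z x * Cp z x + Sq z x * Sp z x = 1 := by
  intro x hx z
  have hp : IsAlternatingPrimitive_s6 μ volume p := ⟨hp0, fun n t _ => hpodd n t, fun n t ht => by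
    rw [hpeven, intervalIntegral.integral_of_le ht, integral_Icc_eq_integral_Ioc]⟩
  have hq : IsAlternatingPrimitive_s6 volume μ q := ⟨hq0, fun n t ht => by
    rw [hqodd, intervalIntegral.integral_of_le ht, integral_Icc_eq_integral_Ioc],
    fun n t _ => hqeven n t⟩
  have hbp := hp.abs_apply_le_inv_factorial hx
  have hbq := hq.abs_apply_le_inv_factorial' hx
  have hC := hasSum_neg_one_pow_mul_pow_mul_sum_range z 0 (fun n => (hbq n).1) (fun n => (hbp n).1)
  have hS := hasSum_neg_one_pow_mul_pow_mul_sum_range z 1 (fun n => (hbq n).2) (fun n => (hbp n).2)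
  rw [hCq, hCp, hSq, hSp]
  simpa [hp0, hq0] using add_eq_of_hasSum_of_succ hC hS (hp.sum_mul_even_eq_sum_mul_odd hq hx.1)

theorem stmt_6
    (μ : Measure ℝ) [IsProbabilityMeasure μ] [NullSingletonClass μ]
    (hsupp : μ (Set.Icc (0:ℝ) 1)ᶜ = 0)
    (p q : ℕ → ℝ → ℝ)
    (hp0 : ∀ x : ℝ, p 0 x = 1) (hq0 : ∀ x : ℝ, q 0 x = 1)
    (hpodd : ∀ (n : ℕ) (x : ℝ), p (2*n+1) x = ∫ t in Set.Icc (0:ℝ) x, p (2*n) t ∂μ)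
    (hpeven : ∀ (n : ℕ) (x : ℝ), p (2*n+2) x = ∫ t in (0:ℝ)..x, p (2*n+1) t)
    (hqodd : ∀ (n : ℕ) (x : ℝ), q (2*n+1) x = ∫ t in (0:ℝ)..x, q (2*n) t)
    (hqeven : ∀ (n : ℕ) (x : ℝ), q (2*n+2) x = ∫ t in Set.Icc (0:ℝ) x, q (2*n+1) t ∂μ)
    (Sp Sq Cp Cq : ℝ → ℝ → ℝ)
    (hSp : ∀ (z x : ℝ), Sp z x = ∑' n : ℕ, (-1:ℝ)^n * z^(2*n+1) * p (2*n+1) x)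
    (hSq : ∀ (z x : ℝ), Sq z x = ∑' n : ℕ, (-1:ℝ)^n * z^(2*n+1) * q (2*n+1) x)
    (hCp : ∀ (z x : ℝ), Cp z x = ∑' n : ℕ, (-1:ℝ)^n * z^(2*n) * p (2*n) x)
    (hCq : ∀ (z x : ℝ), Cq z x = ∑' n : ℕ, (-1:ℝ)^n * z^(2*n) * q (2*n) x) :
    ∀ x ∈ Set.Icc (0:ℝ) 1, ∀ z : ℝ,
      Cq z x * Cp z x + Sq z x * Sp z x = 1 :=
  stmt_6_general μ p q hp0 hq0 hpodd hpeven hqodd hqeven Sp Sq Cp Cq hSp hSq hCp hCq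
end

section
/- Suppose μ is symmetric. Then for every n ∈ ℕ with n ≥ 1: Σ_{k=0}^n p_{2k} p_{2n−2k+1} = Σ_{k=0}^n p_{2k+1} q_{2n−2k}, where p_j := p_j(1) and q_j := q_j(1). -/
/-!
Both `p_{2m}(1)` and `q_{2m}(1)` are iterated integrals over the simplex
`0 ≤ t₁ ≤ ⋯ ≤ t_{2m} ≤ 1` with respect to measures alternating between `μ` and Lebesgue measure
on `[0,1]`, taken in opposite orders. The reflection `t ↦ 1 - t` preserves both measures and
reverses the order of the variables, so `p_{2m}(1) = q_{2m}(1)`, and the identity follows by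
reindexing `k ↦ n - k` on the left. The reversal is done one variable at a time: in
`∫ F_a(t) G_b(1 - t) dν(t)`, with `F_a`, `G_b` iterated primitives, Fubini on `{s ≤ t}` moves the
outermost integration of `G_b` over to `F_a`.
-/

open MeasureTheory Set

theorem integral_mul_setIntegral_Ici_eq {α β : Measure ℝ} [SFinite α] [SFinite β] {f g : ℝ → ℝ}
    (hf : Integrable f α) (hg : Integrable g β) :
    ∫ s, f s * ∫ t in Ici s, g t ∂β ∂α = ∫ t, (∫ s in Iic t, f s ∂α) * g t ∂β := by
  set F : ℝ × ℝ → ℝ := {z : ℝ × ℝ | z.1 ≤ z.2}.indicator fun z => f z.1 * g z.2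
  have hF : Integrable F (α.prod β) :=
    (hf.mul_prod hg).indicator (measurableSet_le measurable_fst measurable_snd)
  calc ∫ s, f s * ∫ t in Ici s, g t ∂β ∂α = ∫ s, ∫ t, F (s, t) ∂β ∂α := by
        congr 1; ext s
        rw [← integral_const_mul, ← integral_indicator measurableSet_Ici]
        rfl
    _ = ∫ t, ∫ s, F (s, t) ∂α ∂β := integral_integral_swap hF
    _ = ∫ t, (∫ s in Iic t, f s ∂α) * g t ∂β := by
        congr 1; ext t
        rw [← integral_mul_const, ← integral_indicator measurableSet_Iic]
        rfl

theorem integrable_of_mem_Icc {κ : Measure ℝ} [IsFiniteMeasure κ] {f : ℝ → ℝ}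
    (hf : Measurable f) (hf01 : ∀ x, f x ∈ Icc (0:ℝ) 1) : Integrable f κ :=
  .of_bound hf.aestronglyMeasurable 1 <| ae_of_all _ fun x => by
    rw [Real.norm_eq_abs, abs_le]; exact ⟨by linarith [(hf01 x).1], (hf01 x).2⟩

theorem setIntegral_Icc_zero_mem_Icc {ν : Measure ℝ} [IsProbabilityMeasure ν] {f : ℝ → ℝ}
    (hf : Measurable f) (hf01 : ∀ x, f x ∈ Icc (0:ℝ) 1) (x : ℝ) :
    ∫ t in Icc 0 x, f t ∂ν ∈ Icc (0:ℝ) 1 := by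
  refine ⟨setIntegral_nonneg measurableSet_Icc fun t _ => (hf01 t).1, ?_⟩
  calc ∫ t in Icc 0 x, f t ∂ν ≤ ∫ t in Icc 0 x, (1:ℝ) ∂ν :=
        setIntegral_mono (integrable_of_mem_Icc hf hf01).integrableOn integrableOn_const
          fun t => (hf01 t).2
    _ = ν.real (Icc 0 x) := by simp
    _ ≤ 1 := measureReal_le_one

theorem monotone_setIntegral_Icc_zero {ν : Measure ℝ} [IsFiniteMeasure ν] {f : ℝ → ℝ}
    (hf : Measurable f) (hf01 : ∀ x, f x ∈ Icc (0:ℝ) 1) :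
    Monotone fun x => ∫ t in Icc 0 x, f t ∂ν := fun _ _ hxy =>
  setIntegral_mono_set (integrable_of_mem_Icc hf hf01).integrableOn
    (ae_of_all _ fun t => (hf01 t).1) (Icc_subset_Icc_right hxy).eventuallyLE

theorem measurePreserving_one_sub_of_measure_Icc {μ : Measure ℝ} [IsFiniteMeasure μ]
    (hsupp : μ (Icc (0:ℝ) 1)ᶜ = 0)
    (hsym : ∀ x ∈ Icc (0:ℝ) 1, μ (Icc 0 x) = μ (Icc (1 - x) 1)) :
    MeasurePreserving (fun t : ℝ => 1 - t) μ μ := by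
  refine ⟨by fun_prop, Measure.ext_of_Iic _ _ fun a => ?_⟩
  rw [Measure.map_apply (by fun_prop) measurableSet_Iic, ← measure_inter_conull hsupp,
    ← measure_inter_conull (s := Iic a) hsupp]
  have hleft : Iic a ∩ Icc 0 1 = Icc 0 (min a 1) := by
    ext t; simp only [mem_inter_iff, mem_Iic, mem_Icc, le_min_iff]; tauto
  have hright : (fun t : ℝ => 1 - t) ⁻¹' Iic a ∩ Icc 0 1 = Icc (1 - min a 1) 1 := by
    ext t
    simp only [mem_inter_iff, mem_preimage, mem_Iic, mem_Icc, sub_le_comm (a := (1:ℝ)), le_min_iff]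
    grind
  rw [hleft, hright]
  rcases lt_or_ge (min a 1) 0 with h | h
  · rw [Icc_eq_empty (by linarith), Icc_eq_empty (by linarith)]
  · exact (hsym _ ⟨h, min_le_right _ _⟩).symm

structure IsSymmetricUnitMeasure (ν : Measure ℝ) : Prop where
  isProbabilityMeasure : IsProbabilityMeasure ν
  ae_mem_Icc : ∀ᵐ t ∂ν, t ∈ Icc (0:ℝ) 1
  measurePreserving_one_sub : MeasurePreserving (fun t : ℝ => 1 - t) ν ν

theorem isSymmetricUnitMeasure_of_measure_Icc {μ : Measure ℝ} [IsProbabilityMeasure μ]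
    (hsupp : μ (Icc (0:ℝ) 1)ᶜ = 0)
    (hsym : ∀ x ∈ Icc (0:ℝ) 1, μ (Icc 0 x) = μ (Icc (1 - x) 1)) :
    IsSymmetricUnitMeasure μ :=
  ⟨inferInstance, ae_iff.mpr hsupp, measurePreserving_one_sub_of_measure_Icc hsupp hsym⟩

theorem isSymmetricUnitMeasure_volume_Icc :
    IsSymmetricUnitMeasure (volume.restrict (Icc (0:ℝ) 1)) where
  isProbabilityMeasure := ⟨by simp⟩
  ae_mem_Icc := ae_restrict_mem measurableSet_Icc
  measurePreserving_one_sub := by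
    simpa using (volume.measurePreserving_sub_left (1:ℝ)).restrict_preimage
      (measurableSet_Icc (a := (0:ℝ)) (b := 1))

namespace IsSymmetricUnitMeasure

variable {ν : Measure ℝ}

theorem setIntegral_Ici_eq_Icc (hν : IsSymmetricUnitMeasure ν) (f : ℝ → ℝ) (s : ℝ) :
    ∫ t in Ici s, f t ∂ν = ∫ t in Icc s 1, f t ∂ν :=
  setIntegral_congr_set <| Filter.eventuallyEq_set.mpr <| hν.ae_mem_Icc.mono fun t ht => by
    simp [ht.2]

theorem setIntegral_Iic_eq_Icc (hν : IsSymmetricUnitMeasure ν) (f : ℝ → ℝ) (s : ℝ) :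
    ∫ t in Iic s, f t ∂ν = ∫ t in Icc 0 s, f t ∂ν :=
  setIntegral_congr_set <| Filter.eventuallyEq_set.mpr <| hν.ae_mem_Icc.mono fun t ht => by
    simp [ht.1]

theorem setIntegral_Icc_zero_one_sub (hν : IsSymmetricUnitMeasure ν) (f : ℝ → ℝ) (s : ℝ) :
    ∫ t in Icc 0 (1 - s), f t ∂ν = ∫ t in Icc s 1, f (1 - t) ∂ν := by
  simpa using (hν.measurePreserving_one_sub.setIntegral_preimage_emb
    (measurableEmbedding_subLeft 1) f (Icc 0 (1 - s))).symm

end IsSymmetricUnitMeasure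

/-- `iteratedPrimitive [ν₁, …, νₖ] x = ∫_{0 ≤ tₖ ≤ ⋯ ≤ t₁ ≤ x} dνₖ(tₖ) ⋯ dν₁(t₁)`. -/
noncomputable def iteratedPrimitive : List (Measure ℝ) → ℝ → ℝ
  | [] => fun _ => 1
  | ν :: l => fun x => ∫ t in Icc 0 x, iteratedPrimitive l t ∂ν

theorem measurable_iteratedPrimitive_and_mem_Icc :
    ∀ l : List (Measure ℝ), (∀ ν ∈ l, IsProbabilityMeasure ν) →
      Measurable (iteratedPrimitive l) ∧ ∀ x, iteratedPrimitive l x ∈ Icc (0:ℝ) 1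
  | [], _ => ⟨measurable_const, fun _ => by simp [iteratedPrimitive]⟩
  | ν :: l, hl => by
    have := hl ν List.mem_cons_self
    obtain ⟨hmeas, h01⟩ :=
      measurable_iteratedPrimitive_and_mem_Icc l fun κ hκ => hl κ (List.mem_cons_of_mem ν hκ)
    exact ⟨(monotone_setIntegral_Icc_zero hmeas h01).measurable,
      setIntegral_Icc_zero_mem_Icc hmeas h01⟩

theorem integrable_iteratedPrimitive {l : List (Measure ℝ)} (hl : ∀ ν ∈ l, IsProbabilityMeasure ν)
    (κ : Measure ℝ) [IsFiniteMeasure κ] : Integrable (iteratedPrimitive l) κ :=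
  let ⟨hmeas, h01⟩ := measurable_iteratedPrimitive_and_mem_Icc l hl
  integrable_of_mem_Icc hmeas h01

noncomputable def reflectedPairing (a : List (Measure ℝ)) (ν : Measure ℝ) (b : List (Measure ℝ)) :
    ℝ :=
  ∫ t, iteratedPrimitive a t * iteratedPrimitive b (1 - t) ∂ν

theorem reflectedPairing_cons_right {ν ν' : Measure ℝ} (hν : IsSymmetricUnitMeasure ν)
    (hν' : IsSymmetricUnitMeasure ν') {a b : List (Measure ℝ)}
    (ha : ∀ κ ∈ a, IsProbabilityMeasure κ) (hb : ∀ κ ∈ b, IsProbabilityMeasure κ) :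
    reflectedPairing a ν (ν' :: b) = reflectedPairing (ν :: a) ν' b := by
  have := hν.isProbabilityMeasure
  have := hν'.isProbabilityMeasure
  have hb' : Integrable (fun r => iteratedPrimitive b (1 - r)) ν' :=
    hν'.measurePreserving_one_sub.integrable_comp_of_integrable (integrable_iteratedPrimitive hb ν')
  calc reflectedPairing a ν (ν' :: b)
      = ∫ t, iteratedPrimitive a t * ∫ r in Ici t, iteratedPrimitive b (1 - r) ∂ν' ∂ν := by
        simp only [reflectedPairing, iteratedPrimitive, hν'.setIntegral_Icc_zero_one_sub,
          hν'.setIntegral_Ici_eq_Icc]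
    _ = ∫ r, (∫ t in Iic r, iteratedPrimitive a t ∂ν) * iteratedPrimitive b (1 - r) ∂ν' :=
        integral_mul_setIntegral_Ici_eq (integrable_iteratedPrimitive ha ν) hb'
    _ = reflectedPairing (ν :: a) ν' b := by
        simp only [reflectedPairing, iteratedPrimitive, hν.setIntegral_Iic_eq_Icc]

theorem reflectedPairing_append_cons {a b c : List (Measure ℝ)} {ν ν' : Measure ℝ}
    (h : ∀ κ ∈ a ++ ν :: b ++ ν' :: c, IsSymmetricUnitMeasure κ) :
    reflectedPairing a ν (b ++ ν' :: c) = reflectedPairing (b.reverse ++ ν :: a) ν' c := by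
  have hprob : ∀ κ ∈ a ++ ν :: b ++ ν' :: c, IsProbabilityMeasure κ :=
    fun κ hκ => (h κ hκ).isProbabilityMeasure
  induction b generalizing a ν with
  | nil =>
    exact reflectedPairing_cons_right (h ν (by simp)) (h ν' (by simp))
      (fun κ hκ => hprob κ (by simp [hκ])) (fun κ hκ => hprob κ (by simp [hκ]))
  | cons d b ih =>
    rw [List.cons_append, reflectedPairing_cons_right (h ν (by simp)) (h d (by simp))
        (fun κ hκ => hprob κ (by simp [hκ])) (fun κ hκ => hprob κ (by simp [hκ])),
      ih (fun κ hκ => h κ (by simp at hκ ⊢; tauto)) (fun κ hκ => hprob κ (by simp at hκ ⊢; tauto))]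
    simp

theorem iteratedPrimitive_cons_one_eq_reflectedPairing_nil_right {ν : Measure ℝ}
    (hν : IsSymmetricUnitMeasure ν) (a : List (Measure ℝ)) :
    iteratedPrimitive (ν :: a) 1 = reflectedPairing a ν [] := by
  simp only [reflectedPairing, iteratedPrimitive, mul_one,
    Measure.restrict_eq_self_of_ae_mem hν.ae_mem_Icc]

theorem iteratedPrimitive_cons_one_eq_reflectedPairing_nil_left {ν : Measure ℝ}
    (hν : IsSymmetricUnitMeasure ν) (b : List (Measure ℝ)) :
    iteratedPrimitive (ν :: b) 1 = reflectedPairing [] ν b := by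
  rw [iteratedPrimitive_cons_one_eq_reflectedPairing_nil_right hν, reflectedPairing,
    reflectedPairing]
  simp only [iteratedPrimitive, one_mul, mul_one]
  exact (hν.measurePreserving_one_sub.integral_comp (measurableEmbedding_subLeft 1) _).symm

theorem iteratedPrimitive_reverse_one {l : List (Measure ℝ)}
    (hl : ∀ ν ∈ l, IsSymmetricUnitMeasure ν) :
    iteratedPrimitive l.reverse 1 = iteratedPrimitive l 1 := by
  rcases l with _ | ⟨ν, l⟩
  · rfl
  rcases l.eq_nil_or_concat with rfl | ⟨b, ν', rfl⟩
  · rfl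
  have hν := hl ν List.mem_cons_self
  have hν' := hl ν' (by simp)
  rw [iteratedPrimitive_cons_one_eq_reflectedPairing_nil_left hν, List.concat_eq_append,
    reflectedPairing_append_cons (a := []) (c := []) (by simpa using hl),
    ← iteratedPrimitive_cons_one_eq_reflectedPairing_nil_right hν']
  simp

theorem eq_iteratedPrimitive_of_alternating {α β : Measure ℝ} {u : ℕ → ℝ → ℝ}
    (h0 : ∀ x, u 0 x = 1)
    (hodd : ∀ n, ∀ x ∈ Icc (0:ℝ) 1, u (2 * n + 1) x = ∫ t in Icc 0 x, u (2 * n) t ∂α)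
    (heven : ∀ n, ∀ x ∈ Icc (0:ℝ) 1, u (2 * n + 2) x = ∫ t in Icc 0 x, u (2 * n + 1) t ∂β)
    (m : ℕ) :
    ∀ x ∈ Icc (0:ℝ) 1, u (2 * m) x = iteratedPrimitive (List.replicate m [β, α]).flatten x := by
  induction m with
  | zero => exact fun x _ => h0 x
  | succ m ih =>
    intro x hx
    have hsub : ∀ t ∈ Icc 0 x, t ∈ Icc (0:ℝ) 1 := fun t ht => ⟨ht.1, ht.2.trans hx.2⟩
    rw [List.replicate_succ, List.flatten_cons, mul_add_one, heven m x hx]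
    refine setIntegral_congr_fun measurableSet_Icc fun t ht => ?_
    rw [hodd m t (hsub t ht)]
    exact setIntegral_congr_fun measurableSet_Icc fun r hr => ih r (hsub r ⟨hr.1, hr.2.trans ht.2⟩)

theorem intervalIntegral_eq_setIntegral_volume_Icc {f : ℝ → ℝ} {x : ℝ} (hx : x ∈ Icc (0:ℝ) 1) :
    ∫ t in (0:ℝ)..x, f t = ∫ t in Icc 0 x, f t ∂(volume.restrict (Icc 0 1)) := by
  rw [intervalIntegral.integral_of_le hx.1, ← integral_Icc_eq_integral_Ioc,
    Measure.restrict_restrict measurableSet_Icc, Icc_inter_Icc, max_self, min_eq_left hx.2]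

theorem reverse_flatten_replicate_pair {X : Type*} (m : ℕ) (x y : X) :
    (List.replicate m [x, y]).flatten.reverse = (List.replicate m [y, x]).flatten := by
  simp [List.reverse_flatten]

theorem stmt_8_general
    (μ : Measure ℝ) [IsProbabilityMeasure μ]
    (hsupp : μ (Set.Icc (0:ℝ) 1)ᶜ = 0)
    (p q : ℕ → ℝ → ℝ)
    (hp0 : ∀ x : ℝ, p 0 x = 1) (hq0 : ∀ x : ℝ, q 0 x = 1)
    (hpodd : ∀ (n : ℕ) (x : ℝ), p (2*n+1) x = ∫ t in Set.Icc (0:ℝ) x, p (2*n) t ∂μ)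
    (hpeven : ∀ (n : ℕ) (x : ℝ), p (2*n+2) x = ∫ t in (0:ℝ)..x, p (2*n+1) t)
    (hqodd : ∀ (n : ℕ) (x : ℝ), q (2*n+1) x = ∫ t in (0:ℝ)..x, q (2*n) t)
    (hqeven : ∀ (n : ℕ) (x : ℝ), q (2*n+2) x = ∫ t in Set.Icc (0:ℝ) x, q (2*n+1) t ∂μ)
    (hsym : ∀ x ∈ Set.Icc (0:ℝ) 1, μ (Set.Icc (0:ℝ) x) = μ (Set.Icc (1-x) 1)) :
    ∀ n : ℕ, 1 ≤ n →
      ∑ k ∈ Finset.range (n+1), p (2*k) 1 * p (2*n-2*k+1) 1 =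
      ∑ k ∈ Finset.range (n+1), p (2*k+1) 1 * q (2*n-2*k) 1 := by
  intro n _
  have hμ := isSymmetricUnitMeasure_of_measure_Icc hsupp hsym
  have hleb := isSymmetricUnitMeasure_volume_Icc
  have hone : (1:ℝ) ∈ Icc (0:ℝ) 1 := right_mem_Icc.mpr zero_le_one
  have hpq : ∀ m, p (2 * m) 1 = q (2 * m) 1 := fun m => by
    rw [eq_iteratedPrimitive_of_alternating hp0 (fun n x _ => hpodd n x)
        (fun n x hx => (hpeven n x).trans (intervalIntegral_eq_setIntegral_volume_Icc hx)) m 1 hone,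
      eq_iteratedPrimitive_of_alternating hq0
        (fun n x hx => (hqodd n x).trans (intervalIntegral_eq_setIntegral_volume_Icc hx))
        (fun n x _ => hqeven n x) m 1 hone,
      ← iteratedPrimitive_reverse_one, reverse_flatten_replicate_pair]
    simp only [List.mem_flatten, List.mem_replicate]
    rintro κ ⟨_, ⟨-, rfl⟩, hκ⟩
    simp only [List.mem_cons, List.not_mem_nil, or_false] at hκ
    rcases hκ with rfl | rfl <;> assumption
  rw [← Finset.sum_range_reflect]
  refine Finset.sum_congr rfl fun k hk => ?_
  have hkn := Nat.lt_succ_iff.mp (Finset.mem_range.mp hk)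
  rw [show n + 1 - 1 - k = n - k by omega, show 2 * n - 2 * (n - k) + 1 = 2 * k + 1 by omega,
    show 2 * n - 2 * k = 2 * (n - k) by omega, hpq, mul_comm]

theorem stmt_8
    (μ : Measure ℝ) [IsProbabilityMeasure μ] [NullSingletonClass μ]
    (hsupp : μ (Set.Icc (0:ℝ) 1)ᶜ = 0)
    (p q : ℕ → ℝ → ℝ)
    (hp0 : ∀ x : ℝ, p 0 x = 1) (hq0 : ∀ x : ℝ, q 0 x = 1)
    (hpodd : ∀ (n : ℕ) (x : ℝ), p (2*n+1) x = ∫ t in Set.Icc (0:ℝ) x, p (2*n) t ∂μ)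
    (hpeven : ∀ (n : ℕ) (x : ℝ), p (2*n+2) x = ∫ t in (0:ℝ)..x, p (2*n+1) t)
    (hqodd : ∀ (n : ℕ) (x : ℝ), q (2*n+1) x = ∫ t in (0:ℝ)..x, q (2*n) t)
    (hqeven : ∀ (n : ℕ) (x : ℝ), q (2*n+2) x = ∫ t in Set.Icc (0:ℝ) x, q (2*n+1) t ∂μ)
    (hsym : ∀ x ∈ Set.Icc (0:ℝ) 1, μ (Set.Icc (0:ℝ) x) = μ (Set.Icc (1-x) 1)) :
    ∀ n : ℕ, 1 ≤ n →
      ∑ k ∈ Finset.range (n+1), p (2*k) 1 * p (2*n-2*k+1) 1 =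
      ∑ k ∈ Finset.range (n+1), p (2*k+1) 1 * q (2*n-2*k) 1 :=
  stmt_8_general μ hsupp p q hp0 hq0 hpodd hpeven hqodd hqeven hsym
end

section
/- Let F : [0,1] → ℝ and let f be a μ-integrable function such that F(x) = F(0) + ∫_{[0,x]} f dμ for all x ∈ [0,1]. Then for all x ∈ [0,1]: F(r₁x) = F(0) + m₁ ∫_{[0,x]} f(r₁t) dμ(t), and F(1−r₂+r₂x) = F(1−r₂) + m₂ ∫_{[0,x]} f(1−r₂+r₂t) dμ(t). -/
/-! On `(S₁ 0, S₁ x]` the second half `m₂ · (S₂)_*μ` of the self-similarity equation carries no mass,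
since `S₂⁻¹` of that interval lies in `(-∞, 0]`, which `μ` does not charge; so there `μ = m₁ · (S₁)_*μ`,
and the change of variables `t ↦ S₁ t` turns `F (S₁ x) - F (S₁ 0) = ∫_{(S₁ 0, S₁ x]} f dμ` into
`m₁ ∫_{(0, x]} f ∘ S₁ dμ`. The same holds with the roles of `S₁` and `S₂` exchanged, the first half
now vanishing because `S₁⁻¹` of the interval lies in `(1, ∞)`. -/

open MeasureTheory Set

section Support

variable {α : Type*} [LinearOrder α] [MeasurableSpace α] {μ : Measure α} {a b : α}

lemma measure_Iic_eq_zero_of_compl_Icc [NullSingletonClass μ] (h : μ (Icc a b)ᶜ = 0) :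
    μ (Iic a) = 0 := by
  refine measure_mono_null (fun y hy => ?_) (measure_union_null h (measure_singleton a))
  rcases (mem_Iic.mp hy).lt_or_eq with hlt | rfl
  · exact Or.inl fun hy' => hlt.not_ge hy'.1
  · exact Or.inr rfl

lemma measure_Ioi_eq_zero_of_compl_Icc (h : μ (Icc a b)ᶜ = 0) : μ (Ioi b) = 0 :=
  measure_mono_null (fun _ hy hy' => (mem_Ioi.mp hy).not_ge (mem_Icc.mp hy').2) h

end Support

section SelfSimilar

variable {α β E : Type*} [MeasurableSpace α] [MeasurableSpace β]
  [NormedAddCommGroup E] [NormedSpace ℝ E]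

lemma setIntegral_smul_map {S : α → β} (hS : MeasurableEmbedding S) (μ : Measure α)
    (c : ENNReal) (s : Set β) (f : β → E) :
    ∫ y in s, f y ∂(c • μ.map S) = c.toReal • ∫ x in S ⁻¹' s, f (S x) ∂μ := by
  rw [Measure.restrict_smul, integral_smul_measure, hS.setIntegral_map]

lemma setIntegral_eq_of_eq_smul_map_add {μ : Measure α} {ν : Measure α} {S : α → α}
    {c : ENNReal} (hμ : μ = c • μ.map S + ν) (hS : MeasurableEmbedding S) {s : Set α}
    (hν : ν s = 0) (f : α → E) :
    ∫ y in s, f y ∂μ = c.toReal • ∫ x in S ⁻¹' s, f (S x) ∂μ := by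
  have hrestrict : μ.restrict s = (c • μ.map S).restrict s := by
    conv_lhs => rw [hμ]
    rw [Measure.restrict_add, Measure.restrict_eq_zero.mpr hν, add_zero]
  rw [hrestrict, setIntegral_smul_map hS]

lemma smul_map_apply_eq_zero {μ : Measure α} {T : α → α} (hT : MeasurableEmbedding T)
    (c : ENNReal) {s : Set α} (hs : μ (T ⁻¹' s) = 0) : (c • μ.map T) s = 0 := by
  rw [Measure.smul_apply, hT.map_apply, hs, smul_zero]

end SelfSimilar

section Primitive

variable {μ : Measure ℝ} {F f : ℝ → ℝ}

lemma sub_eq_setIntegral_Ioc_of_primitive (hf : Integrable f μ)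
    (hF : ∀ x ∈ Icc (0:ℝ) 1, F x = F 0 + ∫ t in Icc (0:ℝ) x, f t ∂μ)
    {a b : ℝ} (ha : 0 ≤ a) (hab : a ≤ b) (hb : b ≤ 1) :
    F b - F a = ∫ t in Ioc a b, f t ∂μ := by
  have hsplit : ∫ t in Icc 0 b, f t ∂μ = (∫ t in Icc 0 a, f t ∂μ) + ∫ t in Ioc a b, f t ∂μ := by
    rw [← Icc_union_Ioc_eq_Icc ha hab]
    exact setIntegral_union ((Iic_disjoint_Ioc le_rfl).mono_left Icc_subset_Iic_self) measurableSet_Ioc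
      hf.integrableOn hf.integrableOn
  rw [hF b ⟨ha.trans hab, hb⟩, hF a ⟨ha, hab.trans hb⟩, hsplit]
  ring

lemma sub_eq_mul_setIntegral_of_eq_smul_map_add [NullSingletonClass μ] {S T : ℝ → ℝ} {m : ℝ}
    {c : ENNReal} (hμ : μ = ENNReal.ofReal m • μ.map S + c • μ.map T) (hm : 0 ≤ m)
    (hS : MeasurableEmbedding S) (hS_mono : StrictMono S) (hT : MeasurableEmbedding T)
    (hf : Integrable f μ) (hF : ∀ x ∈ Icc (0:ℝ) 1, F x = F 0 + ∫ t in Icc (0:ℝ) x, f t ∂μ)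
    {x : ℝ} (hx : 0 ≤ x) (hS0 : 0 ≤ S 0) (hSx : S x ≤ 1)
    (hnull : μ (T ⁻¹' Ioc (S 0) (S x)) = 0) :
    F (S x) - F (S 0) = m * ∫ t in Icc (0:ℝ) x, f (S t) ∂μ := by
  have hpre : S ⁻¹' Ioc (S 0) (S x) = Ioc 0 x := by
    ext t
    simp only [mem_preimage, mem_Ioc, hS_mono.lt_iff_lt, hS_mono.le_iff_le]
  rw [sub_eq_setIntegral_Ioc_of_primitive hf hF hS0 (hS_mono.monotone hx) hSx,
    setIntegral_eq_of_eq_smul_map_add hμ hS (smul_map_apply_eq_zero hT c hnull), hpre,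
    integral_Icc_eq_integral_Ioc, ENNReal.toReal_ofReal hm, smul_eq_mul]

end Primitive

theorem stmt_12_general
    (μ : Measure ℝ) [NullSingletonClass μ]
    (hsupp : μ (Set.Icc (0:ℝ) 1)ᶜ = 0)
    (r₁ r₂ m₁ m₂ : ℝ)
    (hr₁ : 0 < r₁) (hr₂ : 0 < r₂) (hm₁ : 0 < m₁) (hm₂ : 0 < m₂)
    (hrsum : r₁ + r₂ ≤ 1)
    (hss : μ = ENNReal.ofReal m₁ • Measure.map (fun x => r₁ * x) μ
           + ENNReal.ofReal m₂ • Measure.map (fun x => r₂ * x + 1 - r₂) μ)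
    (F f : ℝ → ℝ) (hf : Integrable f μ)
    (hF : ∀ x ∈ Set.Icc (0:ℝ) 1, F x = F 0 + ∫ t in Set.Icc (0:ℝ) x, f t ∂μ) :
    ∀ x ∈ Set.Icc (0:ℝ) 1,
      F (r₁ * x) = F 0 + m₁ * ∫ t in Set.Icc (0:ℝ) x, f (r₁ * t) ∂μ ∧
      F (1 - r₂ + r₂ * x) = F (1 - r₂) + m₂ * ∫ t in Set.Icc (0:ℝ) x, f (1 - r₂ + r₂ * t) ∂μ := by
  rintro x ⟨hx0, hx1⟩
  have hS₁ : MeasurableEmbedding (fun x : ℝ => r₁ * x) :=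
    (Homeomorph.mulLeft₀ r₁ hr₁.ne').measurableEmbedding
  have hS₂ : MeasurableEmbedding (fun x : ℝ => r₂ * x + 1 - r₂) := by
    convert (affineHomeomorph r₂ (1 - r₂) hr₂.ne').measurableEmbedding using 2
    simp only [affineHomeomorph_apply]
    ring
  have hS₁_mono : StrictMono (fun x : ℝ => r₁ * x) := strictMono_id.const_mul hr₁
  have hS₂_mono : StrictMono (fun x : ℝ => r₂ * x + 1 - r₂) := fun a b hab => by
    simp only
    nlinarith
  have hnull₂ : μ ((fun t => r₂ * t + 1 - r₂) ⁻¹' Ioc (r₁ * 0) (r₁ * x)) = 0 :=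
    measure_mono_null (fun t ht => show t ≤ 0 by
      simp only [mem_preimage, mem_Ioc] at ht; nlinarith) (measure_Iic_eq_zero_of_compl_Icc hsupp)
  have hnull₁ : μ ((r₁ * ·) ⁻¹' Ioc (r₂ * 0 + 1 - r₂) (r₂ * x + 1 - r₂)) = 0 :=
    measure_mono_null (fun t ht => show 1 < t by
      simp only [mem_preimage, mem_Ioc] at ht; nlinarith) (measure_Ioi_eq_zero_of_compl_Icc hsupp)
  have hleft := sub_eq_mul_setIntegral_of_eq_smul_map_add hss hm₁.le hS₁ hS₁_mono hS₂ hf hF hx0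
    (by simp) (by nlinarith) hnull₂
  have hright := sub_eq_mul_setIntegral_of_eq_smul_map_add (hss.trans (add_comm _ _)) hm₂.le hS₂
    hS₂_mono hS₁ hf hF hx0 (by simp; linarith) (by nlinarith) hnull₁
  have haffine : ∀ t : ℝ, r₂ * t + 1 - r₂ = 1 - r₂ + r₂ * t := fun t => by ring
  simp only [mul_zero, zero_add, haffine] at hleft hright
  constructor <;> linarith

theorem stmt_12
    (μ : Measure ℝ) [IsProbabilityMeasure μ] [NullSingletonClass μ]
    (hsupp : μ (Set.Icc (0:ℝ) 1)ᶜ = 0)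
    (r₁ r₂ m₁ m₂ : ℝ)
    (hr₁ : 0 < r₁) (hr₂ : 0 < r₂) (hm₁ : 0 < m₁) (hm₂ : 0 < m₂)
    (hrsum : r₁ + r₂ ≤ 1) (hmsum : m₁ + m₂ = 1)
    (hss : μ = ENNReal.ofReal m₁ • Measure.map (fun x => r₁ * x) μ
           + ENNReal.ofReal m₂ • Measure.map (fun x => r₂ * x + 1 - r₂) μ)
    (F f : ℝ → ℝ) (hf : Integrable f μ)
    (hF : ∀ x ∈ Set.Icc (0:ℝ) 1, F x = F 0 + ∫ t in Set.Icc (0:ℝ) x, f t ∂μ) :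
    ∀ x ∈ Set.Icc (0:ℝ) 1,
      F (r₁ * x) = F 0 + m₁ * ∫ t in Set.Icc (0:ℝ) x, f (r₁ * t) ∂μ ∧
      F (1 - r₂ + r₂ * x) = F (1 - r₂) + m₂ * ∫ t in Set.Icc (0:ℝ) x, f (1 - r₂ + r₂ * t) ∂μ :=
  stmt_12_general μ hsupp r₁ r₂ m₁ m₂ hr₁ hr₂ hm₁ hm₂ hrsum hss F f hf hF
end

section
/- For all x ∈ [0,1]: (i) for every n ∈ ℕ₀, p_{2n+1}(1−r₂+r₂x) = Σ_{i=0}^n p_{2i+1}(r₁)·((r₂m₂)/(r₁m₁))^{n−i}·q_{2n−2i}(r₁x) + Σ_{i=0}^n p_{2i}(r₁)·(r₂/r₁)^{n−i}·(m₂/m₁)^{n−i+1}·p_{2n−2i+1}(r₁x) + (1−(r₁+r₂))·Σ_{i=0}^{n−1} p_{2i+1}(r₁)·(r₂/r₁)^{n−i−1}·(m₂/m₁)^{n−i}·p_{2n−2i−1}(r₁x); (ii) for every n ∈ ℕ with n ≥ 1, p_{2n}(1−r₂+r₂x) = Σ_{i=0}^n p_{2i}(r₁)·((r₂m₂)/(r₁m₁))^{n−i}·p_{2n−2i}(r₁x)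 + Σ_{i=0}^{n−1} p_{2i+1}(r₁)·(r₂/r₁)^{n−i}·(m₂/m₁)^{n−i−1}·q_{2n−2i−1}(r₁x) + (1−(r₁+r₂))·Σ_{i=0}^{n−1} p_{2i+1}(r₁)·((r₂m₂)/(r₁m₁))^{n−i−1}·p_{2n−2i−2}(r₁x). A sum over an empty index range is 0. -/
/-!
Self-similarity splits a `μ`-integral over `[0, y]` into the two pieces `r₁ • [0, 1]` and
`1 - r₂ + r₂ • [0, 1]`. On the left piece it turns the defining recursions of `p` and `q` into
the same recursions for `x ↦ p n (r₁ * x)` and `x ↦ q n (r₁ * x)`, with factors `m₁` (for `μ`)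
and `r₁` (for Lebesgue measure). On the right piece it shows that `x ↦ p n (1 - r₂ + r₂ * x)`
obeys the recursion with factors `m₂` and `r₂`, plus the constants `p n r₁`; the Lebesgue step
also picks up `(1 - (r₁ + r₂)) * p (2n+1) r₁` from the gap `(r₁, 1 - r₂)`, which carries no
`μ`-mass. Both closed forms then follow together by induction on `n`: integrating one expansion
termwise and rewriting every integrated left-piece term by its recursion gives the next
expansion, the newly added constant becoming its `i = n` term.
-/

open MeasureTheory Set

theorem setIntegral_eq_of_eq_smul_map_add_s13 {α : Type*} [MeasurableSpace α] {μ : Measure α}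
    {m₁ m₂ : ℝ} {S₁ S₂ : α → α} (hm₁ : 0 ≤ m₁) (hm₂ : 0 ≤ m₂)
    (hS₁ : Measurable S₁) (hS₂ : Measurable S₂)
    (hss : μ = ENNReal.ofReal m₁ • μ.map S₁ + ENNReal.ofReal m₂ • μ.map S₂)
    {f : α → ℝ} {s : Set α} (hs : MeasurableSet s) (hfm : Measurable f)
    (hf : IntegrableOn f s μ) :
    ∫ t in s, f t ∂μ =
      m₁ * ∫ t in S₁ ⁻¹' s, f (S₁ t) ∂μ + m₂ * ∫ t in S₂ ⁻¹' s, f (S₂ t) ∂μ := by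
  rw [IntegrableOn, hss, Measure.restrict_add, integrable_add_measure] at hf
  conv_lhs => rw [hss]
  rw [Measure.restrict_add, integral_add_measure hf.1 hf.2, Measure.restrict_smul,
    Measure.restrict_smul, integral_smul_measure, integral_smul_measure,
    setIntegral_map hs hfm.aestronglyMeasurable hS₁.aemeasurable,
    setIntegral_map hs hfm.aestronglyMeasurable hS₂.aemeasurable,
    ENNReal.toReal_ofReal hm₁, ENNReal.toReal_ofReal hm₂, smul_eq_mul, smul_eq_mul]

theorem ae_mem_Ioc_of_measure_compl_Icc_eq_zero {μ : Measure ℝ} [NullSingletonClass μ] {a b : ℝ}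
    (h : μ (Icc a b)ᶜ = 0) : ∀ᵐ t ∂μ, t ∈ Ioc a b := by
  filter_upwards [measure_eq_zero_iff_ae_notMem.mp h,
    measure_eq_zero_iff_ae_notMem.mp (measure_singleton (μ := μ) a)] with t h1 h2
  simp only [mem_compl_iff, not_not, mem_singleton_iff] at h1 h2
  exact ⟨h1.1.lt_of_ne' h2, h1.2⟩

theorem intervalIntegral_zero_mul (f : ℝ → ℝ) (r x : ℝ) :
    ∫ t in (0:ℝ)..(r * x), f t = r * ∫ u in (0:ℝ)..x, f (r * u) := by
  rw [← smul_eq_mul r (∫ u in (0:ℝ)..x, _), intervalIntegral.smul_integral_comp_mul_left, mul_zero]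

theorem intervalIntegral_zero_add_mul_eq_of_monotone {f : ℝ → ℝ} (hf : Monotone f) {a b : ℝ}
    (hab : a ≤ b) (hfab : f b = f a) (r x : ℝ) :
    ∫ t in (0:ℝ)..(b + r * x), f t =
      (∫ t in (0:ℝ)..a, f t) + (b - a) * f a + r * ∫ u in (0:ℝ)..x, f (b + r * u) := by
  have hconst : ∫ t in a..b, f t = (b - a) * f a := by
    rw [intervalIntegral.integral_congr (g := fun _ => f a) fun t ht => by
        rw [uIcc_of_le hab] at ht
        exact le_antisymm (hfab ▸ hf ht.2) (hf ht.1),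
      intervalIntegral.integral_const, smul_eq_mul]
  rw [← smul_eq_mul r (∫ u in (0:ℝ)..x, _), intervalIntegral.smul_integral_comp_add_mul, mul_zero,
    add_zero, ← hconst,
    intervalIntegral.integral_add_adjacent_intervals hf.intervalIntegrable hf.intervalIntegrable,
    intervalIntegral.integral_add_adjacent_intervals hf.intervalIntegrable hf.intervalIntegrable]

theorem monotone_setIntegral_Icc {μ : Measure ℝ} [IsLocallyFiniteMeasure μ] {f : ℝ → ℝ}
    (hf : Monotone f) (hf0 : ∀ x, 0 ≤ x → 0 ≤ f x) :
    Monotone fun x => ∫ t in Icc 0 x, f t ∂μ := fun _ _ hab =>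
  setIntegral_mono_set (hf.locallyIntegrable.integrableOn_isCompact isCompact_Icc)
    ((ae_restrict_mem measurableSet_Icc).mono fun t ht => hf0 t ht.1)
    (Icc_subset_Icc_right hab).eventuallyLE

theorem monotone_intervalIntegral_zero {f : ℝ → ℝ} (hf : Monotone f) (hf0 : ∀ x, 0 ≤ f x) :
    Monotone fun x => ∫ t in (0 : ℝ)..x, f t := fun a b hab => by
  rw [← sub_nonneg, intervalIntegral.integral_interval_sub_left hf.intervalIntegrable
    hf.intervalIntegrable]
  exact intervalIntegral.integral_nonneg hab fun t _ => hf0 t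

section SelfSimilar

variable {μ : Measure ℝ} [IsLocallyFiniteMeasure μ] {r₁ r₂ m₁ m₂ : ℝ}

theorem setIntegral_Icc_mul_left_of_selfSimilar (hr₁ : 0 < r₁) (hr₂ : 0 < r₂)
    (hrsum : r₁ + r₂ ≤ 1) (hm₁ : 0 ≤ m₁) (hm₂ : 0 ≤ m₂)
    (hss : μ = ENNReal.ofReal m₁ • μ.map (fun x => r₁ * x)
      + ENNReal.ofReal m₂ • μ.map (fun x => r₂ * x + 1 - r₂))
    (hae : ∀ᵐ t ∂μ, t ∈ Ioc (0 : ℝ) 1) {f : ℝ → ℝ} (hf : Monotone f) {x : ℝ} (hx : x ≤ 1) :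
    ∫ t in Icc 0 (r₁ * x), f t ∂μ = m₁ * ∫ t in Icc 0 x, f (r₁ * t) ∂μ := by
  rw [setIntegral_eq_of_eq_smul_map_add_s13 hm₁ hm₂ (by fun_prop) (by fun_prop) hss measurableSet_Icc
    hf.measurable (hf.locallyIntegrable.integrableOn_isCompact isCompact_Icc),
    preimage_const_mul_Icc₀ _ _ hr₁, zero_div, mul_div_cancel_left₀ x hr₁.ne']
  -- the second branch sends `(0, 1]` above `1 - r₂ ≥ r₁ * x`
  have hnull : μ ((fun t => r₂ * t + 1 - r₂) ⁻¹' Icc 0 (r₁ * x)) = 0 := by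
    refine measure_mono_null (fun t ht => ?_) (ae_iff.mp hae)
    intro hmem
    nlinarith [ht.2, hmem.1]
  rw [setIntegral_measure_zero _ hnull, mul_zero, add_zero]

theorem setIntegral_Icc_affine_right_of_selfSimilar (hr₁ : 0 < r₁) (hr₂ : 0 < r₂)
    (hrsum : r₁ + r₂ ≤ 1) (hm₁ : 0 ≤ m₁) (hm₂ : 0 ≤ m₂)
    (hss : μ = ENNReal.ofReal m₁ • μ.map (fun x => r₁ * x)
      + ENNReal.ofReal m₂ • μ.map (fun x => r₂ * x + 1 - r₂))
    (hae : ∀ᵐ t ∂μ, t ∈ Ioc (0 : ℝ) 1) {f : ℝ → ℝ} (hf : Monotone f) {x : ℝ} (hx : 0 ≤ x) :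
    ∫ t in Icc 0 (1 - r₂ + r₂ * x), f t ∂μ =
      ∫ t in Icc 0 r₁, f t ∂μ + m₂ * ∫ t in Icc 0 x, f (1 - r₂ + r₂ * t) ∂μ := by
  rw [setIntegral_eq_of_eq_smul_map_add_s13 hm₁ hm₂ (by fun_prop) (by fun_prop) hss measurableSet_Icc
    hf.measurable (hf.locallyIntegrable.integrableOn_isCompact isCompact_Icc)]
  have hleft : (fun t => r₁ * t) ⁻¹' Icc 0 (1 - r₂ + r₂ * x) =ᵐ[μ] Icc 0 1 :=
    Filter.eventuallyEq_set.mpr <| hae.mono fun t ht => by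
      simp only [mem_preimage, mem_Icc]
      constructor <;> intro h <;> constructor <;> nlinarith [ht.1, ht.2]
  have hright : (fun t => r₂ * t + 1 - r₂) ⁻¹' Icc 0 (1 - r₂ + r₂ * x) =ᵐ[μ] Icc 0 x :=
    Filter.eventuallyEq_set.mpr <| hae.mono fun t ht => by
      simp only [mem_preimage, mem_Icc]
      constructor <;> intro h <;> constructor <;> nlinarith [ht.1, ht.2]
  rw [setIntegral_congr_set hleft, setIntegral_congr_set hright, ← mul_one r₁,
    setIntegral_Icc_mul_left_of_selfSimilar hr₁ hr₂ hrsum hm₁ hm₂ hss hae hf le_rfl, mul_one]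
  simp only [show ∀ t, r₂ * t + 1 - r₂ = 1 - r₂ + r₂ * t from fun t => by ring]

end SelfSimilar

section Alternating

variable {μ : Measure ℝ} [IsLocallyFiniteMeasure μ]

theorem monotone_of_iterated_setIntegral_intervalIntegral {p : ℕ → ℝ → ℝ} (hp0 : ∀ x, p 0 x = 1)
    (hpodd : ∀ (n : ℕ) (x : ℝ), p (2*n+1) x = ∫ t in Icc (0:ℝ) x, p (2*n) t ∂μ)
    (hpeven : ∀ (n : ℕ) (x : ℝ), p (2*n+2) x = ∫ t in (0:ℝ)..x, p (2*n+1) t) (n : ℕ) :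
    Monotone (p n) := by
  have hodd : ∀ n, Monotone (p (2*n)) → (∀ x, 0 ≤ x → 0 ≤ p (2*n) x) → Monotone (p (2*n+1)) :=
    fun n hm h0 => by simpa only [← hpodd] using monotone_setIntegral_Icc (μ := μ) hm h0
  have heven : ∀ n, Monotone (p (2*n)) ∧ ∀ x, 0 ≤ x → 0 ≤ p (2*n) x := by
    intro n
    induction n with
    | zero => exact ⟨fun a b _ => by simp [hp0], fun x _ => by simp [hp0]⟩
    | succ n ih =>
      rw [Nat.mul_succ]
      have h0 : ∀ x, 0 ≤ p (2*n+1) x := fun x => by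
        rw [hpodd]; exact setIntegral_nonneg measurableSet_Icc fun t ht => ih.2 t ht.1
      refine ⟨?_, fun x hx => ?_⟩
      · simpa only [← hpeven] using monotone_intervalIntegral_zero (hodd n ih.1 ih.2) h0
      · rw [hpeven]; exact intervalIntegral.integral_nonneg hx fun t _ => h0 t
  obtain ⟨n, rfl | rfl⟩ := Nat.even_or_odd' n
  · exact (heven n).1
  · exact hodd n (heven n).1 (heven n).2

theorem monotone_of_iterated_intervalIntegral_setIntegral {q : ℕ → ℝ → ℝ} (hq0 : ∀ x, q 0 x = 1)
    (hqodd : ∀ (n : ℕ) (x : ℝ), q (2*n+1) x = ∫ t in (0:ℝ)..x, q (2*n) t)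
    (hqeven : ∀ (n : ℕ) (x : ℝ), q (2*n+2) x = ∫ t in Icc (0:ℝ) x, q (2*n+1) t ∂μ) (n : ℕ) :
    Monotone (q n) := by
  have hodd : ∀ n, Monotone (q (2*n)) → (∀ x, 0 ≤ q (2*n) x) →
      Monotone (q (2*n+1)) ∧ ∀ x, 0 ≤ x → 0 ≤ q (2*n+1) x := fun n hm h0 =>
    ⟨by simpa only [← hqodd] using monotone_intervalIntegral_zero hm h0,
      fun x hx => by rw [hqodd]; exact intervalIntegral.integral_nonneg hx fun t _ => h0 t⟩
  have heven : ∀ n, Monotone (q (2*n)) ∧ ∀ x, 0 ≤ q (2*n) x := by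
    intro n
    induction n with
    | zero => exact ⟨fun a b _ => by simp [hq0], fun x => by simp [hq0]⟩
    | succ n ih =>
      rw [Nat.mul_succ]
      obtain ⟨hm, h0⟩ := hodd n ih.1 ih.2
      refine ⟨?_, fun x => ?_⟩
      · simpa only [← hqeven] using monotone_setIntegral_Icc (μ := μ) hm h0
      · rw [hqeven]; exact setIntegral_nonneg measurableSet_Icc fun t ht => h0 t ht.1
  obtain ⟨n, rfl | rfl⟩ := Nat.even_or_odd' n
  · exact (heven n).1
  · exact (hodd n (heven n).1 (heven n).2).1

end Alternating

section Expansion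

variable (r₁ r₂ m₁ m₂ : ℝ) (c : ℕ → ℝ)

/- The right-hand sides of the two expansions, with `c k`, `P k`, `Q k` standing for
`p k r₁`, `p k (r₁ * x)`, `q k (r₁ * x)`. -/
noncomputable def oddExpansion (P Q : ℕ → ℝ) (n : ℕ) : ℝ :=
  (∑ i ∈ Finset.range (n+1), c (2*i+1) * ((r₂*m₂)/(r₁*m₁))^(n-i) * Q (2*n-2*i))
    + (∑ i ∈ Finset.range (n+1), c (2*i) * (r₂/r₁)^(n-i) * (m₂/m₁)^(n-i+1) * P (2*n-2*i+1))
    + (1-(r₁+r₂)) * ∑ i ∈ Finset.range n,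
        c (2*i+1) * (r₂/r₁)^(n-i-1) * (m₂/m₁)^(n-i) * P (2*n-2*i-1)

noncomputable def evenExpansion (P Q : ℕ → ℝ) (n : ℕ) : ℝ :=
  (∑ i ∈ Finset.range (n+1), c (2*i) * ((r₂*m₂)/(r₁*m₁))^(n-i) * P (2*n-2*i))
    + (∑ i ∈ Finset.range n, c (2*i+1) * (r₂/r₁)^(n-i) * (m₂/m₁)^(n-i-1) * Q (2*n-2*i-1))
    + (1-(r₁+r₂)) * ∑ i ∈ Finset.range n,
        c (2*i+1) * ((r₂*m₂)/(r₁*m₁))^(n-i-1) * P (2*n-2*i-2)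

theorem integral_oddExpansion {α : Type*} [MeasurableSpace α] {ν : Measure α}
    {P Q : ℕ → α → ℝ} (hP : ∀ k, Integrable (P k) ν) (hQ : ∀ k, Integrable (Q k) ν) (n : ℕ) :
    ∫ t, oddExpansion r₁ r₂ m₁ m₂ c (fun k => P k t) (fun k => Q k t) n ∂ν =
      oddExpansion r₁ r₂ m₁ m₂ c (fun k => ∫ t, P k t ∂ν) (fun k => ∫ t, Q k t ∂ν) n := by
  unfold oddExpansion
  rw [integral_add (by fun_prop) (by fun_prop), integral_add (by fun_prop) (by fun_prop),
    integral_const_mul, integral_finsetSum _ (by fun_prop), integral_finsetSum _ (by fun_prop),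
    integral_finsetSum _ (by fun_prop)]
  simp only [integral_const_mul]

theorem integral_evenExpansion {α : Type*} [MeasurableSpace α] {ν : Measure α}
    {P Q : ℕ → α → ℝ} (hP : ∀ k, Integrable (P k) ν) (hQ : ∀ k, Integrable (Q k) ν) (n : ℕ) :
    ∫ t, evenExpansion r₁ r₂ m₁ m₂ c (fun k => P k t) (fun k => Q k t) n ∂ν =
      evenExpansion r₁ r₂ m₁ m₂ c (fun k => ∫ t, P k t ∂ν) (fun k => ∫ t, Q k t ∂ν) n := by
  unfold evenExpansion
  rw [integral_add (by fun_prop) (by fun_prop), integral_add (by fun_prop) (by fun_prop),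
    integral_const_mul, integral_finsetSum _ (by fun_prop), integral_finsetSum _ (by fun_prop),
    integral_finsetSum _ (by fun_prop)]
  simp only [integral_const_mul]

variable {r₁ r₂ m₁ m₂ c}

theorem oddExpansion_eq_add_evenExpansion {P Q P' Q' : ℕ → ℝ} (hQ0 : Q 0 = 1)
    (hP : ∀ j, P' (2*j) = P (2*j+1) / m₁) (hQ : ∀ j, Q' (2*j+1) = Q (2*j+2) / m₁) (n : ℕ) :
    oddExpansion r₁ r₂ m₁ m₂ c P Q n = c (2*n+1) + m₂ * evenExpansion r₁ r₂ m₁ m₂ c P' Q' n := by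
  have hsumQ : ∑ i ∈ Finset.range n, c (2*i+1) * ((r₂*m₂)/(r₁*m₁))^(n-i) * Q (2*n-2*i) =
      m₂ * ∑ i ∈ Finset.range n, c (2*i+1) * (r₂/r₁)^(n-i) * (m₂/m₁)^(n-i-1) * Q' (2*n-2*i-1) := by
    rw [Finset.mul_sum]
    refine Finset.sum_congr rfl fun i hi => ?_
    obtain ⟨k, hk⟩ : ∃ k, n - i = k + 1 := ⟨n - i - 1, by grind⟩
    rw [show 2*n-2*i-1 = 2*k+1 by omega, hQ, show 2*n-2*i = 2*k+2 by omega, hk,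
      Nat.add_sub_cancel]
    ring
  have hsumP : ∑ i ∈ Finset.range (n+1), c (2*i) * (r₂/r₁)^(n-i) * (m₂/m₁)^(n-i+1) * P (2*n-2*i+1) =
      m₂ * ∑ i ∈ Finset.range (n+1), c (2*i) * ((r₂*m₂)/(r₁*m₁))^(n-i) * P' (2*n-2*i) := by
    rw [Finset.mul_sum]
    refine Finset.sum_congr rfl fun i _ => ?_
    rw [show 2*n-2*i = 2*(n-i) by omega, hP]
    ring
  have hsumγ : ∑ i ∈ Finset.range n, c (2*i+1) * (r₂/r₁)^(n-i-1) * (m₂/m₁)^(n-i) * P (2*n-2*i-1) =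
      m₂ * ∑ i ∈ Finset.range n, c (2*i+1) * ((r₂*m₂)/(r₁*m₁))^(n-i-1) * P' (2*n-2*i-2) := by
    rw [Finset.mul_sum]
    refine Finset.sum_congr rfl fun i hi => ?_
    obtain ⟨k, hk⟩ : ∃ k, n - i = k + 1 := ⟨n - i - 1, by grind⟩
    rw [show 2*n-2*i-2 = 2*k by omega, hP, show 2*n-2*i-1 = 2*k+1 by omega, hk,
      Nat.add_sub_cancel]
    ring
  unfold oddExpansion evenExpansion
  rw [Finset.sum_range_succ, Nat.sub_self, Nat.sub_self, hQ0]
  linear_combination hsumQ + hsumP + (1-(r₁+r₂)) * hsumγ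

theorem evenExpansion_succ_eq_add_oddExpansion {P Q P' Q' : ℕ → ℝ} (hP0 : P 0 = 1)
    (hP : ∀ j, P' (2*j+1) = P (2*j+2) / r₁) (hQ : ∀ j, Q' (2*j) = Q (2*j+1) / r₁) (n : ℕ) :
    evenExpansion r₁ r₂ m₁ m₂ c P Q (n+1) =
      c (2*n+2) + (1-(r₁+r₂)) * c (2*n+1) + r₂ * oddExpansion r₁ r₂ m₁ m₂ c P' Q' n := by
  have hsumP : ∑ i ∈ Finset.range (n+1), c (2*i) * ((r₂*m₂)/(r₁*m₁))^(n+1-i) * P (2*(n+1)-2*i) =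
      r₂ * ∑ i ∈ Finset.range (n+1),
        c (2*i) * (r₂/r₁)^(n-i) * (m₂/m₁)^(n-i+1) * P' (2*n-2*i+1) := by
    rw [Finset.mul_sum]
    refine Finset.sum_congr rfl fun i hi => ?_
    have hi : i ≤ n := Finset.mem_range_succ_iff.mp hi
    rw [show 2*n-2*i+1 = 2*(n-i)+1 by omega, hP, show 2*(n+1)-2*i = 2*(n-i)+2 by omega,
      show n+1-i = n-i+1 by omega]
    ring
  have hsumQ : ∑ i ∈ Finset.range (n+1),
        c (2*i+1) * (r₂/r₁)^(n+1-i) * (m₂/m₁)^(n+1-i-1) * Q (2*(n+1)-2*i-1) =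
      r₂ * ∑ i ∈ Finset.range (n+1), c (2*i+1) * ((r₂*m₂)/(r₁*m₁))^(n-i) * Q' (2*n-2*i) := by
    rw [Finset.mul_sum]
    refine Finset.sum_congr rfl fun i hi => ?_
    have hi : i ≤ n := Finset.mem_range_succ_iff.mp hi
    rw [show 2*n-2*i = 2*(n-i) by omega, hQ, show 2*(n+1)-2*i-1 = 2*(n-i)+1 by omega,
      show n+1-i = n-i+1 by omega, Nat.add_sub_cancel]
    ring
  have hsumγ : ∑ i ∈ Finset.range n,
        c (2*i+1) * ((r₂*m₂)/(r₁*m₁))^(n+1-i-1) * P (2*(n+1)-2*i-2) =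
      r₂ * ∑ i ∈ Finset.range n,
        c (2*i+1) * (r₂/r₁)^(n-i-1) * (m₂/m₁)^(n-i) * P' (2*n-2*i-1) := by
    rw [Finset.mul_sum]
    refine Finset.sum_congr rfl fun i hi => ?_
    obtain ⟨k, hk⟩ : ∃ k, n - i = k + 1 := ⟨n - i - 1, by grind⟩
    rw [show 2*n-2*i-1 = 2*k+1 by omega, hP, show 2*(n+1)-2*i-2 = 2*k+2 by omega,
      show n+1-i-1 = k+1 by omega, hk, Nat.add_sub_cancel]
    ring
  unfold oddExpansion evenExpansion
  rw [Finset.sum_range_succ _ (n+1), Nat.sub_self, Nat.sub_self, Finset.sum_range_succ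
    (fun i => c (2*i+1) * ((r₂*m₂)/(r₁*m₁))^(n+1-i-1) * P (2*(n+1)-2*i-2)) n,
    show n+1-n-1 = 0 by omega, show 2*(n+1)-2*n-2 = 0 by omega, hP0]
  linear_combination hsumP + hsumQ + (1-(r₁+r₂)) * hsumγ

end Expansion

section Steps

variable {r₁ r₂ m₁ m₂ : ℝ} {c : ℕ → ℝ} {P Q : ℕ → ℝ → ℝ}

theorem eq_oddExpansion_of_eq_evenExpansion {μ : Measure ℝ} [IsLocallyFiniteMeasure μ]
    {E O : ℝ → ℝ} {n : ℕ}
    (hm₁ : m₁ ≠ 0) (hPm : ∀ k, Monotone (P k)) (hQm : ∀ k, Monotone (Q k)) (hQ0 : ∀ x, Q 0 x = 1)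
    (hP : ∀ j, ∀ x ∈ Icc (0:ℝ) 1, P (2*j+1) x = m₁ * ∫ t in Icc 0 x, P (2*j) t ∂μ)
    (hQ : ∀ j, ∀ x ∈ Icc (0:ℝ) 1, Q (2*j+2) x = m₁ * ∫ t in Icc 0 x, Q (2*j+1) t ∂μ)
    (hE : ∀ x ∈ Icc (0:ℝ) 1,
      E x = evenExpansion r₁ r₂ m₁ m₂ c (fun k => P k x) (fun k => Q k x) n)
    (hO : ∀ x ∈ Icc (0:ℝ) 1, O x = c (2*n+1) + m₂ * ∫ t in Icc 0 x, E t ∂μ) :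
    ∀ x ∈ Icc (0:ℝ) 1, O x = oddExpansion r₁ r₂ m₁ m₂ c (fun k => P k x) (fun k => Q k x) n := by
  intro x hx
  rw [hO x hx, setIntegral_congr_fun measurableSet_Icc fun t ht => hE t ⟨ht.1, ht.2.trans hx.2⟩,
    integral_evenExpansion _ _ _ _ _
      (fun k => (hPm k).locallyIntegrable.integrableOn_isCompact isCompact_Icc)
      (fun k => (hQm k).locallyIntegrable.integrableOn_isCompact isCompact_Icc),
    oddExpansion_eq_add_evenExpansion (P' := fun k => ∫ t in Icc 0 x, P k t ∂μ)
      (Q' := fun k => ∫ t in Icc 0 x, Q k t ∂μ) (hQ0 x) (fun j => by rw [hP j x hx]; field_simp)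
      (fun j => by rw [hQ j x hx]; field_simp)]

theorem eq_evenExpansion_succ_of_eq_oddExpansion {E O : ℝ → ℝ} {n : ℕ} (hr₁ : r₁ ≠ 0)
    (hPm : ∀ k, Monotone (P k)) (hQm : ∀ k, Monotone (Q k)) (hP0 : ∀ x, P 0 x = 1)
    (hP : ∀ j x, P (2*j+2) x = r₁ * ∫ u in (0:ℝ)..x, P (2*j+1) u)
    (hQ : ∀ j x, Q (2*j+1) x = r₁ * ∫ u in (0:ℝ)..x, Q (2*j) u)
    (hO : ∀ x ∈ Icc (0:ℝ) 1,
      O x = oddExpansion r₁ r₂ m₁ m₂ c (fun k => P k x) (fun k => Q k x) n)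
    (hE : ∀ x ∈ Icc (0:ℝ) 1,
      E x = c (2*n+2) + (1-(r₁+r₂)) * c (2*n+1) + r₂ * ∫ u in (0:ℝ)..x, O u) :
    ∀ x ∈ Icc (0:ℝ) 1,
      E x = evenExpansion r₁ r₂ m₁ m₂ c (fun k => P k x) (fun k => Q k x) (n+1) := by
  intro x hx
  rw [hE x hx, intervalIntegral.integral_of_le hx.1,
    setIntegral_congr_fun measurableSet_Ioc fun t ht => hO t ⟨ht.1.le, ht.2.trans hx.2⟩,
    integral_oddExpansion _ _ _ _ _ (fun k => (hPm k).intervalIntegrable.1)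
      (fun k => (hQm k).intervalIntegrable.1),
    evenExpansion_succ_eq_add_oddExpansion (P' := fun k => ∫ t in Ioc 0 x, P k t)
      (Q' := fun k => ∫ t in Ioc 0 x, Q k t) (hP0 x)
      (fun j => by rw [hP j x, intervalIntegral.integral_of_le hx.1]; field_simp)
      (fun j => by rw [hQ j x, intervalIntegral.integral_of_le hx.1]; field_simp)]

theorem expansions_of_recursions {μ : Measure ℝ} [IsLocallyFiniteMeasure μ] {R : ℕ → ℝ → ℝ}
    (hr₁ : r₁ ≠ 0) (hm₁ : m₁ ≠ 0) (hPm : ∀ k, Monotone (P k)) (hQm : ∀ k, Monotone (Q k))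
    (hP0 : ∀ x, P 0 x = 1) (hQ0 : ∀ x, Q 0 x = 1) (hR0 : ∀ x ∈ Icc (0:ℝ) 1, R 0 x = c 0)
    (hPμ : ∀ j, ∀ x ∈ Icc (0:ℝ) 1, P (2*j+1) x = m₁ * ∫ t in Icc 0 x, P (2*j) t ∂μ)
    (hQμ : ∀ j, ∀ x ∈ Icc (0:ℝ) 1, Q (2*j+2) x = m₁ * ∫ t in Icc 0 x, Q (2*j+1) t ∂μ)
    (hPvol : ∀ j x, P (2*j+2) x = r₁ * ∫ u in (0:ℝ)..x, P (2*j+1) u)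
    (hQvol : ∀ j x, Q (2*j+1) x = r₁ * ∫ u in (0:ℝ)..x, Q (2*j) u)
    (hRμ : ∀ n, ∀ x ∈ Icc (0:ℝ) 1,
      R (2*n+1) x = c (2*n+1) + m₂ * ∫ t in Icc 0 x, R (2*n) t ∂μ)
    (hRvol : ∀ n, ∀ x ∈ Icc (0:ℝ) 1,
      R (2*n+2) x = c (2*n+2) + (1-(r₁+r₂)) * c (2*n+1) + r₂ * ∫ u in (0:ℝ)..x, R (2*n+1) u)
    (n : ℕ) :
    (∀ x ∈ Icc (0:ℝ) 1,
      R (2*n) x = evenExpansion r₁ r₂ m₁ m₂ c (fun k => P k x) (fun k => Q k x) n) ∧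
    (∀ x ∈ Icc (0:ℝ) 1,
      R (2*n+1) x = oddExpansion r₁ r₂ m₁ m₂ c (fun k => P k x) (fun k => Q k x) n) := by
  have hodd : ∀ n, (∀ x ∈ Icc (0:ℝ) 1,
      R (2*n) x = evenExpansion r₁ r₂ m₁ m₂ c (fun k => P k x) (fun k => Q k x) n) →
      ∀ x ∈ Icc (0:ℝ) 1,
        R (2*n+1) x = oddExpansion r₁ r₂ m₁ m₂ c (fun k => P k x) (fun k => Q k x) n :=
    fun n h => eq_oddExpansion_of_eq_evenExpansion hm₁ hPm hQm hQ0 hPμ hQμ h (hRμ n)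
  induction n with
  | zero =>
    have h0 : ∀ x ∈ Icc (0:ℝ) 1,
        R 0 x = evenExpansion r₁ r₂ m₁ m₂ c (fun k => P k x) (fun k => Q k x) 0 :=
      fun x hx => by simp [evenExpansion, hP0, hR0 x hx]
    exact ⟨h0, hodd 0 h0⟩
  | succ n ih =>
    have h := eq_evenExpansion_succ_of_eq_oddExpansion hr₁ hPm hQm hP0 hPvol hQvol ih.2 (hRvol n)
    exact ⟨h, hodd (n+1) h⟩

end Steps

theorem stmt_13_general
    (μ : Measure ℝ) [IsProbabilityMeasure μ] [NullSingletonClass μ]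
    (hsupp : μ (Set.Icc (0:ℝ) 1)ᶜ = 0)
    (r₁ r₂ m₁ m₂ : ℝ)
    (hr₁ : 0 < r₁) (hr₂ : 0 < r₂) (hm₁ : 0 < m₁) (hm₂ : 0 < m₂)
    (hrsum : r₁ + r₂ ≤ 1)
    (hss : μ = ENNReal.ofReal m₁ • Measure.map (fun x => r₁ * x) μ
           + ENNReal.ofReal m₂ • Measure.map (fun x => r₂ * x + 1 - r₂) μ)
    (p q : ℕ → ℝ → ℝ)
    (hp0 : ∀ x : ℝ, p 0 x = 1) (hq0 : ∀ x : ℝ, q 0 x = 1)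
    (hpodd : ∀ (n : ℕ) (x : ℝ), p (2*n+1) x = ∫ t in Set.Icc (0:ℝ) x, p (2*n) t ∂μ)
    (hpeven : ∀ (n : ℕ) (x : ℝ), p (2*n+2) x = ∫ t in (0:ℝ)..x, p (2*n+1) t)
    (hqodd : ∀ (n : ℕ) (x : ℝ), q (2*n+1) x = ∫ t in (0:ℝ)..x, q (2*n) t)
    (hqeven : ∀ (n : ℕ) (x : ℝ), q (2*n+2) x = ∫ t in Set.Icc (0:ℝ) x, q (2*n+1) t ∂μ) :
    ∀ x ∈ Set.Icc (0:ℝ) 1,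
      (∀ n : ℕ,
        p (2*n+1) (1 - r₂ + r₂*x) =
          (∑ i ∈ Finset.range (n+1),
            p (2*i+1) r₁ * ((r₂*m₂)/(r₁*m₁))^(n-i) * q (2*n-2*i) (r₁*x))
          + (∑ i ∈ Finset.range (n+1),
            p (2*i) r₁ * (r₂/r₁)^(n-i) * (m₂/m₁)^(n-i+1) * p (2*n-2*i+1) (r₁*x))
          + (1-(r₁+r₂)) * ∑ i ∈ Finset.range n,
            p (2*i+1) r₁ * (r₂/r₁)^(n-i-1) * (m₂/m₁)^(n-i) * p (2*n-2*i-1) (r₁*x)) ∧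
      (∀ n : ℕ, 1 ≤ n →
        p (2*n) (1 - r₂ + r₂*x) =
          (∑ i ∈ Finset.range (n+1),
            p (2*i) r₁ * ((r₂*m₂)/(r₁*m₁))^(n-i) * p (2*n-2*i) (r₁*x))
          + (∑ i ∈ Finset.range n,
            p (2*i+1) r₁ * (r₂/r₁)^(n-i) * (m₂/m₁)^(n-i-1) * q (2*n-2*i-1) (r₁*x))
          + (1-(r₁+r₂)) * ∑ i ∈ Finset.range n,
            p (2*i+1) r₁ * ((r₂*m₂)/(r₁*m₁))^(n-i-1) * p (2*n-2*i-2) (r₁*x)) := by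
  have hae := ae_mem_Ioc_of_measure_compl_Icc_eq_zero hsupp
  have hpm := monotone_of_iterated_setIntegral_intervalIntegral hp0 hpodd hpeven
  have hqm := monotone_of_iterated_intervalIntegral_setIntegral hq0 hqodd hqeven
  have hleft {f : ℝ → ℝ} (hf : Monotone f) {x : ℝ} (hx : x ∈ Icc (0:ℝ) 1) :=
    setIntegral_Icc_mul_left_of_selfSimilar hr₁ hr₂ hrsum hm₁.le hm₂.le hss hae hf hx.2
  have hRμ : ∀ n, ∀ x ∈ Icc (0:ℝ) 1, p (2*n+1) (1 - r₂ + r₂*x) =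
      p (2*n+1) r₁ + m₂ * ∫ t in Icc 0 x, p (2*n) (1 - r₂ + r₂*t) ∂μ := fun n x hx => by
    rw [hpodd, setIntegral_Icc_affine_right_of_selfSimilar hr₁ hr₂ hrsum hm₁.le hm₂.le hss hae
      (hpm _) hx.1, ← hpodd]
  have hRvol : ∀ n, ∀ x ∈ Icc (0:ℝ) 1, p (2*n+2) (1 - r₂ + r₂*x) =
      p (2*n+2) r₁ + (1-(r₁+r₂)) * p (2*n+1) r₁
        + r₂ * ∫ u in (0:ℝ)..x, p (2*n+1) (1 - r₂ + r₂*u) := fun n x _ => by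
    -- the gap `(r₁, 1 - r₂)` carries no `μ`-mass, so `p (2*n+1)` is constant across it
    have hgap : p (2*n+1) (1 - r₂) = p (2*n+1) r₁ := by
      simpa using hRμ n 0 (left_mem_Icc.mpr zero_le_one)
    rw [hpeven, intervalIntegral_zero_add_mul_eq_of_monotone (hpm _) (by linarith) hgap, ← hpeven]
    ring
  have hscale : Monotone (r₁ * ·) := monotone_mul_left_of_nonneg hr₁.le
  have key := expansions_of_recursions (R := fun k x => p k (1 - r₂ + r₂*x))
    (P := fun k x => p k (r₁*x)) (Q := fun k x => q k (r₁*x)) (c := (p · r₁))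
    hr₁.ne' hm₁.ne' (fun k => (hpm k).comp hscale) (fun k => (hqm k).comp hscale)
    (fun _ => hp0 _) (fun _ => hq0 _) (fun _ _ => by simp only [hp0])
    (fun j x hx => by rw [hpodd]; exact hleft (hpm _) hx)
    (fun j x hx => by rw [hqeven]; exact hleft (hqm _) hx)
    (fun j x => by rw [hpeven, intervalIntegral_zero_mul])
    (fun j x => by rw [hqodd, intervalIntegral_zero_mul]) hRμ hRvol
  exact fun x hx => ⟨fun n => (key n).2 x hx, fun n _ => (key n).1 x hx⟩

theorem stmt_13
    (μ : Measure ℝ) [IsProbabilityMeasure μ] [NullSingletonClass μ]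
    (hsupp : μ (Set.Icc (0:ℝ) 1)ᶜ = 0)
    (r₁ r₂ m₁ m₂ : ℝ)
    (hr₁ : 0 < r₁) (hr₂ : 0 < r₂) (hm₁ : 0 < m₁) (hm₂ : 0 < m₂)
    (hrsum : r₁ + r₂ ≤ 1) (hmsum : m₁ + m₂ = 1)
    (hss : μ = ENNReal.ofReal m₁ • Measure.map (fun x => r₁ * x) μ
           + ENNReal.ofReal m₂ • Measure.map (fun x => r₂ * x + 1 - r₂) μ)
    (p q : ℕ → ℝ → ℝ)
    (hp0 : ∀ x : ℝ, p 0 x = 1) (hq0 : ∀ x : ℝ, q 0 x = 1)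
    (hpodd : ∀ (n : ℕ) (x : ℝ), p (2*n+1) x = ∫ t in Set.Icc (0:ℝ) x, p (2*n) t ∂μ)
    (hpeven : ∀ (n : ℕ) (x : ℝ), p (2*n+2) x = ∫ t in (0:ℝ)..x, p (2*n+1) t)
    (hqodd : ∀ (n : ℕ) (x : ℝ), q (2*n+1) x = ∫ t in (0:ℝ)..x, q (2*n) t)
    (hqeven : ∀ (n : ℕ) (x : ℝ), q (2*n+2) x = ∫ t in Set.Icc (0:ℝ) x, q (2*n+1) t ∂μ) :
    ∀ x ∈ Set.Icc (0:ℝ) 1,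
      (∀ n : ℕ,
        p (2*n+1) (1 - r₂ + r₂*x) =
          (∑ i ∈ Finset.range (n+1),
            p (2*i+1) r₁ * ((r₂*m₂)/(r₁*m₁))^(n-i) * q (2*n-2*i) (r₁*x))
          + (∑ i ∈ Finset.range (n+1),
            p (2*i) r₁ * (r₂/r₁)^(n-i) * (m₂/m₁)^(n-i+1) * p (2*n-2*i+1) (r₁*x))
          + (1-(r₁+r₂)) * ∑ i ∈ Finset.range n,
            p (2*i+1) r₁ * (r₂/r₁)^(n-i-1) * (m₂/m₁)^(n-i) * p (2*n-2*i-1) (r₁*x)) ∧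
      (∀ n : ℕ, 1 ≤ n →
        p (2*n) (1 - r₂ + r₂*x) =
          (∑ i ∈ Finset.range (n+1),
            p (2*i) r₁ * ((r₂*m₂)/(r₁*m₁))^(n-i) * p (2*n-2*i) (r₁*x))
          + (∑ i ∈ Finset.range n,
            p (2*i+1) r₁ * (r₂/r₁)^(n-i) * (m₂/m₁)^(n-i-1) * q (2*n-2*i-1) (r₁*x))
          + (1-(r₁+r₂)) * ∑ i ∈ Finset.range n,
            p (2*i+1) r₁ * ((r₂*m₂)/(r₁*m₁))^(n-i-1) * p (2*n-2*i-2) (r₁*x)) :=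
  stmt_13_general μ hsupp r₁ r₂ m₁ m₂ hr₁ hr₂ hm₁ hm₂ hrsum hss p q hp0 hq0 hpodd hpeven hqodd
    hqeven
end
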